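/- arXiv:2409.07892 — 8 statements merged into one kernel-verified Lean document; each statement's English description precedes it below -/
import Mathlib

section
/- The 2-Fuss-Catalan numbers defined by the recurrence C_0 = 1 and C_n = sum over nonnegative integers i,j,k with i+j+k = n-1 of C_i * C_j * C_k satisfy the closed form C_n = (1/(2n+1)) * binomial(3n, n). -/
/-!
The solution is `C n = R n 1`, where `R n a = a / (a + 3n) * choose (a + 3n) n` are the Raney
numbers. They satisfy the Pascal-type recurrence `R (n+1) (a+1) = R (n+1) a + R n (a+3)`, from which
both their closed form and the Vandermonde-type convolution `R n (a+b) = ∑_{i+j=n} R i a * R j b`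
follow by induction. The convolution turns the cubic recurrence for `C` into `C (n+1) = R n 3`, and
the Pascal recurrence gives `R n 3 = R (n+1) 1`.
-/

open Finset

/-- The Raney numbers `raney p n a = a / (a + p n) * choose (a + p n) n` (with `raney p 0 0 = 1`). -/
def raney (p : ℕ) : ℕ → ℕ → ℕ
  | 0, _ => 1
  | _ + 1, 0 => 0
  | n + 1, a + 1 => raney p (n + 1) a + raney p n (a + p)
termination_by n a => (n, a)

section

variable {p : ℕ}

@[simp]
lemma raney_zero_left (a : ℕ) : raney p 0 a = 1 := by
  cases a <;> simp [raney]

@[simp]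
lemma raney_succ_zero (n : ℕ) : raney p (n + 1) 0 = 0 := by
  simp [raney]

lemma raney_succ_succ (n a : ℕ) :
    raney p (n + 1) (a + 1) = raney p (n + 1) a + raney p n (a + p) := by
  rw [raney]

lemma raney_succ_one (n : ℕ) : raney p (n + 1) 1 = raney p n p := by
  simpa using raney_succ_succ (p := p) n 0

lemma raney_closed_form (hp : 0 < p) (n a : ℕ) :
    (a + p * n) * raney p n a = a * (a + p * n).choose n := by
  induction n generalizing a with
  | zero => simp
  | succ n ihn =>
    induction a with
    | zero => simp
    | succ a iha =>
      obtain ⟨N, hN⟩ : ∃ N, N = a + p * n + p := ⟨_, rfl⟩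
      have hX : N * raney p (n + 1) a = a * N.choose (n + 1) := by
        simpa [hN, mul_add, add_assoc] using iha
      have hY : N * raney p n (a + p) = (a + p) * N.choose n := by
        simpa [hN, add_right_comm] using ihn (a + p)
      have hPascal : (N + 1).choose (n + 1) = N.choose n + N.choose (n + 1) :=
        Nat.choose_succ_succ N n
      have hAbsorb : (N + 1) * N.choose n = (N + 1).choose (n + 1) * (n + 1) :=
        Nat.add_one_mul_choose_eq N n
      rw [show a + 1 + p * (n + 1) = N + 1 by rw [hN]; ring, raney_succ_succ]
      refine Nat.eq_of_mul_eq_mul_left (show 0 < N by omega) ?_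
      subst hN
      zify at hX hY hPascal hAbsorb ⊢
      linear_combination ((a : ℤ) + p * n + p + 1) * (hX + hY) + (p : ℤ) * hAbsorb
        + ((p : ℤ) * (n + 1) - (a + p * n + p) * (a + 1)) * hPascal

lemma raney_add_eq (a b n : ℕ) :
    raney p n (a + b) = ∑ q ∈ antidiagonal n, raney p q.1 a * raney p q.2 b := by
  induction n generalizing b with
  | zero => simp
  | succ n ihn =>
    induction b with
    | zero => simp [Nat.sum_antidiagonal_succ']
    | succ b ihb =>
      rw [Nat.sum_antidiagonal_succ'] at ihb ⊢
      simp only [raney_zero_left, raney_succ_succ, mul_add, sum_add_distrib, ← ihn] at ihb ⊢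
      rw [← add_assoc a b 1, raney_succ_succ, ihb]
      simp only [add_assoc]

lemma raney_one_closed_form (hp : 0 < p) (n : ℕ) :
    (p * n + 1 - n) * raney p n 1 = (p * n).choose n := by
  refine Nat.eq_of_mul_eq_mul_left (show 0 < p * n + 1 by omega) ?_
  calc (p * n + 1) * ((p * n + 1 - n) * raney p n 1)
      = (p * n + 1 - n) * ((1 + p * n) * raney p n 1) := by ring
    _ = (p * n + 1 - n) * (p * n + 1).choose n := by rw [raney_closed_form hp, one_mul, add_comm 1]
    _ = (p * n + 1) * (p * n).choose n := by rw [mul_comm, ← Nat.choose_mul_succ_eq, mul_comm]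

end

/-- The 2-Fuss-Catalan recurrence implies the closed form
`C n = (1/(2n+1)) * choose (3n) n`, stated multiplicatively. -/
theorem fussCatalan_two_closed_form (C : ℕ → ℕ)
    (hC0 : C 0 = 1)
    (hC : ∀ n, 1 ≤ n →
      C n = ∑ p ∈ Finset.HasAntidiagonal.antidiagonal (n - 1), ∑ q ∈ Finset.HasAntidiagonal.antidiagonal p.2,
        C p.1 * C q.1 * C q.2) :
    ∀ n, (2 * n + 1) * C n = Nat.choose (3 * n) n := by
  have hCR : ∀ n, C n = raney 3 n 1 := by
    intro n
    induction n using Nat.strong_induction_on with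
    | _ n ih =>
      rcases n with _ | k
      · simpa using hC0
      calc C (k + 1)
          = ∑ q ∈ antidiagonal k,
              raney 3 q.1 1 * ∑ r ∈ antidiagonal q.2, raney 3 r.1 1 * raney 3 r.2 1 := by
            rw [hC (k + 1) k.succ_pos, Nat.add_sub_cancel]
            refine sum_congr rfl fun q hq => ?_
            have hq := mem_antidiagonal.mp hq
            rw [mul_sum]
            refine sum_congr rfl fun r hr => ?_
            have hr := mem_antidiagonal.mp hr
            rw [ih q.1 (by omega), ih r.1 (by omega), ih r.2 (by omega), mul_assoc]
        _ = raney 3 (k + 1) 1 := by simp only [← raney_add_eq, raney_succ_one]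
  intro n
  rw [hCR, ← raney_one_closed_form three_pos, show 3 * n + 1 - n = 2 * n + 1 by omega]
end

section
/- The number of k-Dyck paths of length (k+1)n equals (1/(kn+1)) * binomial((k+1)n, n). -/
/-- A k-Dyck path: a sequence over `{+1, -k}` all of whose partial sums are
nonnegative and whose total sum is `0`. -/
def IsKDyckPath (k : ℕ) (w : List ℤ) : Prop :=
  (∀ a ∈ w, a = 1 ∨ a = -(k : ℤ)) ∧ (∀ j, 0 ≤ (w.take j).sum) ∧ w.sum = 0

section Aux

/-! ### Prefix sums of rotations -/

lemma sum_take_rotate_lower (w : List ℤ) (j i : ℕ) (h : j + i ≤ w.length) :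
    ((w.rotate j).take i).sum = (w.take (j+i)).sum - (w.take j).sum := by
  have hj : j ≤ w.length := le_trans (Nat.le_add_right _ _) h
  rw [List.rotate_eq_drop_append_take hj, List.take_append]
  have h1 : i - (w.drop j).length = 0 := by simp [List.length_drop]; omega
  rw [h1, List.take_zero, List.append_nil]
  have h2 : List.take i (List.drop j w) = List.drop j (List.take (j+i) w) := by
    rw [List.drop_take]; congr 1; omega
  rw [h2]
  have h3 := List.sum_take_add_sum_drop (List.take (j+i) w) j
  rw [List.take_take, min_eq_left (by omega : j ≤ j + i)] at h3
  omega

lemma sum_take_rotate_upper (w : List ℤ) (j i : ℕ) (hj : j ≤ w.length)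
    (hi : w.length - j ≤ i) (hi' : i ≤ w.length) :
    ((w.rotate j).take i).sum = w.sum - (w.take j).sum + (w.take (i - (w.length - j))).sum := by
  rw [List.rotate_eq_drop_append_take hj, List.take_append]
  have h1 : List.take i (List.drop j w) = List.drop j w :=
    List.take_of_length_le (by simp [List.length_drop]; omega)
  rw [h1, List.length_drop, List.take_take,
    min_eq_left (by omega : i - (w.length - j) ≤ j), List.sum_append]
  have h3 := List.sum_take_add_sum_drop w j
  omega

/-! ### Dominating words -/

def Dominating (w : List ℤ) : Prop := ∀ i, 1 ≤ i → i ≤ w.length → 0 < (w.take i).sum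

lemma dominating_iff_cons (k n : ℕ) (hk : 1 ≤ k) (w : List ℤ)
    (halpha : ∀ a ∈ w, a = 1 ∨ a = -(k : ℤ)) (hlen : w.length = (k+1)*n+1)
    (hsum : w.sum = 1) :
    Dominating w ↔ ∃ u, (IsKDyckPath k u ∧ u.length = (k + 1) * n) ∧ w = 1 :: u := by
  constructor
  · intro hdom
    obtain ⟨a, u, rfl⟩ : ∃ a u, w = a :: u := by
      cases w with
      | nil => simp at hlen
      | cons a u => exact ⟨a, u, rfl⟩
    have ha1 : a = 1 := by
      have h := hdom 1 le_rfl (by simp)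
      simp at h
      rcases halpha a (by simp) with h1 | h1
      · exact h1
      · exfalso; rw [h1] at h
        have : (1:ℤ) ≤ (k:ℤ) := by exact_mod_cast hk
        omega
    subst ha1
    refine ⟨u, ⟨⟨fun a ha => halpha a (by simp [ha]), fun j => ?_, ?_⟩, ?_⟩, rfl⟩
    · rcases le_or_gt j u.length with hle | hlt
      · have h := hdom (j+1) (by omega) (by simp; omega)
        simp [List.take_succ_cons] at h
        omega
      · rw [List.take_of_length_le (by omega)]
        simp at hsum; omega
    · simp at hsum; omega
    · simp at hlen; omega
  · rintro ⟨u, ⟨⟨_, hpre, husum⟩, _⟩, rfl⟩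
    intro i hi _
    obtain ⟨i, rfl⟩ : ∃ i', i = i' + 1 := ⟨i - 1, by omega⟩
    rw [List.take_succ_cons, List.sum_cons]
    have := hpre i
    omega

/-! ### The cycle lemma -/

lemma existsUnique_dominating_rotate (w : List ℤ) (hsum : w.sum = 1) (hN : 0 < w.length) :
    ∃! j : ℕ, j < w.length ∧ Dominating (w.rotate j) := by
  have key : ∀ j, j < w.length → Dominating (w.rotate j) → ∀ j', j < j' → j' < w.length →
      ¬ Dominating (w.rotate j') := by
    intro j hj hdom j' hjj' hj' hdom'
    have h1 : 0 < (w.take j').sum - (w.take j).sum := by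
      have := hdom (j' - j) (by omega) (by rw [List.length_rotate]; omega)
      rw [sum_take_rotate_lower w j (j' - j) (by omega)] at this
      have e : j + (j' - j) = j' := by omega
      rw [e] at this; exact this
    have h2 : 0 < w.sum - (w.take j').sum +
        (w.take ((w.length - j' + j) - (w.length - j'))).sum := by
      have := hdom' (w.length - j' + j) (by omega) (by rw [List.length_rotate]; omega)
      rw [sum_take_rotate_upper w j' (w.length - j' + j) (by omega) (by omega) (by omega)]
        at this
      exact this
    have e2 : (w.length - j' + j) - (w.length - j') = j := by omega
    rw [e2, hsum] at h2
    omega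
  obtain ⟨m, hm, hmin⟩ := Finset.exists_min_image (Finset.range (w.length+1))
    (fun t => (w.take t).sum) ⟨0, by simp⟩
  set T := (Finset.range (w.length+1)).filter
    (fun t => (w.take t).sum ≤ (w.take m).sum) with hT
  have hTne : T.Nonempty := ⟨m, by have := Finset.mem_range.mp hm; simp [hT]; omega⟩
  set j := T.max' hTne with hj
  have hjT : j ∈ T := T.max'_mem hTne
  have hjN : j ≤ w.length := by
    have := (Finset.mem_filter.mp hjT).1; simp at this; omega
  have hjmin : ∀ t, t ≤ w.length → (w.take j).sum ≤ (w.take t).sum := by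
    intro t ht
    exact le_trans (Finset.mem_filter.mp hjT).2 (hmin t (by simp; omega))
  have hjmax : ∀ t, j < t → t ≤ w.length → (w.take j).sum < (w.take t).sum := by
    intro t hjt ht
    by_contra hcon
    push_neg at hcon
    have : t ∈ T := Finset.mem_filter.mpr ⟨by simp; omega,
      le_trans hcon (Finset.mem_filter.mp hjT).2⟩
    exact absurd (T.le_max' t this) (by omega)
  have hjltN : j < w.length := by
    rcases eq_or_lt_of_le hjN with h | h
    · exfalso
      have h0 : (w.take j).sum ≤ (w.take 0).sum := hjmin 0 (by omega)
      have hN1 : (w.take w.length).sum = 1 := by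
        rw [List.take_of_length_le (le_refl _), hsum]
      rw [h, hN1] at h0
      simp at h0
    · exact h
  have hdomj : Dominating (w.rotate j) := by
    intro i hi hilen
    rw [List.length_rotate] at hilen
    rcases le_or_gt i (w.length - j) with hcase | hcase
    · rw [sum_take_rotate_lower w j i (by omega)]
      have := hjmax (j + i) (by omega) (by omega)
      omega
    · rw [sum_take_rotate_upper w j i (by omega) (by omega) (by omega), hsum]
      have := hjmin (i - (w.length - j)) (by omega)
      omega
  refine ⟨j, ⟨hjltN, hdomj⟩, ?_⟩
  rintro j' ⟨hj'N, hdom'⟩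
  by_contra hne
  rcases lt_trichotomy j j' with h | h | h
  · exact key j hjltN hdomj j' h hj'N hdom'
  · exact hne h.symm
  · exact key j' hj'N hdom' j h hjltN hdomj

/-! ### Counting words with `n` down-steps -/

def wordOf (k N : ℕ) (s : Finset ℕ) : List ℤ :=
  (List.range N).map (fun i => if i ∈ s then -(k : ℤ) else 1)

lemma length_wordOf (k N : ℕ) (s : Finset ℕ) : (wordOf k N s).length = N := by
  simp [wordOf]

lemma getD_wordOf (k N : ℕ) (s : Finset ℕ) (i : ℕ) (hi : i < N) :
    (wordOf k N s).getD i 0 = if i ∈ s then -(k : ℤ) else 1 := by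
  rw [List.getD_eq_getElem _ _ (by simp [length_wordOf, hi])]
  simp [wordOf]

lemma sum_wordOf (k N : ℕ) (s : Finset ℕ) (hs : s ⊆ Finset.range N) :
    (wordOf k N s).sum = (N : ℤ) - (k + 1) * s.card := by
  have h0 : (wordOf k N s).sum = ∑ i ∈ Finset.range N, (if i ∈ s then -(k : ℤ) else 1) := rfl
  rw [h0, Finset.sum_ite]
  rw [Finset.filter_mem_eq_inter, Finset.inter_eq_right.mpr hs]
  have h1 : Finset.filter (fun i => ¬ i ∈ s) (Finset.range N) = Finset.range N \ s := by
    rw [Finset.sdiff_eq_filter]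
  rw [h1, Finset.sum_const, Finset.sum_const, Finset.card_sdiff_of_subset hs, Finset.card_range]
  have hcard : s.card ≤ N := by
    have := Finset.card_le_card hs; simpa using this
  simp only [nsmul_eq_mul, mul_one]
  push_cast [hcard]
  ring

lemma card_words (k n : ℕ) (hk : 1 ≤ k) :
    Nat.card {w : List ℤ // (∀ a ∈ w, a = 1 ∨ a = -(k : ℤ)) ∧
      w.length = (k+1)*n+1 ∧ w.sum = 1} = ((k+1)*n+1).choose n := by
  set N := (k+1)*n+1 with hN
  have hne : ∀ i : ℤ, ¬ ((1:ℤ) = -(k:ℤ)) := by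
    intro i h
    have : (1:ℤ) ≤ (k:ℤ) := by exact_mod_cast hk
    omega
  let F : {s : Finset ℕ // s ∈ Finset.powersetCard n (Finset.range N)} →
      {w : List ℤ // (∀ a ∈ w, a = 1 ∨ a = -(k : ℤ)) ∧ w.length = N ∧ w.sum = 1} :=
    fun s => ⟨wordOf k N s.1, by
      obtain ⟨hsub, hcard⟩ := Finset.mem_powersetCard.mp s.2
      refine ⟨fun a ha => ?_, length_wordOf .., ?_⟩
      · obtain ⟨i, -, rfl⟩ := List.mem_map.mp ha
        by_cases h : i ∈ s.1 <;> simp [h]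
      · rw [sum_wordOf k N s.1 hsub, hcard, hN]
        push_cast
        ring⟩
  have hbij : Function.Bijective F := by
    constructor
    · rintro s t h
      have hw : wordOf k N s.1 = wordOf k N t.1 := congrArg Subtype.val h
      obtain ⟨hsubs, -⟩ := Finset.mem_powersetCard.mp s.2
      obtain ⟨hsubt, -⟩ := Finset.mem_powersetCard.mp t.2
      apply Subtype.ext
      ext i
      by_cases hi : i < N
      · have hg : (wordOf k N s.1).getD i 0 = (wordOf k N t.1).getD i 0 := by rw [hw]
        rw [getD_wordOf k N s.1 i hi, getD_wordOf k N t.1 i hi] at hg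
        constructor <;> intro hmem <;> by_contra hnot
        · simp [hmem, hnot] at hg; exact hne 0 hg.symm
        · simp [hmem, hnot] at hg; exact hne 0 hg
      · constructor <;> intro hmem
        · exact absurd (Finset.mem_range.mp (hsubs hmem)) hi
        · exact absurd (Finset.mem_range.mp (hsubt hmem)) hi
    · rintro ⟨w, halpha, hlen, hsum⟩
      set s := (Finset.range N).filter (fun i => w.getD i 0 = -(k:ℤ)) with hsdef
      have hsub : s ⊆ Finset.range N := Finset.filter_subset _ _
      have hw : wordOf k N s = w := by
        apply List.ext_getElem (by simp [length_wordOf, hlen])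
        intro i h1 h2
        rw [length_wordOf] at h1
        have hgetD : w.getD i 0 = w[i] := List.getD_eq_getElem w 0 h2
        have hmem : i ∈ s ↔ w[i] = -(k:ℤ) := by
          rw [hsdef, Finset.mem_filter, Finset.mem_range, hgetD]
          exact ⟨fun h => h.2, fun h => ⟨h1, h⟩⟩
        have := getD_wordOf k N s i h1
        rw [List.getD_eq_getElem _ _ (by simp [length_wordOf, h1])] at this
        rw [this]
        rcases halpha w[i] (List.getElem_mem h2) with hc | hc
        · rw [if_neg]
          · exact hc.symm
          · rw [hmem, hc]; exact hne 0
        · rw [if_pos (hmem.mpr hc)]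
          exact hc.symm
      have hcard : s.card = n := by
        have hs := sum_wordOf k N s hsub
        rw [hw, hsum] at hs
        have hNZ : (N : ℤ) = ((k:ℤ)+1)*n+1 := by rw [hN]; push_cast; ring
        have h2 : ((k:ℤ)+1) * s.card = ((k:ℤ)+1) * n := by linarith [hs, hNZ]
        have h3 : ((s.card : ℤ)) = (n : ℤ) :=
          mul_left_cancel₀ (by positivity) h2
        exact_mod_cast h3
      exact ⟨⟨s, Finset.mem_powersetCard.mpr ⟨hsub, hcard⟩⟩, Subtype.ext hw⟩
  rw [← Nat.card_congr (Equiv.ofBijective F hbij), Nat.card_eq_finsetCard,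
    Finset.card_powersetCard, Finset.card_range]

end Aux

/-- The number of k-Dyck paths of length `(k+1)n` is
`(1/(kn+1)) * choose ((k+1)n) n`, stated multiplicatively. -/
theorem card_kDyckPaths (k n : ℕ) (hk : 1 ≤ k) :
    (k * n + 1) *
      Set.ncard {w : List ℤ | IsKDyckPath k w ∧ w.length = (k + 1) * n} =
    Nat.choose ((k + 1) * n) n := by
  set N := (k+1)*n+1 with hN
  have hNpos : 0 < N := by omega
  set D : Set (List ℤ) := {w : List ℤ | IsKDyckPath k w ∧ w.length = (k + 1) * n} with hD
  -- the bijection Φ : Fin N × D → A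
  let Φ : Fin N × ↥D → {w : List ℤ // (∀ a ∈ w, a = 1 ∨ a = -(k : ℤ)) ∧
      w.length = N ∧ w.sum = 1} := fun p =>
    ⟨(1 :: p.2.1).rotate p.1, by
      obtain ⟨⟨halpha, hpre, husum⟩, hulen⟩ := p.2.2
      refine ⟨?_, ?_, ?_⟩
      · intro a ha
        rw [List.mem_rotate] at ha
        rcases List.mem_cons.mp ha with ha | ha
        · left; exact ha
        · exact halpha a ha
      · rw [List.length_rotate]; simp [hulen, hN]
      · rw [(List.rotate_perm _ _).sum_eq]
        simp [husum]⟩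
  have hmod : ∀ j : ℕ, j < N → (N - j) % N = if j = 0 then 0 else N - j := by
    intro j hj
    by_cases h : j = 0
    · simp [h]
    · rw [if_neg h]; exact Nat.mod_eq_of_lt (by omega)
  have hrotN : ∀ (v : List ℤ) (j : ℕ), v.length = N → j < N →
      (v.rotate j).rotate ((N - j) % N) = v := by
    intro v j hvl hj
    have h1 : (v.rotate j).rotate ((N - j) % N) = (v.rotate j).rotate (N - j) := by
      have : (v.rotate j).length = N := by rw [List.length_rotate, hvl]
      rw [← this]
      exact List.rotate_mod _ _
    rw [h1, List.rotate_rotate]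
    have h2 : j + (N - j) = N := by omega
    rw [h2, ← hvl, List.rotate_length]
  have hΦbij : Function.Bijective Φ := by
    constructor
    · rintro ⟨j, u⟩ ⟨j', u'⟩ h
      have hw : (1 :: u.1).rotate j.1 = (1 :: u'.1).rotate j'.1 := congrArg Subtype.val h
      obtain ⟨⟨hua, hup, hus⟩, hul⟩ := u.2
      obtain ⟨⟨hua', hup', hus'⟩, hul'⟩ := u'.2
      set v := (1 :: u.1).rotate j.1 with hv
      have hvlen : v.length = N := by rw [List.length_rotate]; simp [hul, hN]
      have hvsum : v.sum = 1 := by rw [(List.rotate_perm _ _).sum_eq]; simp [hus]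
      have hlen1 : (1 :: u.1).length = N := by simp [hul, hN]
      have hlen1' : (1 :: u'.1).length = N := by simp [hul', hN]
      have hone : v.rotate ((N - j.1) % N) = 1 :: u.1 := hrotN _ _ hlen1 j.isLt
      have hone' : v.rotate ((N - j'.1) % N) = 1 :: u'.1 := by
        rw [hw]; exact hrotN _ _ hlen1' j'.isLt
      have hdomu : Dominating (1 :: u.1) := by
        rw [dominating_iff_cons k n hk (1 :: u.1)
          (fun a ha => by rcases List.mem_cons.mp ha with ha | ha
                          · left; exact ha
                          · exact hua a ha)
          (by rw [hlen1, hN]) (by simp [hus])]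
        exact ⟨u.1, ⟨⟨hua, hup, hus⟩, hul⟩, rfl⟩
      have hdomu' : Dominating (1 :: u'.1) := by
        rw [dominating_iff_cons k n hk (1 :: u'.1)
          (fun a ha => by rcases List.mem_cons.mp ha with ha | ha
                          · left; exact ha
                          · exact hua' a ha)
          (by rw [hlen1', hN]) (by simp [hus'])]
        exact ⟨u'.1, ⟨⟨hua', hup', hus'⟩, hul'⟩, rfl⟩
      obtain ⟨j₀, -, huniq⟩ := existsUnique_dominating_rotate v hvsum (by rw [hvlen]; omega)
      have e1 : (N - j.1) % N = j₀ := huniq _ ⟨by rw [hvlen]; exact Nat.mod_lt _ hNpos,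
        by rw [hone]; exact hdomu⟩
      have e2 : (N - j'.1) % N = j₀ := huniq _ ⟨by rw [hvlen]; exact Nat.mod_lt _ hNpos,
        by rw [hone']; exact hdomu'⟩
      have hjj : j.1 = j'.1 := by
        have m1 := hmod j.1 j.isLt
        have m2 := hmod j'.1 j'.isLt
        rw [m1] at e1
        rw [m2] at e2
        by_cases hz : j.1 = 0 <;> by_cases hz' : j'.1 = 0 <;>
          simp [hz, hz'] at e1 e2 <;> omega
      have huu : (1 : ℤ) :: u.1 = 1 :: u'.1 := by
        rw [← hone, ← hone', hjj]
      have : u.1 = u'.1 := by injection huu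
      exact Prod.ext (Fin.ext hjj) (Subtype.ext this)
    · rintro ⟨w, halpha, hlen, hsum⟩
      obtain ⟨j₀, ⟨hj₀, hdom⟩, -⟩ := existsUnique_dominating_rotate w hsum (by rw [hlen]; omega)
      have halphar : ∀ a ∈ w.rotate j₀, a = 1 ∨ a = -(k:ℤ) :=
        fun a ha => halpha a (List.mem_rotate.mp ha)
      have hlenr : (w.rotate j₀).length = (k+1)*n+1 := by rw [List.length_rotate, hlen]
      have hsumr : (w.rotate j₀).sum = 1 := by rw [(List.rotate_perm _ _).sum_eq, hsum]
      obtain ⟨u, hu, hequ⟩ :=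
        (dominating_iff_cons k n hk (w.rotate j₀) halphar hlenr hsumr).mp hdom
      rw [hlen] at hj₀
      refine ⟨(⟨(N - j₀) % N, Nat.mod_lt _ hNpos⟩, ⟨u, hu⟩), ?_⟩
      apply Subtype.ext
      show (1 :: u).rotate ((N - j₀) % N) = w
      rw [← hequ]
      exact hrotN w j₀ hlen hj₀
  -- assemble the counts
  have hmain : N * Nat.card ↥D = N.choose n := by
    have h3 : Nat.card (Fin N × ↥D) = N * Nat.card ↥D := by
      rw [Nat.card_prod, Nat.card_eq_fintype_card, Fintype.card_fin]
    rw [← h3, Nat.card_congr (Equiv.ofBijective Φ hΦbij)]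
    exact card_words k n hk
  have hDcard : Set.ncard D = Nat.card ↥D := (Nat.card_coe_set_eq D).symm
  have hch := Nat.choose_mul_succ_eq ((k+1)*n) n
  have he : (k+1)*n + 1 - n = k*n+1 := by
    have : (k+1)*n = k*n+n := by ring
    omega
  rw [he] at hch
  apply Nat.eq_of_mul_eq_mul_left hNpos
  calc N * ((k*n+1) * Set.ncard D)
      = (k*n+1) * (N * Nat.card ↥D) := by rw [hDcard]; ring
    _ = (k*n+1) * N.choose n := by rw [hmain]
    _ = N.choose n * (k*n+1) := by ring
    _ = ((k+1)*n).choose n * ((k+1)*n+1) := hch.symm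
    _ = N * ((k+1)*n).choose n := by rw [hN]; ring
end

section
/- The number of 2-Dyck paths of length 3n equals (1/(2n+1)) * binomial(3n, n). -/
/-- A 2-Dyck path: a sequence over `{+1, -2}` all of whose partial sums are
nonnegative and whose total sum is `0`. -/
def IsDyck2Path (w : List ℤ) : Prop :=
  (∀ a ∈ w, a = 1 ∨ a = -2) ∧ (∀ j, 0 ≤ (w.take j).sum) ∧ w.sum = 0

namespace Dyck2Aux

def rot (k : ℕ) (w : List ℤ) : List ℤ := w.drop k ++ w.take k

def ps (w : List ℤ) (j : ℕ) : ℤ := (w.take j).sum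

@[simp] lemma ps_zero (w : List ℤ) : ps w 0 = 0 := rfl

lemma ps_length (w : List ℤ) : ps w w.length = w.sum := by simp [ps]

lemma ps_of_le (w : List ℤ) {j : ℕ} (h : w.length ≤ j) : ps w j = w.sum := by
  simp [ps, List.take_of_length_le h]

@[simp] lemma rot_length (k : ℕ) (w : List ℤ) : (rot k w).length = w.length := by
  simp [rot]; omega

lemma rot_perm (k : ℕ) (w : List ℤ) : (rot k w).Perm w := by
  calc (rot k w).Perm (w.take k ++ w.drop k) := List.perm_append_comm
  _ = w := List.take_append_drop k w

@[simp] lemma rot_zero (w : List ℤ) : rot 0 w = w := by simp [rot]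

lemma rot_self (w : List ℤ) : rot w.length w = w := by
  simp [rot, List.take_of_length_le]

lemma rot_rot {k : ℕ} {w : List ℤ} (hk : k ≤ w.length) :
    rot (w.length - k) (rot k w) = w := by
  have hlen : (w.drop k).length = w.length - k := by simp
  unfold rot
  rw [← hlen, List.drop_left, List.take_left, List.take_append_drop]

lemma ps_rot_low {k j : ℕ} {w : List ℤ} (hk : k ≤ w.length) (hj : j ≤ w.length - k) :
    ps (rot k w) j = ps w (k + j) - ps w k := by
  have hlen : (w.drop k).length = w.length - k := by simp
  have h1 : (rot k w).take j = (w.drop k).take j := by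
    rw [rot, List.take_append_of_le_length (by omega)]
  have h2 : w.take (k + j) = w.take k ++ (w.drop k).take j := List.take_add
  simp only [ps, h1, h2, List.sum_append]
  ring

lemma ps_rot_high {k j : ℕ} {w : List ℤ} (hk : k ≤ w.length) (hj1 : w.length - k ≤ j)
    (hj2 : j ≤ w.length) :
    ps (rot k w) j = w.sum - ps w k + ps w (j - (w.length - k)) := by
  have hlen : (w.drop k).length = w.length - k := by simp
  have h1 : (rot k w).take j = w.drop k ++ (w.take k).take (j - (w.length - k)) := by
    rw [rot, ← hlen]
    have : j = (w.drop k).length + (j - (w.length - k)) := by omega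
    rw [this, List.take_length_add_append]
    congr 2
    omega
  have h2 : (w.take k).take (j - (w.length - k)) = w.take (j - (w.length - k)) := by
    rw [List.take_take, min_eq_left (by omega)]
  have h3 : (w.drop k).sum = w.sum - ps w k := by
    have := List.take_append_drop k w
    have : (w.take k ++ w.drop k).sum = w.sum := by rw [this]
    simp only [List.sum_append] at this
    simp [ps]; omega
  simp only [ps, h1, h2, List.sum_append]
  rw [h3]; simp [ps]


def Pos (v : List ℤ) : Prop := ∀ j, 1 ≤ j → j ≤ v.length → 1 ≤ ps v j

lemma pos_rot_iff {v : List ℤ} (h1 : v.sum = 1) {k : ℕ} (hk : k < v.length) :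
    Pos (rot k v) ↔ ((∀ i, k < i → i ≤ v.length → ps v k < ps v i) ∧
      (∀ j, j ≤ k → ps v k ≤ ps v j)) := by
  constructor
  · intro hp
    constructor
    · intro i hi1 hi2
      have h := hp (i - k) (by omega) (by rw [rot_length]; omega)
      rw [ps_rot_low (by omega) (by omega)] at h
      have : k + (i - k) = i := by omega
      rw [this] at h; omega
    · intro j hj
      rcases Nat.eq_zero_or_pos j with rfl | hj0
      · have h := hp (v.length - k) (by omega) (by rw [rot_length]; omega)
        rw [ps_rot_low (by omega) (by omega)] at h
        have : k + (v.length - k) = v.length := by omega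
        rw [this, ps_length, h1] at h
        simpa using (by omega : ps v k ≤ 0)
      · have h := hp (j + (v.length - k)) (by omega) (by rw [rot_length]; omega)
        rw [ps_rot_high (by omega) (by omega) (by omega)] at h
        have : j + (v.length - k) - (v.length - k) = j := by omega
        rw [this, h1] at h
        omega
  · rintro ⟨hgt, hge⟩ j hj1 hj2
    rw [rot_length] at hj2
    rcases le_or_gt j (v.length - k) with h | h
    · rw [ps_rot_low (by omega) h]
      have := hgt (k + j) (by omega) (by omega)
      omega
    · rw [ps_rot_high (by omega) (by omega) (by omega), h1]
      have := hge (j - (v.length - k)) (by omega)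
      omega

lemma pos_rot_unique {v : List ℤ} (h1 : v.sum = 1) {k1 k2 : ℕ} (hk1 : k1 < v.length)
    (hk2 : k2 < v.length) (p1 : Pos (rot k1 v)) (p2 : Pos (rot k2 v)) : k1 = k2 := by
  rw [pos_rot_iff h1 hk1] at p1
  rw [pos_rot_iff h1 hk2] at p2
  rcases lt_trichotomy k1 k2 with h | h | h
  · have := p1.1 k2 h (le_of_lt hk2)
    have := p2.2 k1 (le_of_lt h)
    omega
  · exact h
  · have := p2.1 k1 h (le_of_lt hk1)
    have := p1.2 k2 (le_of_lt h)
    omega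

lemma exists_pos_rot {v : List ℤ} (hN : 0 < v.length) (h1 : v.sum = 1) :
    ∃ k, k < v.length ∧ Pos (rot k v) := by
  set N := v.length with hNdef
  have hne : ((Finset.range (N + 1)).image (ps v)).Nonempty := by
    exact ⟨ps v 0, Finset.mem_image.mpr ⟨0, by simp, rfl⟩⟩
  set m := ((Finset.range (N + 1)).image (ps v)).min' hne with hm
  have hmin : ∀ j, j ≤ N → m ≤ ps v j := fun j hj =>
    Finset.min'_le _ _ (Finset.mem_image.mpr ⟨j, Finset.mem_range.mpr (by omega), rfl⟩)
  obtain ⟨j0, hj0, hj0m⟩ : ∃ j0 ∈ Finset.range (N + 1), ps v j0 = m := by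
    obtain ⟨j0, hj0, hj0m⟩ := Finset.mem_image.mp (Finset.min'_mem _ hne)
    exact ⟨j0, hj0, hj0m⟩
  set k := Nat.findGreatest (fun j => ps v j = m) N with hk
  have hkm : ps v k = m :=
    Nat.findGreatest_spec (P := fun j => ps v j = m)
      (Nat.lt_succ_iff.mp (Finset.mem_range.mp hj0)) hj0m
  have hkN : k ≤ N := Nat.findGreatest_le N
  have hm0 : m ≤ 0 := by simpa using hmin 0 (by omega)
  have hpsN : ps v N = 1 := by rw [hNdef, ps_length, h1]
  have hkltN : k < N := by
    rcases eq_or_lt_of_le hkN with h | h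
    · rw [h, hpsN] at hkm; omega
    · exact h
  refine ⟨k, hkltN, ?_⟩
  rw [pos_rot_iff h1 hkltN]
  constructor
  · intro i hi1 hi2
    have hne' : ps v i ≠ m :=
      Nat.findGreatest_is_greatest (P := fun j => ps v j = m) 
        (by rw [← hk]; exact hi1) (by omega)
    have := hmin i (by omega)
    rw [hkm]
    rcases lt_or_eq_of_le this with h | h
    · exact h
    · exact absurd h.symm hne'
  · intro j hj
    rw [hkm]
    exact hmin j (by omega)



def Ok (w : List ℤ) : Prop := ∀ a ∈ w, a = 1 ∨ a = -2

def allW : ℕ → Finset (List ℤ)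
  | 0 => {[]}
  | (N + 1) => ((allW N).image (List.cons 1)) ∪ ((allW N).image (List.cons (-2)))

lemma mem_allW {N : ℕ} {w : List ℤ} : w ∈ allW N ↔ w.length = N ∧ Ok w := by
  induction N generalizing w with
  | zero =>
    simp only [allW, Finset.mem_singleton]
    constructor
    · rintro rfl; exact ⟨rfl, by intro a ha; simp at ha⟩
    · rintro ⟨h, -⟩; exact List.length_eq_zero_iff.mp h
  | succ N ih =>
    simp only [allW, Finset.mem_union, Finset.mem_image]
    constructor
    · rintro (⟨u, hu, rfl⟩ | ⟨u, hu, rfl⟩) <;>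
        obtain ⟨hl, hok⟩ := ih.mp hu
      · refine ⟨by simp [hl], fun a ha => ?_⟩
        rcases List.mem_cons.mp ha with rfl | ha
        · exact Or.inl rfl
        · exact hok a ha
      · refine ⟨by simp [hl], fun a ha => ?_⟩
        rcases List.mem_cons.mp ha with rfl | ha
        · exact Or.inr rfl
        · exact hok a ha
    · rintro ⟨hl, hok⟩
      match w with
      | [] => simp at hl
      | a :: u =>
        have ha := hok a (List.mem_cons_self)
        have hu : u ∈ allW N := ih.mpr ⟨by simpa using hl, fun b hb => hok b (List.mem_cons_of_mem a hb)⟩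
        rcases ha with rfl | rfl
        · exact Or.inl ⟨u, hu, rfl⟩
        · exact Or.inr ⟨u, hu, rfl⟩

lemma card_allW_filter (N m : ℕ) :
    ((allW N).filter (fun w => w.count (-2) = m)).card = N.choose m := by
  induction N generalizing m with
  | zero =>
    rcases m with _ | m <;> simp [allW, Finset.filter_singleton]
  | succ N ih =>
    have hinj1 : Function.Injective (List.cons (1 : ℤ)) := fun a b h => by
      simpa using h
    have hinj2 : Function.Injective (List.cons (-2 : ℤ)) := fun a b h => by
      simpa using h
    have hdisj : Disjoint (((allW N).image (List.cons 1)).filter (fun w => w.count (-2) = m))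
        (((allW N).image (List.cons (-2))).filter (fun w => w.count (-2) = m)) := by
      rw [Finset.disjoint_left]
      rintro w hw1 hw2
      simp only [Finset.mem_filter, Finset.mem_image] at hw1 hw2
      obtain ⟨⟨u, _, rfl⟩, -⟩ := hw1
      obtain ⟨⟨u', _, h⟩, -⟩ := hw2
      simp at h
    rw [allW, Finset.filter_union, Finset.card_union_of_disjoint hdisj]
    have e1 : (((allW N).image (List.cons 1)).filter (fun w => w.count (-2) = m))
        = ((allW N).filter (fun w => w.count (-2) = m)).image (List.cons 1) := by
      rw [Finset.filter_image]
      congr 1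
    rcases m with _ | m
    · have e2 : (((allW N).image (List.cons (-2))).filter (fun w => w.count (-2) = 0)) = ∅ := by
        rw [Finset.eq_empty_iff_forall_notMem]
        intro w hw
        simp only [Finset.mem_filter, Finset.mem_image] at hw
        obtain ⟨⟨u, _, rfl⟩, hc⟩ := hw
        simp [List.count_cons] at hc
      rw [e1, e2, Finset.card_image_of_injective _ hinj1, ih]
      simp
    · have e2 : (((allW N).image (List.cons (-2))).filter (fun w => w.count (-2) = m + 1))
          = ((allW N).filter (fun w => w.count (-2) = m)).image (List.cons (-2)) := by
        rw [Finset.filter_image]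
        congr 1
        ext u
        simp [List.count_cons]
      rw [e1, e2, Finset.card_image_of_injective _ hinj1,
        Finset.card_image_of_injective _ hinj2, ih, ih]
      simp only [Nat.choose_succ_succ, Nat.succ_eq_add_one]
      omega

lemma sum_of_ok {w : List ℤ} (h : Ok w) :
    w.sum = (w.length : ℤ) - 3 * w.count (-2) := by
  induction w with
  | nil => simp
  | cons a u ih =>
    have ha := h a (List.mem_cons_self)
    have hu := ih (fun b hb => h b (List.mem_cons_of_mem a hb))
    rcases ha with rfl | rfl <;>
      simp [List.count_cons, hu] <;> push_cast <;> ring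




lemma rot_sum (k : ℕ) (w : List ℤ) : (rot k w).sum = w.sum := (rot_perm k w).sum_eq

lemma rot_count (k : ℕ) (w : List ℤ) (a : ℤ) : (rot k w).count a = w.count a :=
  (rot_perm k w).count_eq a

lemma rot_ok {k : ℕ} {w : List ℤ} (h : Ok w) : Ok (rot k w) :=
  fun a ha => h a ((rot_perm k w).mem_iff.mp ha)

lemma pos_cons {w : List ℤ} (h : ∀ j, 0 ≤ (w.take j).sum) : Pos (1 :: w) := by
  intro j hj1 _
  obtain ⟨m, rfl⟩ : ∃ m, j = m + 1 := ⟨j - 1, by omega⟩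
  have : ps (1 :: w) (m + 1) = 1 + ps w m := by
    simp [ps, List.take_succ_cons]
  rw [this]
  have := h m
  simp only [ps] at *
  omega

lemma cons_of_pos {v : List ℤ} (hok : Ok v) (hs : v.sum = 1) (hl : 0 < v.length)
    (hp : Pos v) : ∃ w, v = 1 :: w ∧ IsDyck2Path w := by
  match v with
  | a :: w =>
    have h1 : ps (a :: w) 1 = a := by simp [ps]
    have ha1 := hp 1 le_rfl (by simp)
    rw [h1] at ha1
    rcases hok a (List.mem_cons_self) with rfl | rfl
    swap
    · omega
    have hsum : w.sum = 0 := by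
      simp only [List.sum_cons] at hs; omega
    refine ⟨w, rfl, fun b hb => hok b (List.mem_cons_of_mem 1 hb), fun j => ?_, hsum⟩
    rcases le_or_gt j w.length with h | h
    · have := hp (j + 1) (by omega) (by simp; omega)
      have e : ps (1 :: w) (j + 1) = 1 + ps w j := by simp [ps, List.take_succ_cons]
      rw [e] at this
      simpa only [ps] using (by omega : (0:ℤ) ≤ ps w j)
    · rw [List.take_of_length_le (by omega), hsum]

noncomputable def Dn (n : ℕ) : Finset (List ℤ) :=
  @Finset.filter _
    (fun w => (∀ j ∈ Finset.range (3 * n + 1), 0 ≤ (w.take j).sum) ∧ w.sum = 0)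
    (by exact inferInstance) (allW (3 * n))

noncomputable def Sn (n : ℕ) : Finset (List ℤ) := (allW (3 * n + 1)).filter (fun w => w.count (-2) = n)

lemma mem_Dn {n : ℕ} {w : List ℤ} : w ∈ Dn n ↔ IsDyck2Path w ∧ w.length = 3 * n := by
  rw [Dn, Finset.mem_filter, mem_allW]
  constructor
  · rintro ⟨⟨hl, hok⟩, hj, hs⟩
    refine ⟨⟨hok, fun j => ?_, hs⟩, hl⟩
    rcases le_or_gt j (3 * n) with h | h
    · exact hj j (Finset.mem_range.mpr (by omega))
    · rw [List.take_of_length_le (by omega), hs]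
  · rintro ⟨⟨hok, hj, hs⟩, hl⟩
    exact ⟨⟨hl, hok⟩, fun j _ => hj j, hs⟩

lemma card_Sn (n : ℕ) : (Sn n).card = (3 * n + 1).choose n := card_allW_filter _ _

lemma mem_Sn {n : ℕ} {v : List ℤ} (h : v ∈ Sn n) :
    v.length = 3 * n + 1 ∧ Ok v ∧ v.sum = 1 := by
  rw [Sn, Finset.mem_filter, mem_allW] at h
  obtain ⟨⟨hl, hok⟩, hc⟩ := h
  refine ⟨hl, hok, ?_⟩
  rw [sum_of_ok hok, hl, hc]
  push_cast
  ring

lemma count_of_dyck {n : ℕ} {w : List ℤ} (h : IsDyck2Path w) (hl : w.length = 3 * n) :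
    w.count (-2) = n := by
  have := sum_of_ok h.1
  rw [h.2.2, hl] at this
  omega

lemma card_eq (n : ℕ) : (Dn n).card * (3 * n + 1) = (3 * n + 1).choose n := by
  set N := 3 * n + 1 with hN
  rw [← card_Sn n, ← Finset.card_range N, ← Finset.card_product]
  apply Finset.card_bij (fun p _ => rot p.2 (1 :: p.1))
  · intro p hp
    obtain ⟨w, k⟩ := p
    simp only [Finset.mem_product, mem_Dn, Finset.mem_range] at hp
    obtain ⟨⟨hd, hl⟩, hk⟩ := hp
    rw [Sn, Finset.mem_filter, mem_allW]
    refine ⟨⟨?_, ?_⟩, ?_⟩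
    · rw [rot_length]; simp [hl]
    · apply rot_ok
      intro a ha
      rcases List.mem_cons.mp ha with rfl | ha
      · exact Or.inl rfl
      · exact hd.1 a ha
    · rw [rot_count]
      have := count_of_dyck hd hl
      simp [List.count_cons, this]
  · intro p1 hp1 p2 hp2 heq
    obtain ⟨w1, k1⟩ := p1
    obtain ⟨w2, k2⟩ := p2
    simp only [Finset.mem_product, mem_Dn, Finset.mem_range] at hp1 hp2
    obtain ⟨⟨hd1, hl1⟩, hk1⟩ := hp1
    obtain ⟨⟨hd2, hl2⟩, hk2⟩ := hp2
    set v := rot k1 (1 :: w1) with hv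
    have hv2 : v = rot k2 (1 :: w2) := heq
    have hlen1 : (1 :: w1).length = N := by simp only [List.length_cons, hl1, hN]
    have hlen2 : (1 :: w2).length = N := by simp only [List.length_cons, hl2, hN]
    have hvlen : v.length = N := by rw [hv, rot_length, hlen1]
    have hvsum : v.sum = 1 := by
      rw [hv, rot_sum]
      simp [hd1.2.2]
    have hr1 : rot (N - k1) v = 1 :: w1 := by
      rw [hv, ← hlen1]; exact rot_rot (by omega)
    have hr2 : rot (N - k2) v = 1 :: w2 := by
      rw [hv2, ← hlen2]; exact rot_rot (by omega)
    have hNpos : 0 < N := by omega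
    set j1 := if k1 = 0 then 0 else N - k1 with hj1
    set j2 := if k2 = 0 then 0 else N - k2 with hj2
    have hrj1 : rot j1 v = 1 :: w1 := by
      rcases eq_or_ne k1 0 with rfl | h
      · rw [hj1, if_pos rfl, rot_zero, ← hr1]
        simp only [Nat.sub_zero, ← hvlen, rot_self]
      · rw [hj1, if_neg h]; exact hr1
    have hrj2 : rot j2 v = 1 :: w2 := by
      rcases eq_or_ne k2 0 with rfl | h
      · rw [hj2, if_pos rfl, rot_zero, ← hr2]
        simp only [Nat.sub_zero, ← hvlen, rot_self]
      · rw [hj2, if_neg h]; exact hr2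
    have hp1' : Pos (rot j1 v) := by rw [hrj1]; exact pos_cons hd1.2.1
    have hp2' : Pos (rot j2 v) := by rw [hrj2]; exact pos_cons hd2.2.1
    have hj1lt : j1 < v.length := by rw [hvlen, hj1]; split <;> omega
    have hj2lt : j2 < v.length := by rw [hvlen, hj2]; split <;> omega
    have hjeq : j1 = j2 := pos_rot_unique hvsum hj1lt hj2lt hp1' hp2'
    have hkeq : k1 = k2 := by
      rw [hj1, hj2] at hjeq
      rcases eq_or_ne k1 0 with rfl | h <;> rcases eq_or_ne k2 0 with rfl | h' <;>
        simp_all <;> omega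
    subst hkeq
    have : (1 : ℤ) :: w1 = 1 :: w2 := by rw [← hr1, ← hr2]
    simp only [List.cons.injEq] at this
    exact Prod.ext this.2 rfl
  · intro v hv
    obtain ⟨hvl, hvok, hvsum⟩ := mem_Sn hv
    obtain ⟨k, hk, hkpos⟩ := exists_pos_rot (by omega) hvsum
    rw [hvl] at hk
    obtain ⟨w, hw, hwd⟩ := cons_of_pos (rot_ok hvok) (by rw [rot_sum, hvsum])
      (by rw [rot_length]; omega) hkpos
    have hwl : w.length = 3 * n := by
      have : (rot k v).length = N := by rw [rot_length, hvl]
      rw [hw] at this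
      simp at this
      omega
    refine ⟨⟨w, (N - k) % N⟩, ?_, ?_⟩
    · simp only [Finset.mem_product, mem_Dn, Finset.mem_range]
      exact ⟨⟨hwd, hwl⟩, Nat.mod_lt _ (by omega)⟩
    · show rot ((N - k) % N) (1 :: w) = v
      rcases eq_or_ne k 0 with rfl | h
      · rw [Nat.sub_zero, Nat.mod_self, rot_zero, ← hw, rot_zero]
      · rw [Nat.mod_eq_of_lt (by omega), ← hw]
        have hNv : N = v.length := by omega
        rw [hNv]
        exact rot_rot (by omega)
    
end Dyck2Aux

open Dyck2Aux in
/-- The number of 2-Dyck paths of length `3n` is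
`(1/(2n+1)) * choose (3n) n`, stated multiplicatively. -/
theorem card_dyck2Paths (n : ℕ) :
    (2 * n + 1) * Set.ncard {w : List ℤ | IsDyck2Path w ∧ w.length = 3 * n} =
      Nat.choose (3 * n) n := by
  have hset : {w : List ℤ | IsDyck2Path w ∧ w.length = 3 * n} = ↑(Dn n) := by
    ext w
    simp [mem_Dn]
  rw [hset, Set.ncard_coe_finset]
  have h1 := card_eq n
  have key : (3 * n + 1) * Nat.choose (3 * n) n = Nat.choose (3 * n + 1) n * (2 * n + 1) := by
    have h := Nat.add_one_mul_choose_eq (3 * n) (2 * n)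
    have e1 : (3 * n).choose (2 * n) = (3 * n).choose n := by
      rw [← Nat.choose_symm (by omega : n ≤ 3 * n)]
      congr 1
      omega
    have e2 : (3 * n + 1).choose (2 * n + 1) = (3 * n + 1).choose n := by
      rw [← Nat.choose_symm (by omega : n ≤ 3 * n + 1)]
      congr 1
      omega
    rw [e1] at h
    rw [← e2]
    exact h
  apply Nat.eq_of_mul_eq_mul_left (show 0 < 3 * n + 1 by omega)
  calc (3 * n + 1) * ((2 * n + 1) * (Dn n).card)
      = ((Dn n).card * (3 * n + 1)) * (2 * n + 1) := by ring
    _ = Nat.choose (3 * n + 1) n * (2 * n + 1) := by rw [h1]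
    _ = (3 * n + 1) * Nat.choose (3 * n) n := key.symm
end

section
/- The number of 2-Dyck paths of length 3n, viewed as the sequence C with C(0) = 1 and the Fuss-Catalan recurrence, satisfies C(n) = ∑_{i+j+k=n-1} C(i)·C(j)·C(k) for n ≥ 1. -/
/-- `numDyck2 n` is the number of 2-Dyck paths of length `3n`. -/
noncomputable def numDyck2 (n : ℕ) : ℕ :=
  Set.ncard {w : List ℤ | IsDyck2Path w ∧ w.length = 3 * n}

/-!
A nonempty 2-Dyck path ends with a down-step; cutting it there and at its last visits to
heights `0` and `1` writes it uniquely as `a U b U c D` with `a`, `b`, `c` 2-Dyck paths, and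
conversely every such word is a 2-Dyck path. Since each 2-Dyck path has length divisible
by `3`, this gluing is a bijection from triples of paths of lengths `3i, 3j, 3k` with
`i + j + k = n - 1` onto the paths of length `3n`.
-/

theorem List.finite_length_eq_forall_mem {α : Type*} {s : Set α} (hs : s.Finite) (n : ℕ) :
    {l : List α | l.length = n ∧ ∀ x ∈ l, x ∈ s}.Finite := by
  have := hs.to_subtype
  refine ((List.finite_length_eq s n).image (List.map Subtype.val)).subset ?_
  rintro l ⟨hl, hmem⟩
  exact ⟨l.attachWith _ hmem, by simpa using hl, List.attachWith_map_subtype_val hmem⟩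

namespace Dyck2

def NonnegFrom (h : ℤ) (w : List ℤ) : Prop :=
  ∀ j, 0 ≤ h + (w.take j).sum

section NonnegFrom

variable {h h' x : ℤ} {w a b : List ℤ}

theorem NonnegFrom.nonneg (hw : NonnegFrom h w) : 0 ≤ h := by
  simpa using hw 0

theorem NonnegFrom.add_sum_nonneg (hw : NonnegFrom h w) : 0 ≤ h + w.sum := by
  simpa using hw w.length

theorem NonnegFrom.mono (hw : NonnegFrom h w) (hh : h ≤ h') : NonnegFrom h' w :=
  fun j => (hw j).trans (by linarith)

@[simp]
theorem nonnegFrom_nil : NonnegFrom h [] ↔ 0 ≤ h := by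
  simp [NonnegFrom]

@[simp]
theorem nonnegFrom_cons : NonnegFrom h (x :: w) ↔ 0 ≤ h ∧ NonnegFrom (h + x) w := by
  refine ⟨fun hw => ⟨hw.nonneg, fun j => by simpa [add_assoc] using hw (j + 1)⟩, ?_⟩
  rintro ⟨hh, hw⟩ (_ | j)
  · simpa using hh
  · simpa [add_assoc] using hw j

@[simp]
theorem nonnegFrom_append :
    NonnegFrom h (a ++ b) ↔ NonnegFrom h a ∧ NonnegFrom (h + a.sum) b := by
  induction a generalizing h with
  | nil => simpa using fun hb : NonnegFrom h b => hb.nonneg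
  | cons x a ih => simp [ih, add_assoc, and_assoc]

end NonnegFrom

/-- If `a'` were longer than `a`, it would be `a ++ x :: m` with `m` a proper prefix of `r`,
so `a'.sum ≥ a.sum + x`. -/
theorem eq_of_append_cons_eq {a a' r r' : List ℤ} {x : ℤ} (hx : 0 < x) (hsum : a.sum = a'.sum)
    (hr : NonnegFrom 0 r) (hr' : NonnegFrom 0 r') (h : a ++ x :: r = a' ++ x :: r') :
    a = a' ∧ r = r' := by
  rcases List.append_eq_append_iff.mp h with ⟨_ | ⟨y, m⟩, rfl, hm⟩ | ⟨_ | ⟨y, m⟩, rfl, hm⟩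
  · simpa using hm
  · obtain ⟨rfl, rfl⟩ := List.cons.inj hm
    have := (nonnegFrom_append.mp hr).2.nonneg
    simp only [List.sum_append, List.sum_cons] at hsum
    linarith
  · simpa using hm.symm
  · obtain ⟨rfl, rfl⟩ := List.cons.inj hm
    have := (nonnegFrom_append.mp hr').2.nonneg
    simp only [List.sum_append, List.sum_cons] at hsum
    linarith

/-- Cut `v` at its last visit to height `0`. -/
theorem exists_eq_append_one_cons {v : List ℤ} (hstep : ∀ x ∈ v, x = 1 ∨ x = -2)
    (hv : NonnegFrom 0 v) (hpos : 0 < v.sum) :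
    ∃ a b, v = a ++ 1 :: b ∧ a.sum = 0 ∧ NonnegFrom 0 b := by
  induction v using List.reverseRecOn with
  | nil => simp at hpos
  | append_singleton v x ih =>
    simp only [List.forall_mem_append, List.forall_mem_singleton] at hstep
    simp only [nonnegFrom_append, nonnegFrom_cons, nonnegFrom_nil, zero_add] at hv
    simp only [List.sum_append, List.sum_singleton] at hpos
    rcases hv.1.add_sum_nonneg.eq_or_lt with hv0 | hv0
    · have hx : x = 1 := by have := hstep.2; omega
      exact ⟨v, [], by simp [hx], by simpa using hv0.symm, by simp⟩
    · obtain ⟨a, b, rfl, ha, hb⟩ := ih hstep.1 hv.1 (by simpa using hv0)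
      refine ⟨a, b ++ [x], by simp, ha, ?_⟩
      simp only [List.sum_append, List.sum_cons, ha] at hpos
      have hbx : 0 ≤ b.sum + x := by linarith
      simpa using ⟨hb, by simpa using hb.add_sum_nonneg, hbx⟩

theorem three_dvd_length_sub_sum {w : List ℤ} (hstep : ∀ x ∈ w, x = 1 ∨ x = -2) :
    (3 : ℤ) ∣ w.length - w.sum := by
  induction w with
  | nil => simp
  | cons x w ih =>
    simp only [List.forall_mem_cons] at hstep
    obtain ⟨k, hk⟩ := ih hstep.2
    simp only [List.length_cons, List.sum_cons, Nat.cast_add, Nat.cast_one]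
    rcases hstep.1 with rfl | rfl
    · exact ⟨k, by linarith⟩
    · exact ⟨k + 1, by linarith⟩

def glue (a b c : List ℤ) : List ℤ :=
  a ++ 1 :: (b ++ 1 :: c) ++ [-2]

@[simp]
theorem length_glue (a b c : List ℤ) :
    (glue a b c).length = a.length + b.length + c.length + 3 := by
  simp [glue]
  omega

end Dyck2

open Dyck2

theorem isDyck2Path_iff {w : List ℤ} :
    IsDyck2Path w ↔ (∀ x ∈ w, x = 1 ∨ x = -2) ∧ NonnegFrom 0 w ∧ w.sum = 0 := by
  simp [IsDyck2Path, NonnegFrom]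

theorem isDyck2Path_glue {a b c : List ℤ} (ha : IsDyck2Path a) (hb : IsDyck2Path b) (hc : IsDyck2Path c) :
    IsDyck2Path (glue a b c) := by
  rw [isDyck2Path_iff] at ha hb hc ⊢
  refine ⟨?_, ?_, by simp [glue, ha.2.2, hb.2.2, hc.2.2]⟩
  · simp only [glue, List.forall_mem_append, List.forall_mem_cons]
    exact ⟨⟨ha.1, by norm_num, hb.1, by norm_num, hc.1⟩, by norm_num⟩
  · simpa [glue, ha.2.2, hb.2.2, hc.2.2, ha.2.1] using
      ⟨hb.2.1.mono zero_le_one, hc.2.1.mono zero_le_two⟩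

namespace IsDyck2Path

variable {w a b c a' b' c' : List ℤ}

theorem nonnegFrom (hw : IsDyck2Path w) : NonnegFrom 0 w :=
  (isDyck2Path_iff.mp hw).2.1

theorem three_dvd_length (hw : IsDyck2Path w) : 3 ∣ w.length := by
  have := three_dvd_length_sub_sum hw.1
  rw [hw.2.2, sub_zero] at this
  exact_mod_cast this

theorem nonnegFrom_append_one_cons (hb : IsDyck2Path b) (hc : IsDyck2Path c) :
    NonnegFrom 0 (b ++ 1 :: c) := by
  simpa [hb.2.2, hb.nonnegFrom] using hc.nonnegFrom.mono zero_le_one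

theorem glue_inj (ha : IsDyck2Path a) (hb : IsDyck2Path b) (hc : IsDyck2Path c)
    (ha' : IsDyck2Path a') (hb' : IsDyck2Path b') (hc' : IsDyck2Path c')
    (h : glue a b c = glue a' b' c') : a = a' ∧ b = b' ∧ c = c' := by
  obtain ⟨rfl, hbc⟩ := eq_of_append_cons_eq one_pos (ha.2.2.trans ha'.2.2.symm)
    (nonnegFrom_append_one_cons hb hc) (nonnegFrom_append_one_cons hb' hc')
    (List.append_cancel_right h)
  obtain ⟨rfl, rfl⟩ := eq_of_append_cons_eq one_pos (hb.2.2.trans hb'.2.2.symm)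
    hc.nonnegFrom hc'.nonnegFrom hbc
  exact ⟨rfl, rfl, rfl⟩

theorem exists_eq_glue (hw : IsDyck2Path w) (hne : w ≠ []) :
    ∃ a b c, IsDyck2Path a ∧ IsDyck2Path b ∧ IsDyck2Path c ∧ w = glue a b c := by
  obtain ⟨v, y, rfl⟩ := (List.eq_nil_or_concat' w).resolve_left hne
  obtain ⟨hstep, hnonneg, hsum⟩ := isDyck2Path_iff.mp hw
  have hstep_v : ∀ x ∈ v, x = 1 ∨ x = -2 := fun x hx => hstep x (by simp [hx])
  have hv : NonnegFrom 0 v := (nonnegFrom_append.mp hnonneg).1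
  have hy : y = -2 := by
    have := hv.add_sum_nonneg
    have := hstep y (by simp)
    simp only [List.sum_append, List.sum_singleton] at hsum
    omega
  subst hy
  simp only [List.sum_append, List.sum_singleton] at hsum
  obtain ⟨a, r, rfl, ha, hr⟩ := exists_eq_append_one_cons hstep_v hv (by omega)
  simp only [List.sum_append, List.sum_cons] at hsum
  obtain ⟨b, c, rfl, hb, hc⟩ :=
    exists_eq_append_one_cons (fun x hx => hstep_v x (by simp [hx])) hr (by omega)
  simp only [List.sum_append, List.sum_cons] at hsum
  simp only [List.forall_mem_append, List.forall_mem_cons] at hstep_v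
  obtain ⟨hstep_a, -, hstep_b, -, hstep_c⟩ := hstep_v
  exact ⟨a, b, c, isDyck2Path_iff.mpr ⟨hstep_a, (nonnegFrom_append.mp hv).1, ha⟩,
    isDyck2Path_iff.mpr ⟨hstep_b, (nonnegFrom_append.mp hr).1, hb⟩,
    isDyck2Path_iff.mpr ⟨hstep_c, hc, by omega⟩, rfl⟩

end IsDyck2Path

theorem setOf_isDyck2Path_length_eq_finite (L : ℕ) :
    {w : List ℤ | IsDyck2Path w ∧ w.length = L}.Finite :=
  (List.finite_length_eq_forall_mem (Set.toFinite {1, -2}) L).subset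
    fun _ ⟨hw, hL⟩ => ⟨hL, hw.1⟩

noncomputable def dyck2Paths (n : ℕ) : Finset (List ℤ) :=
  (setOf_isDyck2Path_length_eq_finite (3 * n)).toFinset

theorem mem_dyck2Paths {w : List ℤ} {n : ℕ} :
    w ∈ dyck2Paths n ↔ IsDyck2Path w ∧ w.length = 3 * n := by
  simp [dyck2Paths]

theorem numDyck2_eq_card (n : ℕ) : numDyck2 n = (dyck2Paths n).card :=
  Set.ncard_eq_toFinset_card _ _

theorem numDyck2_zero : numDyck2 0 = 1 := by
  rw [numDyck2_eq_card, Finset.card_eq_one]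
  refine ⟨[], Finset.ext fun w => ?_⟩
  simp only [mem_dyck2Paths, Finset.mem_singleton, mul_zero, List.length_eq_zero_iff]
  exact ⟨And.right, fun h => ⟨h ▸ isDyck2Path_iff.mpr (by simp), h⟩⟩

section Counting

open Finset

/-- Triples of 2-Dyck paths of lengths `3i, 3j, 3k`, tagged by `(i, j + k) ∈ antidiagonal m` and
`(j, k) ∈ antidiagonal (j + k)` so that their number is the double sum of the recurrence. -/
noncomputable def dyck2Triples (m : ℕ) :
    Finset (Σ _ : ℕ × ℕ, Σ _ : ℕ × ℕ, List ℤ × List ℤ × List ℤ) :=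
  (antidiagonal m).sigma fun p => (antidiagonal p.2).sigma fun q =>
    dyck2Paths p.1 ×ˢ dyck2Paths q.1 ×ˢ dyck2Paths q.2

theorem mem_dyck2Triples {m i jk j k : ℕ} {a b c : List ℤ} :
    ⟨(i, jk), (j, k), a, b, c⟩ ∈ dyck2Triples m ↔ i + jk = m ∧ j + k = jk ∧
      (IsDyck2Path a ∧ a.length = 3 * i) ∧ (IsDyck2Path b ∧ b.length = 3 * j) ∧
        (IsDyck2Path c ∧ c.length = 3 * k) := by
  simp [dyck2Triples, mem_dyck2Paths]

theorem card_dyck2Triples (m : ℕ) : (dyck2Triples m).card = ∑ p ∈ antidiagonal m,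
    ∑ q ∈ antidiagonal p.2, numDyck2 p.1 * numDyck2 q.1 * numDyck2 q.2 := by
  simp only [dyck2Triples, numDyck2_eq_card, card_sigma, card_product, mul_assoc]

theorem card_dyck2Paths_succ (m : ℕ) :
    (dyck2Paths (m + 1)).card = (dyck2Triples m).card := by
  symm
  refine card_bij (fun x _ => glue x.2.2.1 x.2.2.2.1 x.2.2.2.2) ?_ ?_ ?_
  · rintro ⟨⟨i, jk⟩, ⟨j, k⟩, a, b, c⟩ hx
    obtain ⟨rfl, rfl, ⟨ha, hi⟩, ⟨hb, hj⟩, hc, hk⟩ := mem_dyck2Triples.mp hx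
    simp only [mem_dyck2Paths, length_glue]
    exact ⟨isDyck2Path_glue ha hb hc, by omega⟩
  · rintro ⟨⟨i, jk⟩, ⟨j, k⟩, a, b, c⟩ hx ⟨⟨i', jk'⟩, ⟨j', k'⟩, a', b', c'⟩ hx' h
    obtain ⟨rfl, rfl, ⟨ha, hi⟩, ⟨hb, hj⟩, hc, hk⟩ := mem_dyck2Triples.mp hx
    obtain ⟨hm, rfl, ⟨ha', hi'⟩, ⟨hb', hj'⟩, hc', hk'⟩ := mem_dyck2Triples.mp hx'
    obtain ⟨rfl, rfl, rfl⟩ := ha.glue_inj hb hc ha' hb' hc' h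
    obtain ⟨rfl, rfl, rfl⟩ : i = i' ∧ j = j' ∧ k = k' := by omega
    rfl
  · intro w hw
    obtain ⟨hw, hlen⟩ := mem_dyck2Paths.mp hw
    obtain ⟨a, b, c, ha, hb, hc, rfl⟩ := hw.exists_eq_glue (by rintro rfl; simp at hlen)
    obtain ⟨i, hi⟩ := ha.three_dvd_length
    obtain ⟨j, hj⟩ := hb.three_dvd_length
    obtain ⟨k, hk⟩ := hc.three_dvd_length
    have hijk : i + (j + k) = m := by rw [length_glue] at hlen; omega
    exact ⟨⟨(i, j + k), (j, k), a, b, c⟩,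
      mem_dyck2Triples.mpr ⟨hijk, rfl, ⟨ha, hi⟩, ⟨hb, hj⟩, hc, hk⟩, rfl⟩

end Counting

/-- The number of 2-Dyck paths of length `3n` satisfies the Fuss-Catalan
recurrence `C(n) = ∑_{i+j+k=n-1} C(i)·C(j)·C(k)` for `n ≥ 1`, with `C(0) = 1`. -/
theorem numDyck2_recurrence :
    numDyck2 0 = 1 ∧
    ∀ n, 1 ≤ n →
      numDyck2 n = ∑ p ∈ Finset.HasAntidiagonal.antidiagonal (n - 1), ∑ q ∈ Finset.HasAntidiagonal.antidiagonal p.2,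
        numDyck2 p.1 * numDyck2 q.1 * numDyck2 q.2 := by
  refine ⟨numDyck2_zero, fun n hn => ?_⟩
  obtain ⟨m, rfl⟩ := Nat.exists_eq_add_of_le' hn
  rw [numDyck2_eq_card, card_dyck2Paths_succ, card_dyck2Triples]
  rfl
end

section
/- Every nonempty non-crossing spanning tree T on vertices {0,1,…,n} decomposes uniquely into a triple of non-crossing trees (T_A, T_B, T_C): letting t be the largest index with edge (0,t) in T, and s the largest index such that after removing (0,t), the vertices {0,…,s} form a connected subtree but {0,…,s+1} do not, then T_A is the subtree on {0,…,s}, T_B the subtree on {s+1,…,t}, and T_C the subtree on {t,…,n}, and the edge counts of T_A, T_B, T_C sum to n-1. -/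
/-- Two vertices are adjacent if they form an edge of `E` (in either order). -/
def NCAdj (E : Finset (ℕ × ℕ)) (x y : ℕ) : Prop := (x, y) ∈ E ∨ (y, x) ∈ E

/-- Connectivity via edges of `E`. -/
def NCConn (E : Finset (ℕ × ℕ)) (x y : ℕ) : Prop :=
  Relation.ReflTransGen (NCAdj E) x y

/-- A non-crossing spanning tree on the points `0, 1, …, n`: a set of `n` edges
`(a,b)` with `a < b ≤ n`, no two of which cross (`a < c < b < d`), connecting
all of `{0,…,n}`. -/
def IsNCST (n : ℕ) (E : Finset (ℕ × ℕ)) : Prop :=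
  E.card = n ∧ (∀ e ∈ E, e.1 < e.2 ∧ e.2 ≤ n) ∧
  (∀ a b c d : ℕ, (a, b) ∈ E → (c, d) ∈ E → a < c → c < b → b < d → False) ∧
  (∀ x, x ≤ n → NCConn E 0 x)

lemma ncadj_symm {F : Finset (ℕ × ℕ)} {x y : ℕ} (h : NCAdj F x y) : NCAdj F y x := h.symm

lemma ncconn_symm {F : Finset (ℕ × ℕ)} {x y : ℕ} (h : NCConn F x y) : NCConn F y x := by
  induction h with
  | refl => exact .refl
  | tail _ adj ih => exact Relation.ReflTransGen.head (ncadj_symm adj) ih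

lemma ncconn_mono {F G : Finset (ℕ × ℕ)} (hFG : F ⊆ G) {x y : ℕ} (h : NCConn F x y) :
    NCConn G x y :=
  Relation.ReflTransGen.lift (p := NCAdj G) id
    (fun a b (hab : NCAdj F a b) => Or.imp (@hFG _) (@hFG _) hab) x y h

def reachN (F : Finset (ℕ × ℕ)) : ℕ → ℕ → Prop
  | 0, x => x = 0
  | k+1, x => ∃ z, reachN F k z ∧ NCAdj F z x

lemma exists_reachN {F : Finset (ℕ × ℕ)} {x : ℕ} (h : NCConn F 0 x) : ∃ k, reachN F k x := by
  induction h with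
  | refl => exact ⟨0, rfl⟩
  | tail _ adj ih => obtain ⟨k, hk⟩ := ih; exact ⟨k+1, _, hk, adj⟩

lemma ncst_card_lemma (F : Finset (ℕ × ℕ)) (S : Finset ℕ)
    (h : ∀ x ∈ S, NCConn F 0 x) : S.card ≤ F.card + 1 := by
  classical
  set d : ℕ → ℕ := fun x => sInf {k | reachN F k x} with hd
  have hdx : ∀ x ∈ S, reachN F (d x) x := fun x hx => Nat.sInf_mem (exists_reachN (h x hx))
  have key : ∀ x : ℕ, ∃ e : ℕ × ℕ,
      x ∈ S.erase 0 → e ∈ F ∧ ∃ z, ((z, x) = e ∨ (x, z) = e) ∧ d z < d x := by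
    intro x
    by_cases hx : x ∈ S.erase 0
    · obtain ⟨hx0, hxS⟩ := Finset.mem_erase.mp hx
      have h1 := hdx x hxS
      have hd0 : d x ≠ 0 := fun h0 => hx0 (by rw [h0] at h1; exact h1)
      obtain ⟨k, hk⟩ : ∃ k, d x = k + 1 := ⟨d x - 1, by omega⟩
      rw [hk] at h1
      obtain ⟨z, hz, hadj⟩ := h1
      have hdz : d z ≤ k := Nat.sInf_le hz
      rcases hadj with he | he
      · exact ⟨(z, x), fun _ => ⟨he, z, Or.inl rfl, by omega⟩⟩
      · exact ⟨(x, z), fun _ => ⟨he, z, Or.inr rfl, by omega⟩⟩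
    · exact ⟨(0, 0), fun h' => absurd h' hx⟩
  choose f hf using key
  have h2 : (S.erase 0).card ≤ F.card := by
    apply Finset.card_le_card_of_injOn f (fun x hx => (hf x hx).1)
    intro x hx y hy hxy
    obtain ⟨z, hz1, hz2⟩ := (hf x (Finset.mem_coe.mp hx)).2
    obtain ⟨w, hw1, hw2⟩ := (hf y (Finset.mem_coe.mp hy)).2
    rw [hxy] at hz1
    rcases hz1 with h1 | h1 <;> rcases hw1 with h1' | h1' <;> rw [← h1'] at h1 <;>
      obtain ⟨e1, e2⟩ := Prod.ext_iff.mp h1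
    · exact e2
    · have q1 : d x < d y := by rw [show x = w from e2]; exact hw2
      have q2 : d y < d x := by rw [show z = y from e1] at hz2; exact hz2
      exact absurd (q1.trans q2) (lt_irrefl _)
    · have q1 : d x < d y := by rw [show x = w from e1]; exact hw2
      have q2 : d y < d x := by rw [show z = y from e2] at hz2; exact hz2
      exact absurd (q1.trans q2) (lt_irrefl _)
    · exact e1
  by_cases h0 : (0 : ℕ) ∈ S
  · have := Finset.card_erase_add_one h0
    omega
  · rw [Finset.erase_eq_of_notMem h0] at h2
    omega

lemma ncst_cross (F : Finset (ℕ × ℕ)) (hF : ∀ e ∈ F, e.1 < e.2) {a b : ℕ} (g : ℕ)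
    (h : Relation.ReflTransGen (NCAdj F) a b) (hb : g < b) (ha : a ≤ g) :
    ∃ u v, (u, v) ∈ F ∧ u ≤ g ∧ g < v ∧ NCConn F a u ∧ NCConn F a v := by
  revert ha
  induction h using Relation.ReflTransGen.head_induction_on with
  | refl => intro ha; exact absurd ha (by omega)
  | @head a' c adj h' ih =>
    intro ha
    by_cases hc : c ≤ g
    · obtain ⟨u, v, h1, h2, h3, h4, h5⟩ := ih hc
      exact ⟨u, v, h1, h2, h3, Relation.ReflTransGen.head adj h4,
        Relation.ReflTransGen.head adj h5⟩
    · rcases adj with he | he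
      · exact ⟨a', c, he, ha, by omega, .refl, Relation.ReflTransGen.single (Or.inl he)⟩
      · exact absurd (hF _ he) (by simp; omega)

/-- Every nonempty non-crossing spanning tree on `{0,…,n}` decomposes uniquely:
there is a unique pair `(t, s)` where `t` is the largest index with `(0,t)` an
edge, and `s` is such that after removing `(0,t)` the vertices `{0,…,s}` form a
connected subtree but `{0,…,s+1}` do not; moreover the numbers of edges of the
three subtrees on `[0,s]`, `[s+1,t]` and `[t,n]` sum to `n - 1`. -/
theorem ncst_unique_decomposition (n : ℕ) (hn : 1 ≤ n) (E : Finset (ℕ × ℕ))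
    (hE : IsNCST n E) :
    ∃! ts : ℕ × ℕ,
      IsGreatest {u | (0, u) ∈ E} ts.1 ∧
      ts.2 + 1 ≤ ts.1 ∧
      (∀ x ≤ ts.2,
        NCConn ((E.erase (0, ts.1)).filter fun e => e.2 ≤ ts.2) 0 x) ∧
      ¬ (∀ x ≤ ts.2 + 1,
        NCConn ((E.erase (0, ts.1)).filter fun e => e.2 ≤ ts.2 + 1) 0 x) ∧
      (E.filter fun e => e.2 ≤ ts.2).card +
        (E.filter fun e => ts.2 + 1 ≤ e.1 ∧ e.2 ≤ ts.1).card +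
        (E.filter fun e => ts.1 ≤ e.1).card = n - 1 := by
  classical
  obtain ⟨hcard, hlt, hcross, hconn⟩ := hE
  -- an edge out of 0 exists
  have hedge0 : ∃ u, (0, u) ∈ E := by
    have h1 : NCConn E 0 1 := hconn 1 hn
    rcases Relation.ReflTransGen.cases_head h1 with heq | ⟨c, hadj, _⟩
    · exact absurd heq (by norm_num)
    · rcases hadj with h | h
      · exact ⟨c, h⟩
      · have := (hlt _ h).1; simp at this
  -- t : the largest neighbour of 0
  set N : Finset ℕ := (E.filter (fun e => e.1 = 0)).image Prod.snd with hN
  have hNne : N.Nonempty := by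
    obtain ⟨u, hu⟩ := hedge0
    exact ⟨u, Finset.mem_image.mpr ⟨(0, u), Finset.mem_filter.mpr ⟨hu, rfl⟩, rfl⟩⟩
  set t : ℕ := N.max' hNne with htdef
  have ht0 : (0, t) ∈ E := by
    obtain ⟨e, he, he2⟩ := Finset.mem_image.mp (N.max'_mem hNne)
    obtain ⟨heE, he1⟩ := Finset.mem_filter.mp he
    have : e = (0, t) := by
      cases e; simp_all
    rwa [this] at heE
  have htmax : ∀ u, (0, u) ∈ E → u ≤ t :=
    fun u hu => N.le_max' u (Finset.mem_image.mpr ⟨(0, u), Finset.mem_filter.mpr ⟨hu, rfl⟩, rfl⟩)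
  have hgt : IsGreatest {u | (0, u) ∈ E} t := ⟨ht0, fun u hu => htmax u hu⟩
  have htpos : 0 < t := (hlt _ ht0).1
  have htn : t ≤ n := (hlt _ ht0).2
  set D : Finset (ℕ × ℕ) := E.erase (0, t) with hDdef
  have hDsub : D ⊆ E := Finset.erase_subset _ _
  have hDlt : ∀ e ∈ D, e.1 < e.2 := fun e he => (hlt e (hDsub he)).1
  have hDcard : D.card = n - 1 := by rw [hDdef, Finset.card_erase_of_mem ht0, hcard]
  -- no edge strictly crosses t
  have hF2 : ∀ a b, (a, b) ∈ E → a < t → t < b → False := by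
    intro a b hab ha hb
    rcases Nat.eq_zero_or_pos a with rfl | hapos
    · exact absurd (htmax b hab) (by omega)
    · exact hcross 0 t a b ht0 hab hapos ha hb
  -- dichotomy: every vertex connects in D to 0 or to t
  have hdich : ∀ z, NCConn E 0 z → NCConn D 0 z ∨ NCConn D t z := by
    intro z hz
    induction hz with
    | refl => exact Or.inl .refl
    | tail h adj ih =>
      rename_i b c
      rcases adj with he | he
      · by_cases hbc : (b, c) = (0, t)
        · have : c = t := (Prod.ext_iff.mp hbc).2
          exact Or.inr (this ▸ Relation.ReflTransGen.refl)
        · have hD : (b, c) ∈ D := Finset.mem_erase.mpr ⟨hbc, he⟩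
          rcases ih with h' | h'
          · exact Or.inl (h'.tail (Or.inl hD))
          · exact Or.inr (h'.tail (Or.inl hD))
      · by_cases hbc : (c, b) = (0, t)
        · have : c = 0 := (Prod.ext_iff.mp hbc).1
          exact Or.inl (this ▸ Relation.ReflTransGen.refl)
        · have hD : (c, b) ∈ D := Finset.mem_erase.mpr ⟨hbc, he⟩
          rcases ih with h' | h'
          · exact Or.inl (h'.tail (Or.inr hD))
          · exact Or.inr (h'.tail (Or.inr hD))
  -- removing (0,t) disconnects t from 0
  have hF3 : ¬ NCConn D 0 t := by
    intro ht
    have hall : ∀ z ∈ Finset.range (n + 1), NCConn D 0 z := by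
      intro z hz
      rcases hdich z (hconn z (by simpa using Nat.lt_succ_iff.mp (Finset.mem_range.mp hz))) with
        h | h
      · exact h
      · exact ht.trans h
    have hcl := ncst_card_lemma D _ hall
    rw [Finset.card_range, hDcard] at hcl
    omega
  -- m : least vertex not connected to 0 in D
  set m : ℕ := sInf {z | ¬ NCConn D 0 z} with hmdef
  have hRm : ¬ NCConn D 0 m := by
    have := Nat.sInf_mem (⟨t, hF3⟩ : {z | ¬ NCConn D 0 z}.Nonempty)
    exact this
  have hmt : m ≤ t := Nat.sInf_le (show t ∈ {z | ¬ NCConn D 0 z} from hF3)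
  have hRlt : ∀ z, z < m → NCConn D 0 z := fun z hz =>
    not_not.mp (Nat.notMem_of_lt_sInf (s := {z | ¬ NCConn D 0 z}) hz)
  have hm1 : 1 ≤ m := by
    rcases Nat.eq_zero_or_pos m with h0 | h0
    · exact absurd (h0 ▸ Relation.ReflTransGen.refl) hRm
    · exact h0
  -- key structural fact: the component of 0 in D is exactly [0, m)
  have hF4 : ∀ x, NCConn D 0 x → x < m := by
    intro x hx
    by_contra hge
    have hxm : m < x := by
      rcases Nat.lt_or_ge x m with h | h
      · exact absurd h hge
      · rcases Nat.eq_or_lt_of_le h with h' | h'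
        · exact absurd (h' ▸ hx) hRm
        · exact h'
    obtain ⟨u, v, huv, hug, hgv, h0u, h0v⟩ :=
      ncst_cross D hDlt (m - 1) hx (by omega) (by omega)
    have hum : u < m := by omega
    have hvne : v ≠ m := fun h => hRm (h ▸ h0v)
    have hvm : m < v := by omega
    have hvt : v < t := by
      rcases lt_trichotomy v t with h | h | h
      · exact h
      · exact absurd (h ▸ h0v) hF3
      · exact absurd (hF2 u v (hDsub huv) (by omega) h) not_false
    have hmtconn : NCConn D m t := by
      rcases hdich m (hconn m (by omega)) with h | h
      · exact absurd h hRm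
      · exact ncconn_symm h
    obtain ⟨p, q, hpq, hpv, hvq, hmp, hmq⟩ := ncst_cross D hDlt v hmtconn hvt (by omega)
    have hpR : ¬ NCConn D 0 p := fun h => hRm (h.trans (ncconn_symm hmp))
    have hpu : p ≠ u := fun h => hpR (h ▸ h0u)
    have hplv : p < v := by
      rcases Nat.eq_or_lt_of_le hpv with h | h
      · exact absurd (h ▸ h0v) hpR
      · exact h
    rcases lt_or_gt_of_ne hpu with h | h
    · exact hpR (hRlt p (by omega))
    · exact hcross u v p q (hDsub huv) (hDsub hpq) h hplv hvq
  have hms : m - 1 + 1 = m := by omega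
  -- the three category sets partition E.erase (0,t)
  have hpart : ∀ a b : ℕ, (a, b) ∈ E → (a, b) ≠ (0, t) →
      (b ≤ m - 1) ∨ (m - 1 + 1 ≤ a ∧ b ≤ t) ∨ (t ≤ a) := by
    intro a b hab hne
    have hab' : a < b := (hlt _ hab).1
    by_cases hbt : b ≤ t
    · have hD : (a, b) ∈ D := Finset.mem_erase.mpr ⟨hne, hab⟩
      by_cases hRa : NCConn D 0 a
      · have hRb : NCConn D 0 b := hRa.tail (Or.inl hD)
        have := hF4 b hRb
        exact Or.inl (by omega)
      · have ham : m ≤ a := by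
          by_contra h
          exact hRa (hRlt a (by omega))
        exact Or.inr (Or.inl ⟨by omega, hbt⟩)
    · right; right
      by_contra h
      exact hF2 a b hab (by omega) (by omega)
  refine ⟨(t, m - 1), ⟨hgt, by simpa using by omega, ?_, ?_, ?_⟩, ?_⟩
  · -- condition 3
    intro x hx
    have hxR : NCConn D 0 x := hRlt x (by simp at hx; omega)
    simp only
    clear hx
    induction hxR with
    | refl => exact .refl
    | tail h adj ih =>
      rename_i b c
      have hb : b < m := hF4 _ h
      have hc : c < m := hF4 _ (h.tail adj)
      refine ih.tail ?_
      rcases adj with he | he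
      · exact Or.inl (Finset.mem_filter.mpr ⟨he, show c ≤ m - 1 by omega⟩)
      · exact Or.inr (Finset.mem_filter.mpr ⟨he, show b ≤ m - 1 by omega⟩)
  · -- condition 4
    intro hAll
    have := hAll m (by simp; omega)
    have hm' : NCConn D 0 m := ncconn_mono (Finset.filter_subset _ _) this
    exact hRm hm'
  · -- condition 5
    simp only
    set c1 := E.filter (fun e => e.2 ≤ m - 1) with hc1
    set c2 := E.filter (fun e => m - 1 + 1 ≤ e.1 ∧ e.2 ≤ t) with hc2
    set c3 := E.filter (fun e => t ≤ e.1) with hc3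
    have hd12 : Disjoint c1 c2 := by
      rw [Finset.disjoint_left]
      rintro ⟨a, b⟩ h1 h2
      have e1 := (Finset.mem_filter.mp h1).2
      have e2 := (Finset.mem_filter.mp h2).2
      have := (hlt _ (Finset.mem_filter.mp h1).1).1
      simp at e1 e2 this; omega
    have hd123 : Disjoint (c1 ∪ c2) c3 := by
      rw [Finset.disjoint_left]
      rintro ⟨a, b⟩ h1 h3
      have e3 := (Finset.mem_filter.mp h3).2
      have hab := (hlt _ (Finset.mem_filter.mp h3).1).1
      rcases Finset.mem_union.mp h1 with h | h
      · have e1 := (Finset.mem_filter.mp h).2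
        simp at e1 e3 hab; omega
      · have e2 := (Finset.mem_filter.mp h).2
        simp at e2 e3 hab; omega
    have hunion : c1 ∪ c2 ∪ c3 = E.erase (0, t) := by
      ext ⟨a, b⟩
      simp only [Finset.mem_union, hc1, hc2, hc3, Finset.mem_filter, Finset.mem_erase]
      constructor
      · rintro ((⟨hE', h⟩ | ⟨hE', h⟩) | ⟨hE', h⟩) <;> refine ⟨?_, hE'⟩ <;>
          rintro hne <;> obtain ⟨e1, e2⟩ := Prod.ext_iff.mp hne <;>
          simp only at e1 e2 h <;> omega
      · rintro ⟨hne, hE'⟩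
        rcases hpart a b hE' hne with h | h | h
        · exact Or.inl (Or.inl ⟨hE', h⟩)
        · exact Or.inl (Or.inr ⟨hE', h⟩)
        · exact Or.inr ⟨hE', h⟩
    have : (c1 ∪ c2 ∪ c3).card = c1.card + c2.card + c3.card := by
      rw [Finset.card_union_of_disjoint hd123, Finset.card_union_of_disjoint hd12]
    rw [hunion, Finset.card_erase_of_mem ht0, hcard] at this
    omega
  · -- uniqueness
    rintro ⟨t', s'⟩ ⟨hgt', hst', hc3', hc4', hc5'⟩
    simp only at hgt' hst' hc3' hc4' hc5'
    have htt : t' = t := hgt'.unique hgt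
    subst htt
    have hs'le : s' ≤ m - 1 := by
      have := hc3' s' le_rfl
      have hR : NCConn D 0 s' := ncconn_mono (Finset.filter_subset _ _) this
      have := hF4 _ hR
      omega
    have hs'ge : m - 1 ≤ s' := by
      by_contra hlt'
      push_neg at hlt'
      have hs1m : s' + 1 < m := by omega
      have hRs1 : NCConn D 0 (s' + 1) := hRlt _ hs1m
      obtain ⟨u, v, huv, hus, hsv, h0u, h0v⟩ :=
        ncst_cross D hDlt s' hRs1 (by omega) (by omega)
      have hvm : v < m := hF4 _ h0v
      set c1 := E.filter (fun e => e.2 ≤ s') with hc1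
      set c2 := E.filter (fun e => s' + 1 ≤ e.1 ∧ e.2 ≤ t) with hc2
      set c3 := E.filter (fun e => t ≤ e.1) with hc3
      have hd12 : Disjoint c1 c2 := by
        rw [Finset.disjoint_left]
        rintro ⟨a, b⟩ h1 h2
        have e1 := (Finset.mem_filter.mp h1).2
        have e2 := (Finset.mem_filter.mp h2).2
        have := (hlt _ (Finset.mem_filter.mp h1).1).1
        simp at e1 e2 this; omega
      have hd123 : Disjoint (c1 ∪ c2) c3 := by
        rw [Finset.disjoint_left]
        rintro ⟨a, b⟩ h1 h3
        have e3 := (Finset.mem_filter.mp h3).2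
        have hab := (hlt _ (Finset.mem_filter.mp h3).1).1
        rcases Finset.mem_union.mp h1 with h | h
        · have e1 := (Finset.mem_filter.mp h).2
          simp at e1 e3 hab; omega
        · have e2 := (Finset.mem_filter.mp h).2
          simp at e2 e3 hab; omega
      have hsub : c1 ∪ c2 ∪ c3 ⊆ (E.erase (0, t)).erase (u, v) := by
        rintro ⟨a, b⟩ hmem
        have hmt' : m - 1 < t := by omega
        rcases Finset.mem_union.mp hmem with h | h
        · rcases Finset.mem_union.mp h with h' | h'
          · have e1 := (Finset.mem_filter.mp h').2
            have he := (Finset.mem_filter.mp h').1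
            simp only at e1
            refine Finset.mem_erase.mpr ⟨?_, Finset.mem_erase.mpr ⟨?_, he⟩⟩
            · intro hne; obtain ⟨q1, q2⟩ := Prod.ext_iff.mp hne; simp only at q1 q2; omega
            · intro hne; obtain ⟨q1, q2⟩ := Prod.ext_iff.mp hne; simp only at q1 q2; omega
          · have e2 := (Finset.mem_filter.mp h').2
            have he := (Finset.mem_filter.mp h').1
            simp only at e2
            refine Finset.mem_erase.mpr ⟨?_, Finset.mem_erase.mpr ⟨?_, he⟩⟩
            · intro hne; obtain ⟨q1, q2⟩ := Prod.ext_iff.mp hne; simp only at q1 q2; omega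
            · intro hne; obtain ⟨q1, q2⟩ := Prod.ext_iff.mp hne; simp only at q1 q2; omega
        · have e3 := (Finset.mem_filter.mp h).2
          have he := (Finset.mem_filter.mp h).1
          simp only at e3
          refine Finset.mem_erase.mpr ⟨?_, Finset.mem_erase.mpr ⟨?_, he⟩⟩
          · intro hne; obtain ⟨q1, q2⟩ := Prod.ext_iff.mp hne; simp only at q1 q2; omega
          · intro hne; obtain ⟨q1, q2⟩ := Prod.ext_iff.mp hne; simp only at q1 q2; omega
      have hcardle : (c1 ∪ c2 ∪ c3).card ≤ ((E.erase (0, t)).erase (u, v)).card :=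
        Finset.card_le_card hsub
      have hceq : (c1 ∪ c2 ∪ c3).card = c1.card + c2.card + c3.card := by
        rw [Finset.card_union_of_disjoint hd123, Finset.card_union_of_disjoint hd12]
      have hce : ((E.erase (0, t)).erase (u, v)).card = n - 1 - 1 := by
        show (D.erase (u, v)).card = n - 1 - 1
        rw [Finset.card_erase_of_mem huv, hDcard]
      have hpos : 1 ≤ n - 1 := by
        have : D.Nonempty := ⟨(u, v), huv⟩
        have := Finset.card_pos.mpr this
        omega
      rw [hceq, hce] at hcardle
      omega
    have : s' = m - 1 := le_antisymm hs'le hs'ge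
    rw [this]
end

section
/- There is a bijection between the set of 2-Dyck paths of length 3n and the set of non-crossing spanning trees on {0,1,…,n}, defined recursively by mapping the empty path to the empty tree, and mapping the path ↗A↗B↘C to the tree whose canonical decomposition is (T_A, T_B, T_C), where T_A, T_B, T_C are the images of A, B, C respectively. -/
/-- Shift all edges of `E` by `d`. -/
def shiftE (E : Finset (ℕ × ℕ)) (d : ℕ) : Finset (ℕ × ℕ) :=
  E.image fun e => (e.1 + d, e.2 + d)

/-! ### basic graph lemmas -/

lemma NCAdj.symm {E x y} (h : NCAdj E x y) : NCAdj E y x := h.elim .inr .inl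

lemma NCConn.refl {E x} : NCConn E x x := Relation.ReflTransGen.refl

lemma NCConn.symm {E x y} (h : NCConn E x y) : NCConn E y x :=
  by
  induction h with
  | refl => exact Relation.ReflTransGen.refl
  | tail _ hadj ih => exact Relation.ReflTransGen.head hadj.symm ih

lemma NCConn.trans {E x y z} (h : NCConn E x y) (h' : NCConn E y z) : NCConn E x z :=
  Relation.ReflTransGen.trans h h'

lemma NCConn.tail' {E x y z} (h : NCConn E x y) (h' : NCAdj E y z) : NCConn E x z :=
  Relation.ReflTransGen.tail h h'

lemma NCAdj.mono {E F x y} (hEF : E ⊆ F) (h : NCAdj E x y) : NCAdj F x y :=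
  h.elim (fun h => .inl (hEF h)) (fun h => .inr (hEF h))

lemma NCConn.mono {E F x y} (hEF : E ⊆ F) (h : NCConn E x y) : NCConn F x y :=
  Relation.ReflTransGen.mono (p := NCAdj F) (fun _ _ => NCAdj.mono hEF) _ _ h

/-- generic invariant principle along walks -/
lemma conn_invariant {E} {P : ℕ → Prop} {x y : ℕ}
    (step : ∀ u v, P u → NCAdj E u v → P v) (h : NCConn E x y) (hx : P x) : P y := by
  induction h with
  | refl => exact hx
  | tail _ hadj ih => exact step _ _ ih hadj

lemma conn_map {E F : Finset (ℕ × ℕ)} {φ : ℕ → ℕ} {x y : ℕ}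
    (step : ∀ u v, NCAdj E u v → NCAdj F (φ u) (φ v)) (h : NCConn E x y) :
    NCConn F (φ x) (φ y) := by
  induction h with
  | refl => exact NCConn.refl
  | tail _ hadj ih => exact ih.tail' (step _ _ hadj)

lemma mem_shiftE {F : Finset (ℕ × ℕ)} {d x y : ℕ} :
    (x, y) ∈ shiftE F d ↔ ∃ p q, (p, q) ∈ F ∧ x = p + d ∧ y = q + d := by
  simp only [shiftE, Finset.mem_image, Prod.ext_iff]
  constructor
  · rintro ⟨⟨p, q⟩, hpq, h1, h2⟩; exact ⟨p, q, hpq, h1.symm, h2.symm⟩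
  · rintro ⟨p, q, hpq, h1, h2⟩; exact ⟨(p, q), hpq, h1.symm, h2.symm⟩

lemma card_shiftE (F : Finset (ℕ × ℕ)) (d : ℕ) : (shiftE F d).card = F.card :=
  Finset.card_image_of_injective _ (fun e e' h => by
    simp only [Prod.ext_iff] at h ⊢; omega)

lemma shiftE_inj {F G : Finset (ℕ × ℕ)} {d : ℕ} (h : shiftE F d = shiftE G d) : F = G := by
  ext ⟨x, y⟩
  constructor <;> intro hx
  · have : (x + d, y + d) ∈ shiftE G d := by
      rw [← h, mem_shiftE]; exact ⟨x, y, hx, rfl, rfl⟩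
    rw [mem_shiftE] at this
    obtain ⟨p, q, hpq, h1, h2⟩ := this
    obtain rfl : p = x := by omega
    obtain rfl : q = y := by omega
    exact hpq
  · have : (x + d, y + d) ∈ shiftE F d := by
      rw [h, mem_shiftE]; exact ⟨x, y, hx, rfl, rfl⟩
    rw [mem_shiftE] at this
    obtain ⟨p, q, hpq, h1, h2⟩ := this
    obtain rfl : p = x := by omega
    obtain rfl : q = y := by omega
    exact hpq

lemma shiftE_unshift {F : Finset (ℕ × ℕ)} {d : ℕ} (h : ∀ e ∈ F, d ≤ e.1 ∧ d ≤ e.2) :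
    shiftE (F.image fun e => (e.1 - d, e.2 - d)) d = F := by
  ext ⟨x, y⟩
  rw [mem_shiftE]
  constructor
  · rintro ⟨p, q, hpq, rfl, rfl⟩
    simp only [Finset.mem_image, Prod.ext_iff] at hpq
    obtain ⟨⟨u, v⟩, huv, h1, h2⟩ := hpq
    have := h _ huv
    simp only at h1 h2 this
    have : (u, v) = (p + d, q + d) := by simp only [Prod.ext_iff]; omega
    rwa [← this]
  · intro hxy
    have := h _ hxy
    refine ⟨x - d, y - d, ?_, by omega, by omega⟩
    exact Finset.mem_image.mpr ⟨(x, y), hxy, rfl⟩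

lemma conn_shift {F : Finset (ℕ × ℕ)} {d x y : ℕ} (h : NCConn F x y) :
    NCConn (shiftE F d) (x + d) (y + d) := by
  refine conn_map (φ := (· + d)) ?_ h
  rintro u v (huv | huv)
  · exact .inl (mem_shiftE.mpr ⟨u, v, huv, rfl, rfl⟩)
  · exact .inr (mem_shiftE.mpr ⟨v, u, huv, rfl, rfl⟩)

/-- endpoints of a walk from `a`: either trivial or there is an edge at `x`. -/
lemma conn_endpoint {E : Finset (ℕ × ℕ)} {a x : ℕ} (h : NCConn E a x) :
    x = a ∨ ∃ e ∈ E, e.1 = x ∨ e.2 = x := by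
  rcases Relation.ReflTransGen.cases_tail h with h | ⟨b, _, hadj⟩
  · exact .inl h
  · rcases hadj with he | he
    · exact .inr ⟨(b, x), he, .inr rfl⟩
    · exact .inr ⟨(x, b), he, .inl rfl⟩

/-! ### counting: a connected graph on `{0..n}` has at least `n` edges -/

lemma conn_card_ge : ∀ n (F : Finset (ℕ × ℕ)), (∀ e ∈ F, e.1 < e.2 ∧ e.2 ≤ n) →
    (∀ x, x ≤ n → NCConn F 0 x) → n ≤ F.card := by
  intro n
  induction n with
  | zero => intro F _ _; exact Nat.zero_le _
  | succ n IH =>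
    intro F hwf hconn
    -- find an edge (c, n+1)
    obtain ⟨c, hc, hcmem⟩ : ∃ c, c < n + 1 ∧ (c, n + 1) ∈ F := by
      rcases conn_endpoint (hconn (n+1) le_rfl) with h | ⟨e, he, h | h⟩
      · omega
      · have := hwf e he; omega
      · have := hwf e he
        exact ⟨e.1, by omega, by rw [← h]; exact he⟩
    set φ : ℕ → ℕ := fun x => if x = n + 1 then c else x with hφ
    set g : ℕ × ℕ → ℕ × ℕ := fun e => (min (φ e.1) (φ e.2), max (φ e.1) (φ e.2)) with hg
    set F' : Finset (ℕ × ℕ) := (F.image g).erase (c, c) with hF'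
    have hφa : ∀ x, x ≤ n → φ x = x := by intro x hx; simp only [hφ]; split <;> omega
    have hφb : φ (n + 1) = c := by simp [hφ]
    have hφle : ∀ x, x ≤ n + 1 → φ x ≤ n := by intro x hx; simp only [hφ]; split <;> omega
    have hwf' : ∀ e ∈ F', e.1 < e.2 ∧ e.2 ≤ n := by
      rintro e he
      rw [hF', Finset.mem_erase, Finset.mem_image] at he
      obtain ⟨hne, ⟨e₀, he₀, rfl⟩⟩ := he
      have h₀ := hwf e₀ he₀
      have h1 : φ e₀.1 = e₀.1 := hφa _ (by omega)
      have h2 : φ e₀.2 ≤ n := hφle _ h₀.2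
      have h3 : φ e₀.1 ≠ φ e₀.2 := by
        intro hcon
        apply hne
        by_cases h : e₀.2 = n + 1
        · have hc2 : φ e₀.2 = c := by rw [h, hφb]
          have he1 : φ e₀.1 = c := by rw [hcon, hc2]
          simp only [hg, Prod.ext_iff, hc2, he1, min_self, max_self]
        · have hc2 : φ e₀.2 = e₀.2 := hφa _ (by omega)
          rw [h1, hc2] at hcon; omega
      constructor
      · simp only [hg]; omega
      · simp only [hg]; have := hφle _ (le_of_lt h₀.1 |>.trans h₀.2); omega
    have hconn' : ∀ x, x ≤ n → NCConn F' 0 x := by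
      intro x hx
      have key : ∀ z, NCConn F z x → True := fun _ _ => trivial
      have main : NCConn F' (φ 0) (φ x) := by
        refine conn_invariant (P := fun z => NCConn F' (φ 0) (φ z)) ?_
          (hconn x (by omega)) ?_
        · intro u v hPu hadj
          by_cases hpq : φ u = φ v
          · rwa [← hpq]
          · have hmem : g (u, v) ∈ F.image g ∨ g (v, u) ∈ F.image g := by
              rcases hadj with h | h
              · exact .inl (Finset.mem_image_of_mem _ h)
              · exact .inr (Finset.mem_image_of_mem _ h)
            have hguv : (min (φ u) (φ v), max (φ u) (φ v)) ∈ F.image g := by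
              rcases hmem with h | h
              · exact h
              · simpa only [hg, min_comm (φ v) (φ u), max_comm (φ v) (φ u)] using h
            have hne : (min (φ u) (φ v), max (φ u) (φ v)) ≠ (c, c) := by
              intro hcon
              rw [Prod.ext_iff] at hcon
              omega
            have : (min (φ u) (φ v), max (φ u) (φ v)) ∈ F' :=
              Finset.mem_erase.mpr ⟨hne, hguv⟩
            refine hPu.tail' ?_
            rcases le_total (φ u) (φ v) with h | h
            · left; rwa [min_eq_left h, max_eq_right h] at this
            · right; rwa [min_eq_right h, max_eq_left h] at this
        · simp only [hφ]; split <;> [omega; exact NCConn.refl]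
      have h0 : φ 0 = 0 := by simp only [hφ]; split <;> omega
      have hxx : φ x = x := by simp only [hφ]; split <;> omega
      rwa [h0, hxx] at main
    have hcard : F'.card ≤ F.card - 1 := by
      have hccmem : (c, c) ∈ F.image g := by
        refine Finset.mem_image.mpr ⟨(c, n+1), hcmem, ?_⟩
        have hc : φ c = c := hφa _ (by omega)
        simp only [hg, hc, hφb, min_self, max_self]
      have h1 : F'.card = (F.image g).card - 1 := by
        rw [hF']; exact Finset.card_erase_of_mem hccmem
      have himg : (F.image g).card ≤ F.card := Finset.card_image_le
      omega
    have hFpos : 1 ≤ F.card := Finset.card_pos.mpr ⟨_, hcmem⟩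
    have := IH F' hwf' hconn'
    omega

/-! ### non-crossing geometry -/

/-- if a walk from `a` to `b` strictly crosses `w` (not visiting `w`),
some edge of the component jumps over `w`. -/
lemma conn_cross {F : Finset (ℕ × ℕ)} (Hwf : ∀ e ∈ F, e.1 < e.2) {a b w : ℕ}
    (h : NCConn F a b) (hw : ∀ z, NCConn F a z → z ≠ w) (h1 : a < w) (h2 : w < b) :
    ∃ p q, (p, q) ∈ F ∧ p < w ∧ w < q ∧ NCConn F a p := by
  have main : NCConn F a b ∧ (w < b → ∃ p q, (p, q) ∈ F ∧ p < w ∧ w < q ∧ NCConn F a p) := by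
    refine conn_invariant (P := fun z => NCConn F a z ∧
      (w < z → ∃ p q, (p, q) ∈ F ∧ p < w ∧ w < q ∧ NCConn F a p)) ?_ h
      ⟨NCConn.refl, by omega⟩
    rintro u v ⟨hcu, hPu⟩ hadj
    refine ⟨hcu.tail' hadj, ?_⟩
    intro hv
    rcases lt_trichotomy u w with hu | hu | hu
    · -- u < w < v : the edge (u,v) jumps over w
      have huv : (u, v) ∈ F := by
        rcases hadj with h' | h'
        · exact h'
        · have := Hwf _ h'; omega
      exact ⟨u, v, huv, hu, hv, hcu⟩
    · exact absurd hu (hw u hcu)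
    · exact hPu hu
  exact main.2 h2

/-- escape lemma: a component touching the inside of an edge `(u,v)`
but not containing `u` is trapped strictly inside `(u,v)`. -/
lemma conn_trapped {F : Finset (ℕ × ℕ)} (Hwf : ∀ e ∈ F, e.1 < e.2)
    (Hnc : ∀ a b c d : ℕ, (a, b) ∈ F → (c, d) ∈ F → a < c → c < b → b < d → False)
    {u v y : ℕ} (huv : (u, v) ∈ F) (hu : ¬NCConn F y u) (hy1 : u < y) (hy2 : y < v) :
    ∀ z, NCConn F y z → u < z ∧ z < v := by
  intro z hz
  have main : NCConn F y z ∧ (u < z ∧ z < v) := by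
    refine conn_invariant (P := fun z => NCConn F y z ∧ (u < z ∧ z < v)) ?_ hz
      ⟨NCConn.refl, hy1, hy2⟩
    rintro p q ⟨hcp, hp1, hp2⟩ hadj
    have hcq : NCConn F y q := hcp.tail' hadj
    refine ⟨hcq, ?_⟩
    have hqu : q ≠ u := fun hcon => hu (hcon ▸ hcq)
    have hqv : q ≠ v := by
      intro hcon
      exact hu (hcq.tail' (hcon ▸ (.inr huv : NCAdj F v u)))
    rcases lt_trichotomy q u with hq | hq | hq
    · -- q < u < p < v : edge (q,p) crosses (u,v)
      have hqp : (q, p) ∈ F := by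
        rcases hadj with h' | h'
        · have := Hwf _ h'; omega
        · exact h'
      exact absurd (Hnc q p u v hqp huv hq hp1 hp2) id
    · omega
    · rcases lt_trichotomy q v with hq' | hq' | hq'
      · omega
      · omega
      · -- u < p < v < q : edge (p,q) crosses (u,v)
        have hpq : (p, q) ∈ F := by
          rcases hadj with h' | h'
          · exact h'
          · have := Hwf _ h'; omega
        exact absurd (Hnc u v p q huv hpq hp1 hp2 hq') id
  exact main.2

/-- components of a non-crossing graph do not interleave -/
lemma no_interleave {F : Finset (ℕ × ℕ)} (Hwf : ∀ e ∈ F, e.1 < e.2)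
    (Hnc : ∀ a b c d : ℕ, (a, b) ∈ F → (c, d) ∈ F → a < c → c < b → b < d → False)
    {x₁ y₁ x₂ y₂ : ℕ} (hx : NCConn F x₁ x₂) (hy : NCConn F y₁ y₂)
    (hdisj : ¬NCConn F x₁ y₁) (o1 : x₁ < y₁) (o2 : y₁ < x₂) (o3 : x₂ < y₂) : False := by
  -- step 1: X-edge (u,v) spanning y₁
  obtain ⟨u, v, huv, hu1, hv1, hcu⟩ :=
    conn_cross Hwf hx (fun z hz hcon => hdisj (by rw [hcon] at hz; exact hz)) o1 o2
  -- Y avoids u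
  have hYu : ¬NCConn F y₁ u := fun h => hdisj (hcu.trans h.symm)
  -- step 2: Y is trapped inside (u,v)
  have htrap := conn_trapped Hwf Hnc huv hYu hu1 hv1
  have hy₂ : u < y₂ ∧ y₂ < v := htrap y₂ hy
  -- step 3: Y-edge (p,q) spanning x₂
  obtain ⟨p, q, hpq, hp1, hq1, hcp⟩ :=
    conn_cross Hwf hy (fun z hz hcon => hdisj (by rw [hcon] at hz; exact hx.trans hz.symm))
      o2 o3
  -- p, q trapped inside (u,v)
  have hpin : u < p ∧ p < v := htrap p hcp
  -- step 4: X touches inside of (p,q) at x₂ but contains u < p : contradiction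
  have hXp : ¬NCConn F x₂ p := fun h => hdisj ((hx.trans h).trans hcp.symm)
  have := conn_trapped Hwf Hnc hpq hXp hp1 hq1 u (hx.symm.trans hcu)
  omega

/-! ### the union construction -/

def unionT (a b : ℕ) (E₁ E₂ E₃ : Finset (ℕ × ℕ)) : Finset (ℕ × ℕ) :=
  E₁ ∪ shiftE E₂ (a + 1) ∪ shiftE E₃ (a + 1 + b) ∪ {(0, a + 1 + b)}

lemma mem_unionT {a b : ℕ} {E₁ E₂ E₃ : Finset (ℕ × ℕ)} {e : ℕ × ℕ} :
    e ∈ unionT a b E₁ E₂ E₃ ↔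
      e ∈ E₁ ∨ e ∈ shiftE E₂ (a + 1) ∨ e ∈ shiftE E₃ (a + 1 + b) ∨ e = (0, a + 1 + b) := by
  simp [unionT, Finset.mem_union, or_assoc]
  tauto

section UnionLemmas

variable {a b c : ℕ} {E₁ E₂ E₃ : Finset (ℕ × ℕ)}
  (h₁ : IsNCST a E₁) (h₂ : IsNCST b E₂) (h₃ : IsNCST c E₃)

include h₁ h₂ h₃

lemma unionT_bounds :
    (∀ e ∈ E₁, e.1 < e.2 ∧ e.2 ≤ a) ∧
    (∀ e ∈ shiftE E₂ (a + 1), a + 1 ≤ e.1 ∧ e.1 < e.2 ∧ e.2 ≤ a + 1 + b ∧ a + 2 ≤ e.2) ∧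
    (∀ e ∈ shiftE E₃ (a + 1 + b), a + 1 + b ≤ e.1 ∧ e.1 < e.2 ∧ e.2 ≤ a + 1 + b + c) := by
  refine ⟨h₁.2.1, ?_, ?_⟩
  · rintro ⟨x, y⟩ he
    rw [mem_shiftE] at he
    obtain ⟨p, q, hpq, rfl, rfl⟩ := he
    have := h₂.2.1 _ hpq
    simp only at this ⊢
    omega
  · rintro ⟨x, y⟩ he
    rw [mem_shiftE] at he
    obtain ⟨p, q, hpq, rfl, rfl⟩ := he
    have := h₃.2.1 _ hpq
    simp only at this ⊢
    omega

lemma unionT_wf : ∀ e ∈ unionT a b E₁ E₂ E₃, e.1 < e.2 ∧ e.2 ≤ a + 1 + b + c := by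
  obtain ⟨B1, B2, B3⟩ := unionT_bounds h₁ h₂ h₃
  intro e he
  rw [mem_unionT] at he
  rcases he with h | h | h | h
  · have := B1 _ h; omega
  · have := B2 _ h; omega
  · have := B3 _ h; omega
  · subst h; dsimp only; omega

lemma unionT_card : (unionT a b E₁ E₂ E₃).card = a + 1 + b + c := by
  obtain ⟨B1, B2, B3⟩ := unionT_bounds h₁ h₂ h₃
  have d12 : Disjoint E₁ (shiftE E₂ (a + 1)) := by
    rw [Finset.disjoint_left]
    intro e he1 he2
    have := B1 _ he1; have := B2 _ he2; omega
  have d13 : Disjoint (E₁ ∪ shiftE E₂ (a + 1)) (shiftE E₃ (a + 1 + b)) := by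
    rw [Finset.disjoint_left]
    intro e he1 he2
    have h3 := B3 _ he2
    rcases Finset.mem_union.mp he1 with h | h
    · have := B1 _ h; omega
    · have := B2 _ h; omega
  have d14 : Disjoint (E₁ ∪ shiftE E₂ (a + 1) ∪ shiftE E₃ (a + 1 + b))
      ({(0, a + 1 + b)} : Finset (ℕ × ℕ)) := by
    rw [Finset.disjoint_right]
    intro e he1 he2
    rw [Finset.mem_singleton] at he1
    subst he1
    rcases Finset.mem_union.mp he2 with h | h
    · rcases Finset.mem_union.mp h with h | h
      · have := B1 _ h; dsimp only at this; omega
      · have := B2 _ h; dsimp only at this; omega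
    · have := B3 _ h; dsimp only at this; omega
  rw [unionT, Finset.card_union_of_disjoint d14, Finset.card_union_of_disjoint d13,
    Finset.card_union_of_disjoint d12, card_shiftE, card_shiftE, h₁.1, h₂.1, h₃.1,
    Finset.card_singleton]
  omega

omit h₁ h₂ h₃ in
lemma noncross_shiftE {E : Finset (ℕ × ℕ)} {k : ℕ}
    (h : ∀ a b c d : ℕ, (a, b) ∈ E → (c, d) ∈ E → a < c → c < b → b < d → False) :
    ∀ p q r s : ℕ, (p, q) ∈ shiftE E k → (r, s) ∈ shiftE E k →
      p < r → r < q → q < s → False := by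
  intro p q r s h1 h2 o1 o2 o3
  rw [mem_shiftE] at h1 h2
  obtain ⟨p', q', hpq, rfl, rfl⟩ := h1
  obtain ⟨r', s', hrs, rfl, rfl⟩ := h2
  exact h p' q' r' s' hpq hrs (by omega) (by omega) (by omega)

lemma unionT_noncross :
    ∀ p q r s : ℕ, (p, q) ∈ unionT a b E₁ E₂ E₃ → (r, s) ∈ unionT a b E₁ E₂ E₃ →
      p < r → r < q → q < s → False := by
  obtain ⟨B1, B2, B3⟩ := unionT_bounds h₁ h₂ h₃
  intro p q r s h1 h2 o1 o2 o3
  rw [mem_unionT] at h1 h2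
  rcases h1 with h1 | h1 | h1 | h1 <;> rcases h2 with h2 | h2 | h2 | h2
  · exact h₁.2.2.1 p q r s h1 h2 o1 o2 o3
  · have := B1 _ h1; have := B2 _ h2; simp only at this; omega
  · have := B1 _ h1; have := B3 _ h2; simp only at this; omega
  · simp only [Prod.ext_iff] at h2; omega
  · have := B2 _ h1; have := B1 _ h2; simp only at this; omega
  · exact noncross_shiftE h₂.2.2.1 p q r s h1 h2 o1 o2 o3
  · have := B2 _ h1; have := B3 _ h2; simp only at this; omega
  · simp only [Prod.ext_iff] at h2; omega
  · have := B3 _ h1; have := B1 _ h2; simp only at this; omega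
  · have := B3 _ h1; have := B2 _ h2; simp only at this; omega
  · exact noncross_shiftE h₃.2.2.1 p q r s h1 h2 o1 o2 o3
  · simp only [Prod.ext_iff] at h2; omega
  · simp only [Prod.ext_iff] at h1
    have := B1 _ h2; omega
  · simp only [Prod.ext_iff] at h1
    have := B2 _ h2; omega
  · simp only [Prod.ext_iff] at h1
    have := B3 _ h2; omega
  · simp only [Prod.ext_iff] at h1 h2; omega

omit h₁ h₂ h₃ in
lemma unionT_pivot_mem : (0, a + 1 + b) ∈ unionT a b E₁ E₂ E₃ := by
  rw [mem_unionT]; exact .inr (.inr (.inr rfl))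

lemma unionT_conn : ∀ x, x ≤ a + 1 + b + c → NCConn (unionT a b E₁ E₂ E₃) 0 x := by
  intro x hx
  set U := unionT a b E₁ E₂ E₃ with hU
  have hpiv : NCConn U 0 (a + 1 + b) :=
    Relation.ReflTransGen.single (.inl unionT_pivot_mem)
  have hsub2 : shiftE E₂ (a + 1) ⊆ U := by
    intro e he; rw [hU, mem_unionT]; exact .inr (.inl he)
  have hsub3 : shiftE E₃ (a + 1 + b) ⊆ U := by
    intro e he; rw [hU, mem_unionT]; exact .inr (.inr (.inl he))
  have hconn2 : ∀ y, y ≤ b → NCConn U (a + 1) (y + (a + 1)) := by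
    intro y hy
    have := (conn_shift (d := a + 1) (h₂.2.2.2 y hy)).mono hsub2
    have h0 : (0 : ℕ) + (a + 1) = a + 1 := by omega
    rwa [h0] at this
  have ht_a1 : NCConn U (a + 1 + b) (a + 1) := by
    have := hconn2 b le_rfl
    have hb : b + (a + 1) = a + 1 + b := by omega
    rw [hb] at this
    exact this.symm
  rcases le_or_gt x a with h | h
  · exact (h₁.2.2.2 x h).mono (by intro e he; rw [hU, mem_unionT]; exact .inl he)
  rcases le_or_gt x (a + 1 + b) with h' | h'
  · have := hconn2 (x - (a + 1)) (by omega)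
    have hxx : x - (a + 1) + (a + 1) = x := by omega
    rw [hxx] at this
    exact (hpiv.trans ht_a1).trans this
  · have := (conn_shift (d := a + 1 + b) (h₃.2.2.2 (x - (a + 1 + b)) (by omega))).mono hsub3
    have hxx : x - (a + 1 + b) + (a + 1 + b) = x := by omega
    have h0 : (0 : ℕ) + (a + 1 + b) = a + 1 + b := by omega
    rw [hxx, h0] at this
    exact hpiv.trans this

lemma unionT_NCST : IsNCST (a + 1 + b + c) (unionT a b E₁ E₂ E₃) :=
  ⟨unionT_card h₁ h₂ h₃, unionT_wf h₁ h₂ h₃, unionT_noncross h₁ h₂ h₃, unionT_conn h₁ h₂ h₃⟩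

/-! ### recovering the parameters from the union -/

lemma unionT_tmax : ∀ x, (0, x) ∈ unionT a b E₁ E₂ E₃ → x ≤ a + 1 + b := by
  obtain ⟨B1, B2, B3⟩ := unionT_bounds h₁ h₂ h₃
  intro x hx
  rw [mem_unionT] at hx
  rcases hx with h | h | h | h
  · have := B1 _ h; simp only at this; omega
  · have := B2 _ h; simp only at this; omega
  · have := B3 _ h; simp only at this; omega
  · simp only [Prod.ext_iff] at h; omega

lemma unionT_erase :
    (unionT a b E₁ E₂ E₃).erase (0, a + 1 + b) =
      E₁ ∪ shiftE E₂ (a + 1) ∪ shiftE E₃ (a + 1 + b) := by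
  obtain ⟨B1, B2, B3⟩ := unionT_bounds h₁ h₂ h₃
  ext e
  rw [Finset.mem_erase, mem_unionT, Finset.mem_union, Finset.mem_union]
  constructor
  · rintro ⟨hne, h | h | h | h⟩
    · exact .inl (.inl h)
    · exact .inl (.inr h)
    · exact .inr h
    · exact absurd h hne
  · rintro (⟨h | h⟩ | h)
    · refine ⟨?_, .inl h⟩
      have := B1 _ h; intro hcon; rw [hcon] at this; dsimp only at this; omega
    · refine ⟨?_, .inr (.inl h)⟩
      have := B2 _ h; intro hcon; rw [hcon] at this; dsimp only at this; omega
    · refine ⟨?_, .inr (.inr (.inl h))⟩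
      have := B3 _ h; intro hcon; rw [hcon] at this; dsimp only at this; omega

lemma unionT_min :
    NCConn ((unionT a b E₁ E₂ E₃).erase (0, a + 1 + b)) (a + 1) (a + 1 + b) ∧
    (∀ x, NCConn ((unionT a b E₁ E₂ E₃).erase (0, a + 1 + b)) x (a + 1 + b) →
      a + 1 ≤ x) := by
  obtain ⟨B1, B2, B3⟩ := unionT_bounds h₁ h₂ h₃
  rw [unionT_erase h₁ h₂ h₃]
  set W := E₁ ∪ shiftE E₂ (a + 1) ∪ shiftE E₃ (a + 1 + b) with hW
  have hsub2 : shiftE E₂ (a + 1) ⊆ W := by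
    intro e he; rw [hW]; exact Finset.mem_union.mpr (.inl (Finset.mem_union.mpr (.inr he)))
  constructor
  · have := (conn_shift (d := a + 1) (h₂.2.2.2 b le_rfl)).mono hsub2
    have hb : b + (a + 1) = a + 1 + b := by omega
    have h0 : (0 : ℕ) + (a + 1) = a + 1 := by omega
    rw [hb, h0] at this
    exact this
  · intro x hx
    refine conn_invariant (E := W) (P := fun z => a + 1 ≤ z) ?_ hx.symm (by omega)
    intro u v hu hadj
    have hedge : ∃ e ∈ W, (e.1 = u ∧ e.2 = v) ∨ (e.1 = v ∧ e.2 = u) := by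
      rcases hadj with h | h
      · exact ⟨(u, v), h, .inl ⟨rfl, rfl⟩⟩
      · exact ⟨(v, u), h, .inr ⟨rfl, rfl⟩⟩
    obtain ⟨e, he, hc⟩ := hedge
    rcases Finset.mem_union.mp he with h | h
    · rcases Finset.mem_union.mp h with h | h
      · have := B1 _ h; omega
      · have := B2 _ h; omega
    · have := B3 _ h; omega

lemma unionT_filter1 :
    (unionT a b E₁ E₂ E₃).filter (fun e => e.2 ≤ a) = E₁ := by
  obtain ⟨B1, B2, B3⟩ := unionT_bounds h₁ h₂ h₃
  ext e
  rw [Finset.mem_filter, mem_unionT]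
  constructor
  · rintro ⟨h | h | h | h, hle⟩
    · exact h
    · have := B2 _ h; omega
    · have := B3 _ h; omega
    · rw [h] at hle; dsimp only at hle; omega
  · intro h
    exact ⟨.inl h, (B1 _ h).2⟩

lemma unionT_filter2 :
    (unionT a b E₁ E₂ E₃).filter (fun e => a + 1 ≤ e.1 ∧ e.1 < a + 1 + b) =
      shiftE E₂ (a + 1) := by
  obtain ⟨B1, B2, B3⟩ := unionT_bounds h₁ h₂ h₃
  ext e
  rw [Finset.mem_filter, mem_unionT]
  constructor
  · rintro ⟨h | h | h | h, hle⟩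
    · have := B1 _ h; omega
    · exact h
    · have := B3 _ h; omega
    · rw [h] at hle; dsimp only at hle; omega
  · intro h
    have := B2 _ h
    refine ⟨.inr (.inl h), by omega, by omega⟩

lemma unionT_filter3 :
    (unionT a b E₁ E₂ E₃).filter (fun e => a + 1 + b ≤ e.1) =
      shiftE E₃ (a + 1 + b) := by
  obtain ⟨B1, B2, B3⟩ := unionT_bounds h₁ h₂ h₃
  ext e
  rw [Finset.mem_filter, mem_unionT]
  constructor
  · rintro ⟨h | h | h | h, hle⟩
    · have := B1 _ h; omega
    · have := B2 _ h; omega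
    · exact h
    · rw [h] at hle; dsimp only at hle; omega
  · intro h
    exact ⟨.inr (.inr (.inl h)), (B3 _ h).1⟩

end UnionLemmas

lemma unionT_inj {a b c a' b' c' : ℕ} {E₁ E₂ E₃ E₁' E₂' E₃' : Finset (ℕ × ℕ)}
    (h₁ : IsNCST a E₁) (h₂ : IsNCST b E₂) (h₃ : IsNCST c E₃)
    (h₁' : IsNCST a' E₁') (h₂' : IsNCST b' E₂') (h₃' : IsNCST c' E₃')
    (heq : unionT a b E₁ E₂ E₃ = unionT a' b' E₁' E₂' E₃') :
    a = a' ∧ b = b' ∧ c = c' ∧ E₁ = E₁' ∧ E₂ = E₂' ∧ E₃ = E₃' := by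
  have ht : a + 1 + b = a' + 1 + b' := by
    have t1 : a + 1 + b ≤ a' + 1 + b' :=
      unionT_tmax h₁' h₂' h₃' _ (heq ▸ unionT_pivot_mem)
    have t2 : a' + 1 + b' ≤ a + 1 + b :=
      unionT_tmax h₁ h₂ h₃ _ (heq.symm ▸ unionT_pivot_mem)
    omega
  have ha : a = a' := by
    have m1 := unionT_min h₁ h₂ h₃
    have m2 := unionT_min h₁' h₂' h₃'
    rw [← heq, ← ht] at m2
    have i1 : a + 1 ≤ a' + 1 := m1.2 _ m2.1
    have i2 : a' + 1 ≤ a + 1 := m2.2 _ m1.1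
    omega
  have hb : b = b' := by omega
  subst ha; subst hb
  have f1 : E₁ = E₁' := by
    rw [← unionT_filter1 h₁ h₂ h₃, ← unionT_filter1 h₁' h₂' h₃', heq]
  have f2 : E₂ = E₂' := by
    apply shiftE_inj (d := a + 1)
    rw [← unionT_filter2 h₁ h₂ h₃, ← unionT_filter2 h₁' h₂' h₃', heq]
  have f3 : E₃ = E₃' := by
    apply shiftE_inj (d := a + 1 + b)
    rw [← unionT_filter3 h₁ h₂ h₃, ← unionT_filter3 h₁' h₂' h₃', heq]
  have hc : c = c' := by rw [← h₃.1, ← h₃'.1, f3]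
  exact ⟨rfl, rfl, hc, f1, f2, f3⟩

lemma adj_edge {F : Finset (ℕ × ℕ)} {u v : ℕ} (h : NCAdj F u v) :
    ∃ e ∈ F, (e.1 = u ∧ e.2 = v) ∨ (e.1 = v ∧ e.2 = u) := by
  rcases h with h | h
  · exact ⟨(u, v), h, .inl ⟨rfl, rfl⟩⟩
  · exact ⟨(v, u), h, .inr ⟨rfl, rfl⟩⟩

lemma adj_of_edge {F : Finset (ℕ × ℕ)} {e : ℕ × ℕ} {u v : ℕ} (he : e ∈ F)
    (h : (e.1 = u ∧ e.2 = v) ∨ (e.1 = v ∧ e.2 = u)) : NCAdj F u v := by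
  rcases h with ⟨h1, h2⟩ | ⟨h1, h2⟩
  · left; rwa [← h1, ← h2, Prod.mk.eta]
  · right; rwa [← h1, ← h2, Prod.mk.eta]

/-- canonical decomposition of a nonempty non-crossing spanning tree -/
lemma NCST_decomp {n : ℕ} {E : Finset (ℕ × ℕ)} (hE : IsNCST (n + 1) E) :
    ∃ a b c E₁ E₂ E₃, IsNCST a E₁ ∧ IsNCST b E₂ ∧ IsNCST c E₃ ∧
      n + 1 = a + 1 + b + c ∧ E = unionT a b E₁ E₂ E₃ := by
  classical
  obtain ⟨hcard, hwfb, hnc, hconn⟩ := hE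
  have Hwf : ∀ e ∈ E, e.1 < e.2 := fun e he => (hwfb e he).1
  -- an edge at 0 exists
  obtain ⟨t₀, ht₀⟩ : ∃ x, (0, x) ∈ E := by
    rcases conn_endpoint (hconn 1 (by omega)).symm with h | ⟨e, he, h | h⟩
    · omega
    · exact ⟨e.2, by rw [← h, Prod.mk.eta]; exact he⟩
    · have := Hwf e he; omega
  set t := Nat.findGreatest (fun x => (0, x) ∈ E) (n + 1) with ht_def
  have htmem : (0, t) ∈ E := by
    have := Nat.findGreatest_spec (P := fun x => (0, x) ∈ E) (m := t₀) (n := n + 1)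
      ((hwfb _ ht₀).2) ht₀
    simpa [ht_def] using this
  have htpos : 0 < t := by
    rcases Nat.eq_zero_or_pos t with h | h
    · exfalso; have := Hwf _ htmem; rw [h] at this; simp at this
    · exact h
  have ht_le : t ≤ n + 1 := (hwfb _ htmem).2
  have htmax : ∀ x, (0, x) ∈ E → x ≤ t := by
    intro x hx
    by_contra hcon
    exact Nat.findGreatest_is_greatest (P := fun x => (0, x) ∈ E) (lt_of_not_ge hcon)
      ((hwfb _ hx).2) hx
  set E' := E.erase (0, t) with hE'_def
  have hE'sub : E' ⊆ E := Finset.erase_subset _ _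
  have hE'card : E'.card = n := by
    rw [hE'_def, Finset.card_erase_of_mem htmem, hcard]
    omega
  have Hwf' : ∀ e ∈ E', e.1 < e.2 := fun e he => Hwf e (hE'sub he)
  have hwfb' : ∀ e ∈ E', e.1 < e.2 ∧ e.2 ≤ n + 1 := fun e he => hwfb e (hE'sub he)
  have hnc' : ∀ a b c d : ℕ, (a, b) ∈ E' → (c, d) ∈ E' → a < c → c < b → b < d → False :=
    fun a b c d h1 h2 => hnc a b c d (hE'sub h1) (hE'sub h2)
  have hmemE' : ∀ e ∈ E, e ≠ (0, t) → e ∈ E' := by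
    intro e he hne; rw [hE'_def, Finset.mem_erase]; exact ⟨hne, he⟩
  -- claim 1 : no edge strictly crosses t
  have hcross_t : ∀ e ∈ E, e ≠ (0, t) → e.2 ≤ t ∨ t ≤ e.1 := by
    rintro ⟨c, d⟩ he hne
    simp only
    by_contra hcon
    push_neg at hcon
    obtain ⟨h1, h2⟩ := hcon
    rcases Nat.eq_zero_or_pos c with rfl | hcpos
    · have := htmax d he; omega
    · exact hnc 0 t c d htmem he hcpos h2 h1
  -- splitting of connectivity
  have hsplit : ∀ x, NCConn E 0 x → NCConn E' 0 x ∨ NCConn E' t x := by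
    intro x hx
    refine conn_invariant
      (P := fun z => NCConn E' 0 z ∨ NCConn E' t z) ?_ hx (.inl NCConn.refl)
    intro u v hPu hadj
    obtain ⟨e, he, hc⟩ := adj_edge hadj
    by_cases hpe : e = (0, t)
    · rw [hpe] at hc
      rcases hc with ⟨h1, h2⟩ | ⟨h1, h2⟩
    -- (u,v) = (0,t) : v = t
      · exact .inr (by rw [← h2]; exact NCConn.refl)
      · exact .inl (by rw [← h1]; exact NCConn.refl)
    · have he' : e ∈ E' := hmemE' e he hpe
      have hadj' : NCAdj E' u v := adj_of_edge he' hc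
      rcases hPu with h | h
      · exact .inl (h.tail' hadj')
      · exact .inr (h.tail' hadj')
  have hnotconn : ¬NCConn E' 0 t := by
    intro hcon
    have hall : ∀ x, x ≤ n + 1 → NCConn E' 0 x := by
      intro x hx
      rcases hsplit x (hconn x hx) with h | h
      · exact h
      · exact hcon.trans h
    have := conn_card_ge (n + 1) E' hwfb' hall
    omega
  have hdisj0t : ∀ z, NCConn E' 0 z → ¬NCConn E' z t :=
    fun z h1 h2 => hnotconn (h1.trans h2)
  -- m := least vertex connected to t in E'
  have hex : ∃ x, NCConn E' x t := ⟨t, NCConn.refl⟩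
  set m := Nat.find hex with hm_def
  have hm_conn : NCConn E' m t := Nat.find_spec hex
  have hm_min : ∀ x, x < m → ¬NCConn E' x t := fun x hx => Nat.find_min hex hx
  have hm_le_t : m ≤ t := by
    by_contra hcon
    exact hm_min t (by omega) NCConn.refl
  have hm_pos : 0 < m := by
    rcases Nat.eq_zero_or_pos m with h | h
    · exact absurd (h ▸ hm_conn) hnotconn
    · exact h
  -- component structure
  have hK0 : ∀ x, x < m → NCConn E' 0 x := by
    intro x hx
    rcases hsplit x (hconn x (by omega)) with h | h
    · exact h
    · exact absurd h.symm (hm_min x hx)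
  have hKt_high : ∀ x, t ≤ x → x ≤ n + 1 → NCConn E' t x := by
    intro x hx1 hx2
    rcases hsplit x (hconn x hx2) with h | h
    · rcases Nat.lt_or_ge t x with hlt | hge
      · exfalso
        obtain ⟨p, q, hpq, hp1, hq1, hcp⟩ :=
          conn_cross Hwf' h (fun z hz hcon => hnotconn (by rwa [hcon] at hz)) htpos hlt
        rcases Nat.eq_zero_or_pos p with rfl | hppos
        · have := htmax q (hE'sub hpq); omega
        · exact hnc 0 t p q htmem (hE'sub hpq) hppos hp1 hq1
      · have : x = t := by omega
        rw [this] at h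
        exact absurd h hnotconn
    · exact h
  have hKt_mid : ∀ x, m ≤ x → x < t → NCConn E' t x := by
    intro x hx1 hx2
    rcases hsplit x (hconn x (by omega)) with h | h
    · rcases Nat.eq_or_lt_of_le hx1 with heq | hlt
      · exfalso; apply hdisj0t x h; rw [← heq]; exact hm_conn
      · exfalso
        refine no_interleave Hwf' hnc' h hm_conn ?_ hm_pos hlt hx2
        intro hcon
        exact hnotconn (hcon.trans hm_conn)
    · exact h
  -- edge classification
  have hclass : ∀ e ∈ E', e.2 < m ∨ (m ≤ e.1 ∧ e.2 ≤ t) ∨ t ≤ e.1 := by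
    rintro ⟨c, d⟩ he
    simp only
    have hne : (c, d) ≠ (0, t) := by
      intro hcon; rw [hcon] at he; exact absurd (hE'_def ▸ he) (Finset.notMem_erase _ _)
    have hcd := Hwf' _ he
    simp only at hcd
    rcases hcross_t _ (hE'sub he) hne with hd | hc
    · have hd' : d ≤ t := hd
      rcases Nat.lt_or_ge d m with h1 | h1
      · exact .inl h1
      · refine .inr (.inl ⟨?_, hd'⟩)
        by_contra hcon
        push_neg at hcon
        have hconn_c : NCConn E' 0 c := hK0 c hcon
        have hconn_d : NCConn E' t d := by
          rcases Nat.eq_or_lt_of_le hd' with heq | hlt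
          · rw [heq]; exact NCConn.refl
          · exact hKt_mid d h1 hlt
        have : NCConn E' c d := Relation.ReflTransGen.single (.inl he)
        exact hnotconn ((hconn_c.trans this).trans hconn_d.symm)
    · exact .inr (.inr hc)
  -- the three pieces
  set E₁ := E'.filter (fun e => e.2 < m) with hE₁_def
  set E₂ := E'.filter (fun e => m ≤ e.1 ∧ e.2 ≤ t) with hE₂_def
  set E₃ := E'.filter (fun e => t ≤ e.1) with hE₃_def
  -- connectivity of the low piece
  have hconn1 : ∀ x, x < m → NCConn E₁ 0 x := by
    intro x hx
    have main := conn_invariant (E := E') (P := fun z => z < m ∧ NCConn E₁ 0 z) ?_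
      (hK0 x hx) ⟨hm_pos, NCConn.refl⟩
    · exact main.2
    · rintro u v ⟨hu, hcu⟩ hadj
      obtain ⟨e, he, hc⟩ := adj_edge hadj
      have hcl := hclass e he
      have hwfe := Hwf' e he
      have he1 : e.2 < m := by
        rcases hcl with h | h | h
        · exact h
        · rcases hc with ⟨h1, h2⟩ | ⟨h1, h2⟩ <;> omega
        · rcases hc with ⟨h1, h2⟩ | ⟨h1, h2⟩ <;> omega
      have hv : v < m := by rcases hc with ⟨h1, h2⟩ | ⟨h1, h2⟩ <;> omega
      have he₁ : e ∈ E₁ := by rw [hE₁_def, Finset.mem_filter]; exact ⟨he, he1⟩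
      exact ⟨hv, hcu.tail' (adj_of_edge he₁ hc)⟩
  -- connectivity of the middle and high pieces
  have hconn23 : ∀ x, NCConn E' m x →
      m ≤ x ∧ (x ≤ t → NCConn E₂ m x) ∧ (t ≤ x → NCConn E₂ m t ∧ NCConn E₃ t x) := by
    intro x hx
    refine conn_invariant (P := fun z => m ≤ z ∧ (z ≤ t → NCConn E₂ m z) ∧
      (t ≤ z → NCConn E₂ m t ∧ NCConn E₃ t z)) ?_ hx
      ⟨le_rfl, fun _ => NCConn.refl, fun h => by
        have hmt : m = t := le_antisymm hm_le_t h
        rw [hmt]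
        exact ⟨NCConn.refl, NCConn.refl⟩⟩
    rintro u v ⟨hu, hu2, hu3⟩ hadj
    obtain ⟨e, he, hc⟩ := adj_edge hadj
    have hcl := hclass e he
    have hwfe := Hwf' e he
    rcases hcl with h | h | h
    · -- low edge: impossible since u ≥ m > endpoints
      exfalso; rcases hc with ⟨h1, h2⟩ | ⟨h1, h2⟩ <;> omega
    · -- middle edge
      have he₂ : e ∈ E₂ := by rw [hE₂_def, Finset.mem_filter]; exact ⟨he, h⟩
      have hvm : m ≤ v ∧ v ≤ t := by rcases hc with ⟨h1, h2⟩ | ⟨h1, h2⟩ <;> omega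
      have hut : u ≤ t := by rcases hc with ⟨h1, h2⟩ | ⟨h1, h2⟩ <;> omega
      have hcv : NCConn E₂ m v := (hu2 hut).tail' (adj_of_edge he₂ hc)
      refine ⟨hvm.1, fun _ => hcv, fun hv => ?_⟩
      have hvt : v = t := le_antisymm hvm.2 hv
      subst hvt
      exact ⟨hcv, NCConn.refl⟩
    · -- high edge
      have he₃ : e ∈ E₃ := by rw [hE₃_def, Finset.mem_filter]; exact ⟨he, h⟩
      have hvt : t ≤ v := by rcases hc with ⟨h1, h2⟩ | ⟨h1, h2⟩ <;> omega
      have hut : t ≤ u := by rcases hc with ⟨h1, h2⟩ | ⟨h1, h2⟩ <;> omega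
      obtain ⟨hmt, hcu⟩ := hu3 hut
      have hcv : NCConn E₃ t v := hcu.tail' (adj_of_edge he₃ hc)
      refine ⟨by omega, fun hv => ?_, fun _ => ⟨hmt, hcv⟩⟩
      have hvteq : v = t := le_antisymm hv hvt
      subst hvteq
      exact hmt
  have hconnE'm : ∀ x, m ≤ x → x ≤ n + 1 → NCConn E' m x := by
    intro x hx1 hx2
    rcases Nat.lt_or_ge x t with h | h
    · exact hm_conn.trans (hKt_mid x hx1 h)
    · exact hm_conn.trans (hKt_high x h hx2)
  have hconn2 : ∀ x, m ≤ x → x ≤ t → NCConn E₂ m x := by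
    intro x hx1 hx2
    exact (hconn23 x (hconnE'm x hx1 (by omega))).2.1 hx2
  have hconn2t : NCConn E₂ m t := hconn2 t hm_le_t le_rfl
  have hconn3 : ∀ x, t ≤ x → x ≤ n + 1 → NCConn E₃ t x := by
    intro x hx1 hx2
    exact ((hconn23 x (hconnE'm x (by omega) hx2)).2.2 hx1).2
  -- partition of E'
  have hpart : E' = E₁ ∪ E₂ ∪ E₃ := by
    ext e
    simp only [Finset.mem_union, hE₁_def, hE₂_def, hE₃_def, Finset.mem_filter]
    constructor
    · intro he
      rcases hclass e he with h | h | h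
      · exact .inl (.inl ⟨he, h⟩)
      · exact .inl (.inr ⟨he, h⟩)
      · exact .inr ⟨he, h⟩
    · rintro ((⟨h, _⟩ | ⟨h, _⟩) | ⟨h, _⟩) <;> exact h
  have hd12 : Disjoint E₁ E₂ := by
    rw [Finset.disjoint_left]
    intro e h1 h2
    rw [hE₁_def, Finset.mem_filter] at h1
    rw [hE₂_def, Finset.mem_filter] at h2
    have := Hwf' e h1.1
    omega
  have hd123 : Disjoint (E₁ ∪ E₂) E₃ := by
    rw [Finset.disjoint_left]
    intro e h1 h3
    rw [hE₃_def, Finset.mem_filter] at h3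
    have hwfe := Hwf' e h3.1
    rcases Finset.mem_union.mp h1 with h | h
    · rw [hE₁_def, Finset.mem_filter] at h; omega
    · rw [hE₂_def, Finset.mem_filter] at h; omega
  have hcards : E₁.card + E₂.card + E₃.card = n := by
    rw [← hE'card, hpart, Finset.card_union_of_disjoint hd123,
      Finset.card_union_of_disjoint hd12]
  -- the unshifted pieces
  set E₂0 := E₂.image (fun e => (e.1 - m, e.2 - m)) with hE₂0_def
  set E₃0 := E₃.image (fun e => (e.1 - t, e.2 - t)) with hE₃0_def
  have hE₂mem : ∀ e ∈ E₂, m ≤ e.1 ∧ e.1 < e.2 ∧ e.2 ≤ t := by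
    intro e he
    rw [hE₂_def, Finset.mem_filter] at he
    have := Hwf' e he.1
    exact ⟨he.2.1, this, he.2.2⟩
  have hE₃mem : ∀ e ∈ E₃, t ≤ e.1 ∧ e.1 < e.2 ∧ e.2 ≤ n + 1 := by
    intro e he
    rw [hE₃_def, Finset.mem_filter] at he
    have := hwfb' e he.1
    exact ⟨he.2, this.1, this.2⟩
  have hshift2 : shiftE E₂0 m = E₂ := by
    rw [hE₂0_def]
    refine shiftE_unshift ?_
    intro e he
    have := hE₂mem e he
    omega
  have hshift3 : shiftE E₃0 t = E₃ := by
    rw [hE₃0_def]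
    refine shiftE_unshift ?_
    intro e he
    have := hE₃mem e he
    omega
  have hcard2 : E₂0.card = E₂.card := by
    rw [hE₂0_def]
    refine Finset.card_image_of_injOn ?_
    intro e he e' he' hee
    have h1 := hE₂mem e he
    have h2 := hE₂mem e' he'
    simp only [Prod.ext_iff] at hee ⊢
    constructor <;> omega
  have hcard3 : E₃0.card = E₃.card := by
    rw [hE₃0_def]
    refine Finset.card_image_of_injOn ?_
    intro e he e' he' hee
    have h1 := hE₃mem e he
    have h2 := hE₃mem e' he'
    simp only [Prod.ext_iff] at hee ⊢
    constructor <;> omega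
  -- properties of the unshifted pieces
  have hwf2 : ∀ e ∈ E₂0, e.1 < e.2 ∧ e.2 ≤ t - m := by
    intro e he
    rw [hE₂0_def, Finset.mem_image] at he
    obtain ⟨e', he', rfl⟩ := he
    have := hE₂mem e' he'
    simp only
    omega
  have hwf3 : ∀ e ∈ E₃0, e.1 < e.2 ∧ e.2 ≤ n + 1 - t := by
    intro e he
    rw [hE₃0_def, Finset.mem_image] at he
    obtain ⟨e', he', rfl⟩ := he
    have := hE₃mem e' he'
    simp only
    omega
  have hmem20 : ∀ p q : ℕ, (p, q) ∈ E₂0 → (p + m, q + m) ∈ E₂ := by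
    intro p q hpq
    rw [hE₂0_def, Finset.mem_image] at hpq
    obtain ⟨e', he', heq⟩ := hpq
    have := hE₂mem e' he'
    simp only [Prod.ext_iff] at heq
    have : e' = (p + m, q + m) := by simp only [Prod.ext_iff]; omega
    rwa [← this]
  have hmem30 : ∀ p q : ℕ, (p, q) ∈ E₃0 → (p + t, q + t) ∈ E₃ := by
    intro p q hpq
    rw [hE₃0_def, Finset.mem_image] at hpq
    obtain ⟨e', he', heq⟩ := hpq
    have := hE₃mem e' he'
    simp only [Prod.ext_iff] at heq
    have : e' = (p + t, q + t) := by simp only [Prod.ext_iff]; omega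
    rwa [← this]
  have hnc2 : ∀ a b c d : ℕ, (a, b) ∈ E₂0 → (c, d) ∈ E₂0 → a < c → c < b → b < d → False := by
    intro p q r s h1 h2 o1 o2 o3
    have m1 := hmem20 _ _ h1
    have m2 := hmem20 _ _ h2
    rw [hE₂_def, Finset.mem_filter] at m1 m2
    exact hnc' _ _ _ _ m1.1 m2.1 (by omega) (by omega) (by omega)
  have hnc3 : ∀ a b c d : ℕ, (a, b) ∈ E₃0 → (c, d) ∈ E₃0 → a < c → c < b → b < d → False := by
    intro p q r s h1 h2 o1 o2 o3
    have m1 := hmem30 _ _ h1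
    have m2 := hmem30 _ _ h2
    rw [hE₃_def, Finset.mem_filter] at m1 m2
    exact hnc' _ _ _ _ m1.1 m2.1 (by omega) (by omega) (by omega)
  have hconn20 : ∀ x, x ≤ t - m → NCConn E₂0 0 x := by
    intro x hx
    have hcm := hconn2 (x + m) (by omega) (by omega)
    have hstep : ∀ p q, NCAdj E₂ p q → NCAdj E₂0 (p - m) (q - m) := by
      intro p q hpq
      obtain ⟨e, he, hc⟩ := adj_edge hpq
      have hbd := hE₂mem e he
      have hmem : (e.1 - m, e.2 - m) ∈ E₂0 := by
        rw [hE₂0_def]; exact Finset.mem_image_of_mem _ he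
      refine adj_of_edge (e := (e.1 - m, e.2 - m)) hmem ?_
      rcases hc with ⟨h1, h2⟩ | ⟨h1, h2⟩
      · exact .inl ⟨by dsimp only; omega, by dsimp only; omega⟩
      · exact .inr ⟨by dsimp only; omega, by dsimp only; omega⟩
    have hmap : NCConn E₂0 (m - m) (x + m - m) :=
      conn_map (F := E₂0) (φ := fun z => z - m) hstep hcm
    have h1 : m - m = 0 := by omega
    have h2 : x + m - m = x := by omega
    rwa [h1, h2] at hmap
  have hconn30 : ∀ x, x ≤ n + 1 - t → NCConn E₃0 0 x := by
    intro x hx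
    have hcm := hconn3 (x + t) (by omega) (by omega)
    have hstep : ∀ p q, NCAdj E₃ p q → NCAdj E₃0 (p - t) (q - t) := by
      intro p q hpq
      obtain ⟨e, he, hc⟩ := adj_edge hpq
      have hbd := hE₃mem e he
      have hmem : (e.1 - t, e.2 - t) ∈ E₃0 := by
        rw [hE₃0_def]; exact Finset.mem_image_of_mem _ he
      refine adj_of_edge (e := (e.1 - t, e.2 - t)) hmem ?_
      rcases hc with ⟨h1, h2⟩ | ⟨h1, h2⟩
      · exact .inl ⟨by dsimp only; omega, by dsimp only; omega⟩
      · exact .inr ⟨by dsimp only; omega, by dsimp only; omega⟩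
    have hmap : NCConn E₃0 (t - t) (x + t - t) :=
      conn_map (F := E₃0) (φ := fun z => z - t) hstep hcm
    have h1 : t - t = 0 := by omega
    have h2 : x + t - t = x := by omega
    rwa [h1, h2] at hmap
  -- bounds and connectivity of the low piece
  have hwf1 : ∀ e ∈ E₁, e.1 < e.2 ∧ e.2 ≤ m - 1 := by
    intro e he
    rw [hE₁_def, Finset.mem_filter] at he
    have := Hwf' e he.1
    exact ⟨this, by omega⟩
  have hnc1 : ∀ a b c d : ℕ, (a, b) ∈ E₁ → (c, d) ∈ E₁ → a < c → c < b → b < d → False := by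
    intro p q r s h1 h2 o1 o2 o3
    rw [hE₁_def, Finset.mem_filter] at h1 h2
    exact hnc' _ _ _ _ h1.1 h2.1 o1 o2 o3
  have hconn10 : ∀ x, x ≤ m - 1 → NCConn E₁ 0 x := fun x hx => hconn1 x (by omega)
  -- cards are forced
  have hge1 : m - 1 ≤ E₁.card := conn_card_ge (m - 1) E₁ hwf1 hconn10
  have hge2 : t - m ≤ E₂.card := by
    have := conn_card_ge (t - m) E₂0 hwf2 hconn20
    omega
  have hge3 : n + 1 - t ≤ E₃.card := by
    have := conn_card_ge (n + 1 - t) E₃0 hwf3 hconn30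
    omega
  have hc1 : E₁.card = m - 1 := by omega
  have hc2 : E₂0.card = t - m := by omega
  have hc3 : E₃0.card = n + 1 - t := by omega
  -- assemble
  refine ⟨m - 1, t - m, n + 1 - t, E₁, E₂0, E₃0,
    ⟨hc1, hwf1, hnc1, hconn10⟩, ⟨hc2, hwf2, hnc2, hconn20⟩, ⟨hc3, hwf3, hnc3, hconn30⟩,
    by omega, ?_⟩
  have hm1 : m - 1 + 1 = m := by omega
  have hm2 : m + (t - m) = t := by omega
  rw [unionT, hm1, hm2, hshift2, hshift3]
  ext e
  simp only [Finset.mem_union, Finset.mem_singleton]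
  constructor
  · intro he
    by_cases hpe : e = (0, t)
    · exact .inr hpe
    · have he' : e ∈ E' := hmemE' e he hpe
      rw [hpart] at he'
      rcases Finset.mem_union.mp he' with h | h
      · rcases Finset.mem_union.mp h with h | h
        · exact .inl (.inl (.inl h))
        · exact .inl (.inl (.inr h))
      · exact .inl (.inr h)
  · rintro ((( h | h) | h) | h)
    · rw [hE₁_def, Finset.mem_filter] at h; exact hE'sub h.1
    · rw [hE₂_def, Finset.mem_filter] at h; exact hE'sub h.1
    · rw [hE₃_def, Finset.mem_filter] at h; exact hE'sub h.1
    · rw [h]; exact htmem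

/-! ### Dyck path lemmas -/

lemma sum_take_append (A B : List ℤ) (j : ℕ) :
    ((A ++ B).take j).sum = (A.take j).sum + (B.take (j - A.length)).sum := by
  rw [List.take_append, List.sum_append]

lemma sum_take_cons (x : ℤ) (l : List ℤ) (j : ℕ) :
    ((x :: l).take j).sum = if j = 0 then 0 else x + (l.take (j - 1)).sum := by
  cases j with
  | zero => simp
  | succ k => simp [List.take_succ_cons]

lemma sum_take_all {l : List ℤ} {j : ℕ} (h : l.length ≤ j) : (l.take j).sum = l.sum := by
  rw [List.take_of_length_le h]

lemma dyck_count (w : List ℤ) (h : ∀ a ∈ w, a = 1 ∨ a = -2) :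
    (w.length : ℤ) = w.sum + 3 * (w.count (-2) : ℤ) := by
  induction w with
  | nil => simp
  | cons x l IH =>
    have hx := h x (List.mem_cons_self (a := x) (l := l))
    have hl := IH (fun a ha => h a (List.mem_cons_of_mem _ ha))
    rcases hx with rfl | rfl
    · rw [List.count_cons_of_ne (by norm_num : (1:ℤ) ≠ -2)]
      simp only [List.length_cons, List.sum_cons]
      push_cast
      omega
    · rw [List.count_cons_self]
      simp only [List.length_cons, List.sum_cons]
      push_cast
      omega

lemma dyck_length_div {w : List ℤ} (h : IsDyck2Path w) : 3 * (w.length / 3) = w.length := by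
  have := dyck_count w h.1
  rw [h.2.2] at this
  omega

lemma dyck_decomp_S {A B C : List ℤ} (hA : IsDyck2Path A) (hB : IsDyck2Path B)
    (hC : IsDyck2Path C) (j : ℕ) :
    0 ≤ (((((1:ℤ)::A) ++ ((1:ℤ)::B) ++ ((-2:ℤ)::C)).take j)).sum ∧
    (0 < j → j < A.length + B.length + 3 →
      1 ≤ (((((1:ℤ)::A) ++ ((1:ℤ)::B) ++ ((-2:ℤ)::C)).take j)).sum) ∧
    (j = A.length + B.length + 3 →
      (((((1:ℤ)::A) ++ ((1:ℤ)::B) ++ ((-2:ℤ)::C)).take j)).sum = 0) := by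
  have hS : ((((1:ℤ)::A) ++ ((1:ℤ)::B) ++ ((-2:ℤ)::C)).take j).sum =
      (((1:ℤ)::A).take j).sum + (((1:ℤ)::B).take (j - (A.length + 1))).sum +
      (((-2:ℤ)::C).take (j - (A.length + 1) - (B.length + 1))).sum := by
    rw [sum_take_append ((1:ℤ)::A ++ (1:ℤ)::B), sum_take_append]
    simp only [List.length_append, List.length_cons]
    rw [← Nat.sub_sub]
    have hidx : j - (A.length + 1 + (B.length + 1)) = j - A.length - 1 - (B.length + 1) := by
      omega
    rw [hidx]
  set la := A.length
  set lb := B.length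
  set j₂ := j - (la + 1) with hj₂
  set j₃ := j - (la + 1) - (lb + 1) with hj₃
  have hA1 : ∀ i, 0 ≤ (A.take i).sum := hA.2.1
  have hB1 : ∀ i, 0 ≤ (B.take i).sum := hB.2.1
  have hC1 : ∀ i, 0 ≤ (C.take i).sum := hC.2.1
  have hAf : ∀ i, la ≤ i → (A.take i).sum = 0 := fun i hi => by
    rw [sum_take_all hi, hA.2.2]
  have hBf : ∀ i, lb ≤ i → (B.take i).sum = 0 := fun i hi => by
    rw [sum_take_all hi, hB.2.2]
  rw [hS, sum_take_cons, sum_take_cons, sum_take_cons]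
  refine ⟨?_, ?_, ?_⟩
  · rcases Nat.eq_zero_or_pos j₃ with h3 | h3
    · -- third term vanishes
      rw [if_pos h3]
      have t1 : 0 ≤ if j = 0 then 0 else 1 + (A.take (j-1)).sum := by
        split
        · omega
        · have := hA1 (j - 1); omega
      have t2 : 0 ≤ if j₂ = 0 then 0 else 1 + (B.take (j₂-1)).sum := by
        split
        · omega
        · have := hB1 (j₂ - 1); omega
      omega
    · have hjbig : la + lb + 3 ≤ j := by omega
      rw [if_neg (by omega : ¬j = 0), if_neg (by omega : ¬j₂ = 0), if_neg (by omega : ¬j₃ = 0)]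
      have t1 : (A.take (j-1)).sum = 0 := hAf _ (by omega)
      have t2 : (B.take (j₂-1)).sum = 0 := hBf _ (by omega)
      have t3 := hC1 (j₃ - 1)
      omega
  · intro hj0 hjlt
    have h3 : j₃ = 0 := by omega
    rw [if_pos h3, if_neg (by omega : ¬j = 0)]
    have t1 := hA1 (j - 1)
    have t2 : 0 ≤ if j₂ = 0 then 0 else 1 + (B.take (j₂-1)).sum := by
      split
      · omega
      · have := hB1 (j₂ - 1); omega
    omega
  · intro hj
    have h3 : j₃ = 1 := by omega
    rw [if_neg (by omega : ¬j = 0), if_neg (by omega : ¬j₂ = 0), if_neg (by omega : ¬j₃ = 0)]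
    have t1 : (A.take (j-1)).sum = 0 := hAf _ (by omega)
    have t2 : (B.take (j₂-1)).sum = 0 := hBf _ (by omega)
    have t3 : (C.take (j₃-1)).sum = 0 := by
      rw [h3]; simp
    omega

lemma dyck_compose {A B C : List ℤ} (hA : IsDyck2Path A) (hB : IsDyck2Path B)
    (hC : IsDyck2Path C) :
    IsDyck2Path (((1:ℤ)::A) ++ ((1:ℤ)::B) ++ ((-2:ℤ)::C)) := by
  refine ⟨?_, ?_, ?_⟩
  · intro a ha
    simp only [List.mem_append, List.mem_cons] at ha
    rcases ha with ((rfl | h) | (rfl | h)) | (rfl | h)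
    · exact .inl rfl
    · exact hA.1 a h
    · exact .inl rfl
    · exact hB.1 a h
    · exact .inr rfl
    · exact hC.1 a h
  · intro j
    exact (dyck_decomp_S hA hB hC j).1
  · simp only [List.sum_append, List.sum_cons, hA.2.2, hB.2.2, hC.2.2]
    ring

lemma dyck_decomp_unique {A B C A' B' C' : List ℤ}
    (hA : IsDyck2Path A) (hB : IsDyck2Path B) (hC : IsDyck2Path C)
    (hA' : IsDyck2Path A') (hB' : IsDyck2Path B') (hC' : IsDyck2Path C')
    (heq : ((1:ℤ)::A) ++ ((1:ℤ)::B) ++ ((-2:ℤ)::C) =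
      ((1:ℤ)::A') ++ ((1:ℤ)::B') ++ ((-2:ℤ)::C')) :
    A = A' ∧ B = B' ∧ C = C' := by
  set w := ((1:ℤ)::A) ++ ((1:ℤ)::B) ++ ((-2:ℤ)::C) with hw
  have hw' : w = ((1:ℤ)::A') ++ ((1:ℤ)::B') ++ ((-2:ℤ)::C') := heq
  -- step 1 : |A| + |B| = |A'| + |B'|
  have hlab : A.length + B.length = A'.length + B'.length := by
    rcases lt_trichotomy (A.length + B.length) (A'.length + B'.length) with h | h | h
    · exfalso
      have h1 := (dyck_decomp_S hA hB hC (A.length + B.length + 3)).2.2 rfl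
      have h2 := (dyck_decomp_S hA' hB' hC' (A.length + B.length + 3)).2.1
        (by omega) (by omega)
      rw [← hw] at h1
      rw [← hw'] at h2
      omega
    · exact h
    · exfalso
      have h1 := (dyck_decomp_S hA' hB' hC' (A'.length + B'.length + 3)).2.2 rfl
      have h2 := (dyck_decomp_S hA hB hC (A'.length + B'.length + 3)).2.1
        (by omega) (by omega)
      rw [← hw'] at h1
      rw [← hw] at h2
      omega
  -- step 2 : split the lists
  have hfirst : ((1:ℤ)::A) ++ ((1:ℤ)::B) = ((1:ℤ)::A') ++ ((1:ℤ)::B') ∧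
      ((-2:ℤ)::C) = ((-2:ℤ)::C') := by
    refine List.append_inj heq ?_
    simp only [List.length_append, List.length_cons]
    omega
  have hC_eq : C = C' := by
    have h := hfirst.2
    injection h
  -- step 3 : |A| = |A'|
  set u := A ++ ((1:ℤ)::B) with hu
  have hu' : u = A' ++ ((1:ℤ)::B') := by
    have h1 : (1:ℤ) :: (A ++ ((1:ℤ)::B)) = (1:ℤ) :: (A' ++ ((1:ℤ)::B')) := by
      have := hfirst.1
      simpa using this
    injection h1
  have hSu : ∀ i, A.length < i → i ≤ A.length + B.length + 1 → 1 ≤ (u.take i).sum := by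
    intro i h1 h2
    rw [hu, sum_take_append, sum_take_all (by omega), hA.2.2, sum_take_cons,
      if_neg (by omega : ¬i - A.length = 0)]
    have := hB.2.1 (i - A.length - 1)
    omega
  have hSu' : ∀ i, A'.length < i → i ≤ A'.length + B'.length + 1 → 1 ≤ (u.take i).sum := by
    intro i h1 h2
    rw [hu', sum_take_append, sum_take_all (by omega), hA'.2.2, sum_take_cons,
      if_neg (by omega : ¬i - A'.length = 0)]
    have := hB'.2.1 (i - A'.length - 1)
    omega
  have hSA : (u.take A.length).sum = 0 := by
    rw [hu, sum_take_append, sum_take_all le_rfl, hA.2.2]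
    simp
  have hSA' : (u.take A'.length).sum = 0 := by
    rw [hu', sum_take_append, sum_take_all le_rfl, hA'.2.2]
    simp
  have hla : A.length = A'.length := by
    rcases lt_trichotomy A.length A'.length with h | h | h
    · exfalso
      have := hSu A'.length h (by omega)
      omega
    · exact h
    · exfalso
      have := hSu' A.length h (by omega)
      omega
  have hAeq : A = A' ∧ ((1:ℤ)::B) = ((1:ℤ)::B') := List.append_inj hu' hla
  have hBeq : B = B' := by injection hAeq.2
  exact ⟨hAeq.1, hBeq, hC_eq⟩
lemma dyck_decomp_exists {w : List ℤ} (hw : IsDyck2Path w) (hne : w ≠ []) :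
    ∃ A B C, IsDyck2Path A ∧ IsDyck2Path B ∧ IsDyck2Path C ∧
      w = ((1:ℤ)::A) ++ ((1:ℤ)::B) ++ ((-2:ℤ)::C) := by
  classical
  obtain ⟨helem, hpre, hsum⟩ := hw
  have hlen : 0 < w.length := List.length_pos_iff.mpr hne
  have hex : ∃ j, 0 < j ∧ (w.take j).sum = 0 :=
    ⟨w.length, hlen, by rw [sum_take_all le_rfl]; exact hsum⟩
  obtain ⟨k, hk_def⟩ : ∃ k, k = Nat.find hex := ⟨_, rfl⟩
  obtain ⟨hkpos, hkzero⟩ : 0 < k ∧ (w.take k).sum = 0 := by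
    rw [hk_def]; exact Nat.find_spec hex
  have hkmin : ∀ j, 0 < j → j < k → 1 ≤ (w.take j).sum := by
    intro j h1 h2
    rw [hk_def] at h2
    have hj := Nat.find_min hex h2
    have h0 := hpre j
    have hne' : (w.take j).sum ≠ 0 := fun hc => hj ⟨h1, hc⟩
    omega
  have hkle : k ≤ w.length := by
    rw [hk_def]
    exact Nat.find_min' hex ⟨hlen, by rw [sum_take_all le_rfl]; exact hsum⟩
  have hstep : ∀ i (h : i < w.length), (w.take (i+1)).sum = (w.take i).sum + w[i] :=
    fun i h => List.sum_take_succ w i h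
  have hS1 : (w.take 1).sum = w[0]'hlen := by
    have := hstep 0 hlen
    simpa using this
  have hw0 : w[0]'hlen = 1 := by
    rcases helem _ (List.getElem_mem hlen) with h | h
    · exact h
    · exfalso; have := hpre 1; rw [hS1, h] at this; omega
  have hS1' : (w.take 1).sum = 1 := by rw [hS1, hw0]
  have hk3 : 3 ≤ k := by
    by_contra hcon
    have hk12 : k = 1 ∨ k = 2 := by omega
    rcases hk12 with h | h
    · rw [h, hS1'] at hkzero; omega
    · have hk2 : (2:ℕ) ≤ w.length := by rw [← h]; exact hkle
      have h2 : 1 < w.length := by omega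
      have h3 := hstep 1 h2
      rw [hS1'] at h3
      have h5 : (1:ℕ) + 1 = 2 := rfl
      rw [h5] at h3
      rw [h] at hkzero
      rcases helem _ (List.getElem_mem h2) with h4 | h4 <;> rw [h4] at h3 <;> omega
  have hklt : k - 1 < w.length := by omega
  have hSk1 : 1 ≤ (w.take (k-1)).sum := hkmin (k-1) (by omega) (by omega)
  have hlast : w[k-1]'hklt = -2 ∧ (w.take (k-1)).sum = 2 := by
    have h := hstep (k-1) hklt
    have hk1' : k - 1 + 1 = k := by omega
    rw [hk1', hkzero] at h
    rcases helem _ (List.getElem_mem hklt) with h1 | h1 <;> rw [h1] at h ⊢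
    · exfalso; omega
    · omega
  set v := (w.drop 1).take (k-2) with hv
  set C := w.drop k with hC_def
  have hvlen : v.length = k - 2 := by
    rw [hv, List.length_take, List.length_drop]; omega
  have hwsplit : w = (1:ℤ) :: (v ++ (-2:ℤ) :: C) := by
    have e1 : w = w[0]'hlen :: w.drop 1 := by
      conv_lhs => rw [← List.drop_zero (l := w), List.drop_eq_getElem_cons hlen]
    have e2 : w.drop 1 = v ++ (w.drop 1).drop (k-2) := (List.take_append_drop _ _).symm
    have e3 : (w.drop 1).drop (k-2) = w.drop (k-1) := by
      rw [List.drop_drop]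
      have hkk : 1 + (k - 2) = k - 1 := by omega
      rw [hkk]
    have e4 : w.drop (k-1) = (-2:ℤ) :: w.drop k := by
      rw [List.drop_eq_getElem_cons hklt, hlast.1]
      have hkk : k - 1 + 1 = k := by omega
      rw [hkk]
    rw [e1, hw0]
    congr 1
    rw [e2, e3, e4]
  have hSv : ∀ j, j ≤ k - 2 → (w.take (j+1)).sum = 1 + (v.take j).sum := by
    intro j hj
    conv_lhs => rw [hwsplit]
    rw [sum_take_cons, if_neg (by omega : ¬j + 1 = 0)]
    simp only [Nat.add_sub_cancel]
    rw [sum_take_append]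
    have h0 : j - v.length = 0 := by omega
    rw [h0]
    simp
  have hvpre' : ∀ j, j ≤ k - 2 → 0 ≤ (v.take j).sum := by
    intro j hj
    rcases Nat.eq_zero_or_pos j with rfl | hjpos
    · simp
    · have h1 := hkmin (j+1) (by omega) (by omega)
      have h2 := hSv j hj
      omega
  have hvsum : v.sum = 1 := by
    have h1 := hSv (k-2) le_rfl
    have h2 : k - 2 + 1 = k - 1 := by omega
    rw [h2, hlast.2] at h1
    have h3 : v.take (k-2) = v := by rw [← hvlen]; exact List.take_length ..
    rw [h3] at h1
    omega
  have hvpre : ∀ j, 0 ≤ (v.take j).sum := by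
    intro j
    rcases le_or_gt j (k-2) with h | h
    · exact hvpre' j h
    · rw [List.take_of_length_le (by omega), hvsum]; omega
  -- the split point inside v
  obtain ⟨m, hm_def⟩ : ∃ m, m = Nat.findGreatest (fun j => (v.take j).sum = 0) (k-2) :=
    ⟨_, rfl⟩
  have hmspec : (v.take m).sum = 0 := by
    rw [hm_def]
    exact Nat.findGreatest_spec (P := fun j => (v.take j).sum = 0)
      (Nat.zero_le (k-2)) (by simp)
  have hmle : m ≤ k - 2 := by rw [hm_def]; exact Nat.findGreatest_le _
  have hmgr : ∀ j, m < j → j ≤ k - 2 → 1 ≤ (v.take j).sum := by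
    intro j h1 h2
    rw [hm_def] at h1
    have h3 := Nat.findGreatest_is_greatest (P := fun j => (v.take j).sum = 0) h1 h2
    have h4 := hvpre j
    omega
  have hmlt : m < k - 2 := by
    rcases Nat.eq_or_lt_of_le hmle with h | h
    · exfalso
      have h3 : v.take (k-2) = v := by rw [← hvlen]; exact List.take_length ..
      rw [h, h3, hvsum] at hmspec
      omega
    · exact h
  set A := v.take m with hA_def
  set B := v.drop (m+1) with hB_def
  have hvm : m < v.length := by omega
  have hAlen : A.length = m := by
    rw [hA_def, List.length_take]; omega
  have hBlen : B.length = v.length - (m+1) := by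
    rw [hB_def, List.length_drop]
  have hgm : v[m]'hvm = 1 := by
    have h := List.sum_take_succ v m hvm
    have h1 := hmgr (m+1) (by omega) (by omega)
    have hmem : v[m]'hvm ∈ v := List.getElem_mem hvm
    have hsubv : ∀ a, a ∈ v → a ∈ w := by
      intro a ha
      rw [hv] at ha
      exact List.mem_of_mem_drop (List.mem_of_mem_take ha)
    have hmemw : v[m]'hvm ∈ w := hsubv _ hmem
    rcases helem _ hmemw with h2 | h2
    · exact h2
    · exfalso; rw [h2] at h; rw [hmspec] at h; omega
  have hvsplit : v = A ++ (1:ℤ) :: B := by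
    conv_lhs => rw [← List.take_append_drop m v]
    congr 1
    rw [List.drop_eq_getElem_cons hvm, hgm]
  -- Dyck property of A
  have hAdyck : IsDyck2Path A := by
    refine ⟨?_, ?_, hmspec⟩
    · intro a ha
      refine helem a ?_
      rw [hA_def, hv] at ha
      exact List.mem_of_mem_drop (List.mem_of_mem_take (List.mem_of_mem_take ha))
    · intro j
      rcases le_or_gt j m with h | h
      · rw [hA_def, List.take_take, min_eq_left h]
        exact hvpre j
      · rw [List.take_of_length_le (by omega)]
        exact le_of_eq hmspec.symm
  -- Dyck property of B
  have hSB : ∀ j, (v.take (m+1+j)).sum = 1 + (B.take j).sum := by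
    intro j
    conv_lhs => rw [hvsplit]
    rw [sum_take_append, sum_take_all (by omega), hmspec, sum_take_cons,
      if_neg (by omega : ¬m + 1 + j - A.length = 0)]
    have hidx : m + 1 + j - A.length - 1 = j := by omega
    rw [hidx]
    ring
  have hBsum : B.sum = 0 := by
    have h1 := hSB (v.length - (m+1))
    have h2 : m + 1 + (v.length - (m+1)) = v.length := by omega
    rw [h2, List.take_length .., List.take_of_length_le (le_of_eq hBlen), hvsum] at h1
    omega
  have hBdyck : IsDyck2Path B := by
    refine ⟨?_, ?_, hBsum⟩
    · intro a ha
      refine helem a ?_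
      rw [hB_def, hv] at ha
      exact List.mem_of_mem_drop (List.mem_of_mem_take (List.mem_of_mem_drop ha))
    · intro j
      rcases le_or_gt j (v.length - (m+1)) with h | h
      · have h1 := hSB j
        have h2 := hmgr (m+1+j) (by omega) (by omega)
        omega
      · rw [List.take_of_length_le (by omega), hBsum]
  -- Dyck property of C
  have hCsum : C.sum = 0 := by
    rw [hwsplit] at hsum
    simp only [List.sum_cons, List.sum_append, hvsum] at hsum
    omega
  have hSC : ∀ j, (w.take (k+j)).sum = (C.take j).sum := by
    intro j
    conv_lhs => rw [hwsplit]
    rw [sum_take_cons, if_neg (by omega : ¬k + j = 0), sum_take_append,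
      sum_take_all (by omega : v.length ≤ k + j - 1), hvsum, sum_take_cons,
      if_neg (by omega : ¬k + j - 1 - v.length = 0)]
    have hidx : k + j - 1 - v.length - 1 = j := by omega
    rw [hidx]
    ring
  have hCdyck : IsDyck2Path C := by
    refine ⟨?_, ?_, hCsum⟩
    · intro a ha
      refine helem a ?_
      rw [hC_def] at ha
      exact List.mem_of_mem_drop ha
    · intro j
      have h1 := hSC j
      have h2 := hpre (k+j)
      omega
  refine ⟨A, B, C, hAdyck, hBdyck, hCdyck, ?_⟩
  rw [hwsplit, hvsplit]
  simp [List.cons_append, List.append_assoc]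

/-! ### the bijection -/

open Classical in
noncomputable def fAux : ℕ → List ℤ → Finset (ℕ × ℕ)
  | 0, _ => ∅
  | g+1, w =>
    if h : ∃ p : List ℤ × List ℤ × List ℤ,
        (IsDyck2Path p.1 ∧ IsDyck2Path p.2.1 ∧ IsDyck2Path p.2.2) ∧
        w = ((1:ℤ)::p.1) ++ ((1:ℤ)::p.2.1) ++ ((-2:ℤ)::p.2.2) then
      unionT (h.choose.1.length / 3) (h.choose.2.1.length / 3)
        (fAux g h.choose.1) (fAux g h.choose.2.1) (fAux g h.choose.2.2)
    else ∅

noncomputable def fMap (w : List ℤ) : Finset (ℕ × ℕ) := fAux w.length w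

lemma fAux_nil (g : ℕ) : fAux g [] = ∅ := by
  cases g with
  | zero => rfl
  | succ g =>
    rw [fAux]
    rw [dif_neg]
    rintro ⟨p, _, heq⟩
    simp at heq

lemma fMap_nil : fMap [] = ∅ := rfl

lemma fAux_stable : ∀ N w g g', w.length ≤ N → w.length ≤ g → w.length ≤ g' →
    fAux g w = fAux g' w := by
  intro N
  induction N with
  | zero =>
    intro w g g' hN _ _
    have : w = [] := List.length_eq_zero_iff.mp (by omega)
    subst this
    rw [fAux_nil, fAux_nil]
  | succ N IH =>
    intro w g g' hN hg hg'
    by_cases hw : w = []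
    · subst hw; rw [fAux_nil, fAux_nil]
    · have hwpos : 0 < w.length := List.length_pos_iff.mpr hw
      cases g with
      | zero => omega
      | succ g0 =>
        cases g' with
        | zero => omega
        | succ g0' =>
          by_cases hd : ∃ p : List ℤ × List ℤ × List ℤ,
              (IsDyck2Path p.1 ∧ IsDyck2Path p.2.1 ∧ IsDyck2Path p.2.2) ∧
              w = ((1:ℤ)::p.1) ++ ((1:ℤ)::p.2.1) ++ ((-2:ℤ)::p.2.2)
          · rw [fAux, fAux, dif_pos hd, dif_pos hd]
            have hspec := hd.choose_spec
            have hlen : w.length = hd.choose.1.length + hd.choose.2.1.length +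
                hd.choose.2.2.length + 3 := by
              have := congrArg List.length hspec.2
              simp only [List.length_append, List.length_cons] at this
              omega
            rw [IH hd.choose.1 g0 g0' (by omega) (by omega) (by omega),
              IH hd.choose.2.1 g0 g0' (by omega) (by omega) (by omega),
              IH hd.choose.2.2 g0 g0' (by omega) (by omega) (by omega)]
          · rw [fAux, fAux, dif_neg hd, dif_neg hd]

lemma fMap_cons {A B C : List ℤ} (hA : IsDyck2Path A) (hB : IsDyck2Path B)
    (hC : IsDyck2Path C) :
    fMap (((1:ℤ)::A) ++ ((1:ℤ)::B) ++ ((-2:ℤ)::C)) =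
      unionT (A.length / 3) (B.length / 3) (fMap A) (fMap B) (fMap C) := by
  set w := ((1:ℤ)::A) ++ ((1:ℤ)::B) ++ ((-2:ℤ)::C) with hw
  have hlen : w.length = A.length + B.length + C.length + 3 := by
    rw [hw]
    simp only [List.length_append, List.length_cons]
    omega
  have hd : ∃ p : List ℤ × List ℤ × List ℤ,
      (IsDyck2Path p.1 ∧ IsDyck2Path p.2.1 ∧ IsDyck2Path p.2.2) ∧
      w = ((1:ℤ)::p.1) ++ ((1:ℤ)::p.2.1) ++ ((-2:ℤ)::p.2.2) :=
    ⟨(A, B, C), ⟨hA, hB, hC⟩, rfl⟩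
  have hspec := hd.choose_spec
  obtain ⟨hABC, hueq⟩ := dyck_decomp_unique hspec.1.1 hspec.1.2.1 hspec.1.2.2 hA hB hC
    (by rw [← hspec.2, hw])
  have hkey : fAux (A.length + B.length + C.length + 2 + 1) w =
      unionT (hd.choose.1.length / 3) (hd.choose.2.1.length / 3)
        (fAux (A.length + B.length + C.length + 2) hd.choose.1)
        (fAux (A.length + B.length + C.length + 2) hd.choose.2.1)
        (fAux (A.length + B.length + C.length + 2) hd.choose.2.2) := by
    rw [fAux, dif_pos hd]
  have hlen1 : hd.choose.1.length = A.length := by rw [hABC]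
  have hlen2 : hd.choose.2.1.length = B.length := by rw [hueq.1]
  have hlen3 : hd.choose.2.2.length = C.length := by rw [hueq.2]
  rw [fMap, hlen]
  have : A.length + B.length + C.length + 3 = A.length + B.length + C.length + 2 + 1 := by
    omega
  rw [this, hkey, hABC, hueq.1, hueq.2]
  rw [fAux_stable A.length A _ A.length (le_refl _) (by omega) (le_refl _),
    fAux_stable B.length B _ B.length (le_refl _) (by omega) (le_refl _),
    fAux_stable C.length C _ C.length (le_refl _) (by omega) (le_refl _)]
  rfl

lemma dyck_nil : IsDyck2Path ([] : List ℤ) := ⟨by simp, by simp, rfl⟩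

lemma isNCST_empty : IsNCST 0 (∅ : Finset (ℕ × ℕ)) := by
  refine ⟨Finset.card_empty, by simp, by simp, ?_⟩
  intro x hx
  have : x = 0 := by omega
  subst this
  exact NCConn.refl

lemma fMap_NCST : ∀ n w, w.length = n → IsDyck2Path w → IsNCST (n / 3) (fMap w) := by
  intro n
  induction n using Nat.strong_induction_on with
  | _ n IH =>
    intro w hlen hw
    by_cases hne : w = []
    · subst hne
      simp only [List.length_nil] at hlen
      subst hlen
      rw [fMap_nil]
      exact isNCST_empty
    · obtain ⟨A, B, C, hA, hB, hC, rfl⟩ := dyck_decomp_exists hw hne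
      have hlen' : A.length + B.length + C.length + 3 = n := by
        rw [← hlen]
        simp only [List.length_append, List.length_cons]
        omega
      have hdA := dyck_length_div hA
      have hdB := dyck_length_div hB
      have hdC := dyck_length_div hC
      rw [fMap_cons hA hB hC]
      have h1 := IH A.length (by omega) A rfl hA
      have h2 := IH B.length (by omega) B rfl hB
      have h3 := IH C.length (by omega) C rfl hC
      have := unionT_NCST h1 h2 h3
      have harith : A.length / 3 + 1 + B.length / 3 + C.length / 3 = n / 3 := by omega
      rwa [harith] at this

lemma fMap_inj : ∀ n w w', IsDyck2Path w → IsDyck2Path w' → w.length = n →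
    w'.length = n → fMap w = fMap w' → w = w' := by
  intro n
  induction n using Nat.strong_induction_on with
  | _ n IH =>
    intro w w' hw hw' hlen hlen' heq
    by_cases hne : w = []
    · subst hne
      simp only [List.length_nil] at hlen
      have : w'.length = 0 := by omega
      exact (List.length_eq_zero_iff.mp this).symm
    · have hne' : w' ≠ [] := by
        intro hcon
        subst hcon
        simp only [List.length_nil] at hlen'
        apply hne
        exact List.length_eq_zero_iff.mp (by omega)
      obtain ⟨A, B, C, hA, hB, hC, rfl⟩ := dyck_decomp_exists hw hne
      obtain ⟨A', B', C', hA', hB', hC', rfl⟩ := dyck_decomp_exists hw' hne'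
      rw [fMap_cons hA hB hC, fMap_cons hA' hB' hC'] at heq
      have h1 := fMap_NCST A.length A rfl hA
      have h2 := fMap_NCST B.length B rfl hB
      have h3 := fMap_NCST C.length C rfl hC
      have h1' := fMap_NCST A'.length A' rfl hA'
      have h2' := fMap_NCST B'.length B' rfl hB'
      have h3' := fMap_NCST C'.length C' rfl hC'
      obtain ⟨ea, eb, ec, eE1, eE2, eE3⟩ := unionT_inj h1 h2 h3 h1' h2' h3' heq
      have hdA := dyck_length_div hA
      have hdB := dyck_length_div hB
      have hdC := dyck_length_div hC
      have hdA' := dyck_length_div hA'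
      have hdB' := dyck_length_div hB'
      have hdC' := dyck_length_div hC'
      have hlenw : A.length + B.length + C.length + 3 = n := by
        rw [← hlen]; simp only [List.length_append, List.length_cons]; omega
      have hAA : A = A' := IH A.length (by omega) A A' hA hA' rfl (by omega) eE1
      have hBB : B = B' := IH B.length (by omega) B B' hB hB' rfl (by omega) eE2
      have hCC : C = C' := IH C.length (by omega) C C' hC hC' rfl (by omega) eE3
      rw [hAA, hBB, hCC]

lemma fMap_surj : ∀ n E, IsNCST n E → ∃ w, IsDyck2Path w ∧ w.length = 3 * n ∧ fMap w = E := by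
  intro n
  induction n using Nat.strong_induction_on with
  | _ n IH =>
    intro E hE
    cases n with
    | zero =>
      have : E = ∅ := Finset.card_eq_zero.mp hE.1
      subst this
      exact ⟨[], dyck_nil, by simp, fMap_nil⟩
    | succ n =>
      obtain ⟨a, b, c, E₁, E₂, E₃, h₁, h₂, h₃, hsum, hEeq⟩ := NCST_decomp hE
      obtain ⟨A, hA, hAlen, hAmap⟩ := IH a (by omega) E₁ h₁
      obtain ⟨B, hB, hBlen, hBmap⟩ := IH b (by omega) E₂ h₂
      obtain ⟨C, hC, hClen, hCmap⟩ := IH c (by omega) E₃ h₃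
      refine ⟨((1:ℤ)::A) ++ ((1:ℤ)::B) ++ ((-2:ℤ)::C), dyck_compose hA hB hC, ?_, ?_⟩
      · simp only [List.length_append, List.length_cons]
        omega
      · rw [fMap_cons hA hB hC, hAmap, hBmap, hCmap]
        have ha : A.length / 3 = a := by omega
        have hb : B.length / 3 = b := by omega
        rw [ha, hb, ← hEeq]


/-- There is a bijection between 2-Dyck paths of length `3n` and non-crossing
spanning trees on `{0,…,n}`, mapping the empty path to the empty tree and the
path `↗A↗B↘C` to the tree with canonical decomposition `(T_A, T_B, T_C)`:
the images of `A`, `B`, `C` placed on `[0,a]`, `[a+1, a+1+b]`, `[a+1+b, n]`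
together with the pivot edge `(0, a+1+b)`. -/
theorem dyck2_ncst_bijection :
    ∃ f : List ℤ → Finset (ℕ × ℕ),
      (∀ n, Set.BijOn f {w : List ℤ | IsDyck2Path w ∧ w.length = 3 * n}
        {E : Finset (ℕ × ℕ) | IsNCST n E}) ∧
      f [] = ∅ ∧
      (∀ A B C : List ℤ, IsDyck2Path A → IsDyck2Path B → IsDyck2Path C →
        ∀ a b : ℕ, A.length = 3 * a → B.length = 3 * b →
          f (((1 : ℤ) :: A) ++ ((1 : ℤ) :: B) ++ ((-2 : ℤ) :: C)) =
            f A ∪ shiftE (f B) (a + 1) ∪ shiftE (f C) (a + 1 + b) ∪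
              {(0, a + 1 + b)}) := by
  refine ⟨fMap, ?_, fMap_nil, ?_⟩
  · intro n
    refine ⟨?_, ?_, ?_⟩
    · rintro w ⟨hw, hwlen⟩
      have := fMap_NCST (3 * n) w hwlen hw
      have h3 : 3 * n / 3 = n := by omega
      rw [h3] at this
      exact this
    · rintro w ⟨hw, hwlen⟩ w' ⟨hw', hwlen'⟩ heq
      exact fMap_inj (3 * n) w w' hw hw' hwlen hwlen' heq
    · rintro E hE
      obtain ⟨w, hw, hwlen, hwmap⟩ := fMap_surj n E hE
      exact ⟨w, ⟨hw, hwlen⟩, hwmap⟩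
  · intro A B C hA hB hC a b ha hb
    rw [fMap_cons hA hB hC]
    have ha' : A.length / 3 = a := by omega
    have hb' : B.length / 3 = b := by omega
    rw [ha', hb']
    rfl
end

section
/- In a non-crossing spanning tree on {0,…,n}, every edge (c,d) that has some edge strictly 'above' it has a unique overarching edge: there is a unique edge (a,b) with a ≤ c < d ≤ b, (a,b) ≠ (c,d), such that no other edge (a',b') satisfies a ≤ a' ≤ c < d ≤ b' ≤ b with (a',b') ∉ {(a,b),(c,d)}. -/
/-- In a non-crossing spanning tree on `{0,…,n}`, every edge `(c,d)` that has
some edge strictly above it has a unique overarching edge: a unique edge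
`(a,b) ≠ (c,d)` with `a ≤ c < d ≤ b` such that no edge `(a',b')` distinct from
both satisfies `a ≤ a' ≤ c < d ≤ b' ≤ b`. -/
theorem ncst_unique_overarching (n : ℕ) (E : Finset (ℕ × ℕ)) (hE : IsNCST n E)
    (c d : ℕ) (hcd : (c, d) ∈ E)
    (habove : ∃ ab ∈ E, ab ≠ (c, d) ∧ ab.1 ≤ c ∧ d ≤ ab.2) :
    ∃! ab : ℕ × ℕ,
      ab ∈ E ∧ ab ≠ (c, d) ∧ ab.1 ≤ c ∧ d ≤ ab.2 ∧
      ∀ a'b' ∈ E, a'b' ≠ ab → a'b' ≠ (c, d) →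
        ¬ (ab.1 ≤ a'b'.1 ∧ a'b'.1 ≤ c ∧ d ≤ a'b'.2 ∧ a'b'.2 ≤ ab.2) := by
  obtain ⟨_, hlt, hcross, _⟩ := hE
  have hcd_lt : c < d := (hlt _ hcd).1
  -- nesting lemma
  have nest : ∀ e ∈ E, ∀ f ∈ E, e.1 ≤ c → d ≤ e.2 → f.1 ≤ c → d ≤ f.2 →
      (e.1 ≤ f.1 ∧ f.2 ≤ e.2) ∨ (f.1 ≤ e.1 ∧ e.2 ≤ f.2) := by
    intro e he f hf he1 he2 hf1 hf2
    rcases lt_trichotomy e.1 f.1 with h | h | h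
    · left
      refine ⟨le_of_lt h, ?_⟩
      by_contra hc
      push_neg at hc
      exact hcross e.1 e.2 f.1 f.2 (by simpa using he) (by simpa using hf) h
        (lt_of_le_of_lt hf1 (lt_of_lt_of_le hcd_lt he2)) hc
    · rcases le_total f.2 e.2 with h2 | h2
      · exact Or.inl ⟨le_of_eq h, h2⟩
      · exact Or.inr ⟨le_of_eq h.symm, h2⟩
    · right
      refine ⟨le_of_lt h, ?_⟩
      by_contra hc
      push_neg at hc
      exact hcross f.1 f.2 e.1 e.2 (by simpa using hf) (by simpa using he) h
        (lt_of_le_of_lt he1 (lt_of_lt_of_le hcd_lt hf2)) hc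
  -- the set of edges above (c,d)
  set S : Finset (ℕ × ℕ) := E.filter (fun e => e ≠ (c, d) ∧ e.1 ≤ c ∧ d ≤ e.2) with hS
  have hSne : S.Nonempty := by
    obtain ⟨ab, hab, h1, h2, h3⟩ := habove
    exact ⟨ab, by simp [hS, hab, h1, h2, h3]⟩
  obtain ⟨m, hmS, hmin⟩ := S.exists_min_image (fun e => e.2 - e.1) hSne
  simp only [hS, Finset.mem_filter] at hmS
  obtain ⟨hmE, hmne, hm1, hm2⟩ := hmS
  refine ⟨m, ⟨hmE, hmne, hm1, hm2, ?_⟩, ?_⟩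
  · intro e he hem hecd ⟨h1, h2, h3, h4⟩
    have heS : e ∈ S := by simp [hS, he, hecd, h2, h3]
    have := hmin e heS
    have he12 : e.1 < e.2 := (hlt _ he).1
    have hm12 : m.1 < m.2 := (hlt _ hmE).1
    apply hem
    have : e.1 = m.1 ∧ e.2 = m.2 := by omega
    exact Prod.ext this.1 this.2
  · intro y ⟨hyE, hyne, hy1, hy2, hyprop⟩
    by_contra hym
    rcases nest y hyE m hmE hy1 hy2 hm1 hm2 with ⟨h1, h2⟩ | ⟨h1, h2⟩
    · exact hyprop m hmE (Ne.symm hym) hmne ⟨h1, hm1, hm2, h2⟩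
    · have hmprop : ∀ a'b' ∈ E, a'b' ≠ m → a'b' ≠ (c, d) →
          ¬ (m.1 ≤ a'b'.1 ∧ a'b'.1 ≤ c ∧ d ≤ a'b'.2 ∧ a'b'.2 ≤ m.2) := by
        intro e he hem hecd ⟨ha, hb, hc2, hd2⟩
        have heS : e ∈ S := by simp [hS, he, hecd, hb, hc2]
        have := hmin e heS
        have he12 : e.1 < e.2 := (hlt _ he).1
        have hm12 : m.1 < m.2 := (hlt _ hmE).1
        apply hem
        have : e.1 = m.1 ∧ e.2 = m.2 := by omega
        exact Prod.ext this.1 this.2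
      exact hmprop y hyE hym hyne ⟨h1, hy1, hy2, h2⟩
end

section
/- For a reversible Markov chain P on a finite state space Ω with stationary distribution π, given a family of paths Γ = {Γ_{xy}} using transitions of P to connect every pair of states, the Dirichlet forms satisfy E_{P̃}(f,f) ≤ B · E_P(f,f) for every function f : Ω → ℝ, where B is the congestion ratio B = max over transitions (x',y') with P(x',y') > 0 of (1/(π(x')P(x',y'))) · ∑_{(x,y) : Γ_{xy} ∋ (x',y')} π̃(x)P̃(x,y)|Γ_{xy}|, and P̃ is another reversible chain on Ω with stationary distribution π̃. -/
/-!
Route the transition `(x, y)` of `P̃` along `Γ x y`. The congestion `B` counts an edge once per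
path, however often the path runs through it, so first erase the loops of `Γ x y`: this leaves a
simple path from `x` to `y` that is no longer and uses only edges of `Γ x y`, and Cauchy–Schwarz
along it gives `(f x - f y)² ≤ |Γ x y| · ∑_{e ∈ Γ x y} (f e₁ - f e₂)²` with each edge counted once.
Weighting by `π̃ x P̃ x y` and exchanging the sums, the coefficient of `(f e₁ - f e₂)²` is the
congestion of `e`, at most `B π e₁ P e₁ e₂`; edges with `P e₁ e₂ = 0` lie on no path.
-/

open scoped Classical

namespace List

variable {α : Type*}

def steps (w : List α) : List (α × α) := w.zip w.tail

@[simp] theorem steps_singleton (a : α) : [a].steps = [] := rfl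

@[simp] theorem steps_cons_cons (a b : α) (t : List α) :
    (a :: b :: t).steps = (a, b) :: (b :: t).steps := rfl

theorem mem_steps_iff_getElem? {w : List α} {x y : α} :
    (x, y) ∈ w.steps ↔ ∃ i, w[i]? = some x ∧ w[i + 1]? = some y := by
  simp only [steps, mem_iff_getElem?, getElem?_zip_eq_some, getElem?_tail]

theorem length_steps (w : List α) : w.steps.length = w.length - 1 := by
  simp [steps]

theorem steps_subset_steps_cons (a : α) : ∀ w : List α, w.steps ⊆ (a :: w).steps
  | [] => nil_subset _
  | _ :: _ => subset_cons_of_subset _ (Subset.refl _)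

theorem IsSuffix.steps_subset {w₁ w₂ : List α} (h : w₁ <:+ w₂) : w₁.steps ⊆ w₂.steps := by
  obtain ⟨l, rfl⟩ := h
  induction l with
  | nil => exact Subset.refl _
  | cons a l ih => exact Subset.trans ih (steps_subset_steps_cons a _)

theorem Nodup.steps : ∀ {w : List α}, w.Nodup → w.steps.Nodup
  | [], _ | [_], _ => nodup_nil
  | a :: b :: t, h => by
    rw [steps_cons_cons]
    exact nodup_cons.2 ⟨fun hab => (nodup_cons.1 h).1 (of_mem_zip hab).1, h.of_cons.steps⟩

theorem rel_of_mem_steps {R : α → α → Prop} {w : List α} {d : α}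
    (h : ∀ i, i + 1 < w.length → R (w.getD i d) (w.getD (i + 1) d)) {x y : α}
    (hxy : (x, y) ∈ w.steps) : R x y := by
  obtain ⟨i, hx, hy⟩ := mem_steps_iff_getElem?.1 hxy
  obtain ⟨hi, rfl⟩ := getElem?_eq_some_iff.1 hx
  obtain ⟨hi', rfl⟩ := getElem?_eq_some_iff.1 hy
  simpa [getD_eq_getElem, hi, hi'] using h i hi'

theorem sum_map_sub_steps {G : Type*} [AddCommGroup G] (f : α → G) :
    ∀ {w : List α} {a b : α}, w.head? = some a → w.getLast? = some b →
      (w.steps.map fun e => f e.1 - f e.2).sum = f a - f b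
  | [c], a, b, ha, hb => by simp_all
  | c :: d :: t, a, b, ha, hb => by
    obtain rfl : c = a := by simpa using ha
    rw [steps_cons_cons, map_cons, sum_cons,
      sum_map_sub_steps f (w := d :: t) rfl (by simpa [getLast?_cons] using hb)]
    abel

theorem exists_nodup_sublist_steps_subset : ∀ w : List α, ∃ w' : List α, w' <+ w ∧ w'.Nodup ∧
    w'.head? = w.head? ∧ w'.getLast? = w.getLast? ∧ w'.steps ⊆ w.steps
  | [] => ⟨[], Sublist.slnil, nodup_nil, rfl, rfl, Subset.refl _⟩
  | a :: t => by
    by_cases ha : a ∈ t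
    · obtain ⟨l₁, l₂, ht⟩ := append_of_mem ha
      have hsuf : a :: l₂ <:+ a :: t := ⟨a :: l₁, by rw [ht]; rfl⟩
      obtain ⟨w', hsub, hnd, hhead, hlast, hsteps⟩ := exists_nodup_sublist_steps_subset (a :: l₂)
      refine ⟨w', hsub.trans hsuf.sublist, hnd, hhead, ?_, Subset.trans hsteps hsuf.steps_subset⟩
      simp [hlast, ht, getLast?_cons, getLast?_append]
    · obtain ⟨t', hsub, hnd, hhead, hlast, hsteps⟩ := exists_nodup_sublist_steps_subset t
      refine ⟨a :: t', hsub.cons_cons a, nodup_cons.2 ⟨fun h => ha (hsub.subset h), hnd⟩, rfl,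
        by simp [getLast?_cons, hlast], ?_⟩
      cases t' with
      | nil => simp
      | cons b t'' =>
        obtain ⟨u, rfl⟩ : ∃ u, t = b :: u := by
          cases t with
          | nil => simp at hhead
          | cons c u => exact ⟨u, by simp_all⟩
        rw [steps_cons_cons, steps_cons_cons]
        exact cons_subset_cons _ hsteps
termination_by w => w.length

theorem sq_sub_le_length_mul_sum_steps [DecidableEq α] (f : α → ℝ) {w : List α} {a b : α}
    (ha : w.head? = some a) (hb : w.getLast? = some b) :
    (f a - f b) ^ 2 ≤ ((w.length - 1 : ℕ) : ℝ) * ∑ e ∈ w.steps.toFinset, (f e.1 - f e.2) ^ 2 := by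
  obtain ⟨w', hsub, hnd, hhead, hlast, hsteps⟩ := exists_nodup_sublist_steps_subset w
  have hcard : w'.steps.toFinset.card ≤ w.length - 1 := by
    rw [toFinset_card_of_nodup hnd.steps, length_steps]
    exact Nat.sub_le_sub_right hsub.length_le 1
  calc (f a - f b) ^ 2 = (∑ e ∈ w'.steps.toFinset, (f e.1 - f e.2)) ^ 2 := by
        rw [sum_toFinset _ hnd.steps, sum_map_sub_steps f (hhead.trans ha) (hlast.trans hb)]
    _ ≤ w'.steps.toFinset.card * ∑ e ∈ w'.steps.toFinset, (f e.1 - f e.2) ^ 2 :=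
        sq_sum_le_card_mul_sum_sq
    _ ≤ ((w.length - 1 : ℕ) : ℝ) * ∑ e ∈ w.steps.toFinset, (f e.1 - f e.2) ^ 2 := by
        gcongr ?_ * ?_
        · exact_mod_cast hcard
        · exact Finset.sum_le_sum_of_subset_of_nonneg
            (fun _ he => mem_toFinset.2 (hsteps (mem_toFinset.1 he))) fun _ _ _ => sq_nonneg _

end List

theorem path_comparison_general
    {Ω : Type*} [Fintype Ω]
    (π πt : Ω → ℝ) (P Pt : Ω → Ω → ℝ)
    (hπt : ∀ x, 0 ≤ πt x)
    (hP : ∀ x y, 0 ≤ P x y)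
    (hPt : ∀ x y, 0 ≤ Pt x y)
    (Γ : Ω → Ω → List Ω)
    (hΓhead : ∀ x y, (Γ x y).head? = some x)
    (hΓlast : ∀ x y, (Γ x y).getLast? = some y)
    (hΓstep : ∀ x y i, i + 1 < (Γ x y).length →
      0 < P ((Γ x y).getD i x) ((Γ x y).getD (i + 1) x))
    (B : ℝ)
    (hB : ∀ x' y', 0 < P x' y' →
      (∑ p : Ω × Ω,
        if ∃ i : ℕ, (Γ p.1 p.2)[i]? = some x' ∧ (Γ p.1 p.2)[i + 1]? = some y'
        then πt p.1 * Pt p.1 p.2 * (((Γ p.1 p.2).length - 1 : ℕ) : ℝ)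
        else 0) ≤ B * (π x' * P x' y'))
    (f : Ω → ℝ) :
    (1 / 2) * ∑ x, ∑ y, (f x - f y) ^ 2 * (πt x * Pt x y) ≤
      B * ((1 / 2) * ∑ x, ∑ y, (f x - f y) ^ 2 * (π x * P x y)) := by
  set S : Ω × Ω → Finset (Ω × Ω) := fun q => (Γ q.1 q.2).steps.toFinset
  set W : Ω × Ω → ℝ := fun q => πt q.1 * Pt q.1 q.2 * (((Γ q.1 q.2).length - 1 : ℕ) : ℝ)
  have route (q : Ω × Ω) : (f q.1 - f q.2) ^ 2 * (πt q.1 * Pt q.1 q.2) ≤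
      ∑ e ∈ S q, W q * (f e.1 - f e.2) ^ 2 := by
    calc (f q.1 - f q.2) ^ 2 * (πt q.1 * Pt q.1 q.2)
        ≤ ((((Γ q.1 q.2).length - 1 : ℕ) : ℝ) * ∑ e ∈ S q, (f e.1 - f e.2) ^ 2) *
            (πt q.1 * Pt q.1 q.2) :=
          mul_le_mul_of_nonneg_right
            (List.sq_sub_le_length_mul_sum_steps f (hΓhead q.1 q.2) (hΓlast q.1 q.2))
            (mul_nonneg (hπt q.1) (hPt q.1 q.2))
      _ = ∑ e ∈ S q, W q * (f e.1 - f e.2) ^ 2 := by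
          rw [← Finset.mul_sum]; ring
  have congestion (e : Ω × Ω) : ∑ q with e ∈ S q, W q ≤ B * (π e.1 * P e.1 e.2) := by
    obtain ⟨x, y⟩ := e
    rcases (hP x y).lt_or_eq with hpos | hzero
    · simpa [S, W, Finset.sum_filter, List.mem_steps_iff_getElem?] using hB x y hpos
    · have hoff (q : Ω × Ω) : (x, y) ∉ S q := fun h =>
        (List.rel_of_mem_steps (R := fun a b => 0 < P a b) (hΓstep q.1 q.2)
          (List.mem_toFinset.1 h)).ne hzero
      simp [hoff, ← hzero]
  calc (1 / 2) * ∑ x, ∑ y, (f x - f y) ^ 2 * (πt x * Pt x y)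
      = (1 / 2) * ∑ q : Ω × Ω, (f q.1 - f q.2) ^ 2 * (πt q.1 * Pt q.1 q.2) := by
        rw [Fintype.sum_prod_type]
    _ ≤ (1 / 2) * ∑ q : Ω × Ω, ∑ e ∈ S q, W q * (f e.1 - f e.2) ^ 2 := by
        gcongr with q; exact route q
    _ = (1 / 2) * ∑ e : Ω × Ω, (∑ q with e ∈ S q, W q) * (f e.1 - f e.2) ^ 2 := by
        rw [Finset.sum_comm' (t' := Finset.univ) (s' := fun e => {q | e ∈ S q}) (by simp)]
        simp only [Finset.sum_mul]
    _ ≤ (1 / 2) * ∑ e : Ω × Ω, B * (π e.1 * P e.1 e.2) * (f e.1 - f e.2) ^ 2 := by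
        gcongr with e; exact congestion e
    _ = B * ((1 / 2) * ∑ x, ∑ y, (f x - f y) ^ 2 * (π x * P x y)) := by
        simp only [Fintype.sum_prod_type, Finset.mul_sum]
        exact Finset.sum_congr rfl fun x _ => Finset.sum_congr rfl fun y _ => by ring

/-- The Diaconis–Saloff-Coste path comparison theorem: if every transition of
the reversible chain `P̃` is routed along paths using transitions of the
reversible chain `P`, and `B` bounds the congestion ratio, then the Dirichlet
forms satisfy `E_{P̃}(f,f) ≤ B · E_P(f,f)` for every `f : Ω → ℝ`. -/
theorem path_comparison
    {Ω : Type*} [Fintype Ω] [Nonempty Ω]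
    (π πt : Ω → ℝ) (P Pt : Ω → Ω → ℝ)
    (hπ : ∀ x, 0 ≤ π x) (hπsum : ∑ x, π x = 1)
    (hπt : ∀ x, 0 ≤ πt x) (hπtsum : ∑ x, πt x = 1)
    (hP : ∀ x y, 0 ≤ P x y) (hProw : ∀ x, ∑ y, P x y = 1)
    (hPt : ∀ x y, 0 ≤ Pt x y) (hPtrow : ∀ x, ∑ y, Pt x y = 1)
    (hrev : ∀ x y, π x * P x y = π y * P y x)
    (hrevt : ∀ x y, πt x * Pt x y = πt y * Pt y x)
    (Γ : Ω → Ω → List Ω)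
    (hΓhead : ∀ x y, (Γ x y).head? = some x)
    (hΓlast : ∀ x y, (Γ x y).getLast? = some y)
    (hΓstep : ∀ x y i, i + 1 < (Γ x y).length →
      0 < P ((Γ x y).getD i x) ((Γ x y).getD (i + 1) x))
    (B : ℝ)
    (hB : ∀ x' y', 0 < P x' y' →
      (∑ p : Ω × Ω,
        if ∃ i : ℕ, (Γ p.1 p.2)[i]? = some x' ∧ (Γ p.1 p.2)[i + 1]? = some y'
        then πt p.1 * Pt p.1 p.2 * (((Γ p.1 p.2).length - 1 : ℕ) : ℝ)
        else 0) ≤ B * (π x' * P x' y'))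
    (f : Ω → ℝ) :
    (1 / 2) * ∑ x, ∑ y, (f x - f y) ^ 2 * (πt x * Pt x y) ≤
      B * ((1 / 2) * ∑ x, ∑ y, (f x - f y) ^ 2 * (π x * P x y)) :=
  path_comparison_general π πt P Pt hπt hP hPt Γ hΓhead hΓlast hΓstep B hB f
end
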